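/- arXiv:1407.1116 — 3 statements merged into one kernel-verified Lean document; each statement's English description precedes it below -/
import Mathlib

section
/- There exist absolute constants c > 0, C and an integer n_0 such that for all n ≥ n_0 the following holds. Let d = (d_1,…,d_n) be a degree sequence of positive integers with m = (∑_v d_v)/2 an integer and max_v d_v ≤ √n / (log n)². Draw a graph from ECM(d) with MinBucket buckets formed, and for distinct vertices v, w, w′ let Z_{v,w,w′} be the event that the wedge {(v,w),(v,w′)} lies in v's bucket. If d_v < c·log n and min{d_w, d_{w′}} < d_v, then P[Z_{v,w,w′}] ≤ C·m^{−1/4}·d_v(d_v−1)·d_w·d_{w′}/m². -/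
open Finset

noncomputable section
attribute [local instance] Classical.propDecidable

/-- The perfect matchings of the stub set `Fin N`: fixed-point-free involutions. -/
def matchings (N : ℕ) : Finset (Equiv.Perm (Fin N)) :=
  Finset.univ.filter fun M => ∀ s, M (M s) = s ∧ M s ≠ s

/-- `φ` is a stub map for the degree sequence `d`: vertex `v` owns exactly `d v` stubs. -/
def IsStubMap {n N : ℕ} (d : Fin n → ℕ) (φ : Fin N → Fin n) : Prop :=
  ∀ v, (Finset.univ.filter fun s => φ s = v).card = d v

/-- Adjacency in the erased (simple) graph: distinct vertices joined by a matched stub pair. -/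
def ecmAdj {n N : ℕ} (φ : Fin N → Fin n) (M : Equiv.Perm (Fin N)) (u v : Fin n) : Prop :=
  u ≠ v ∧ ∃ s, φ s = u ∧ φ (M s) = v

/-- The degree `D_v` of vertex `v` in the erased graph. -/
def ecmDeg {n N : ℕ} (φ : Fin N → Fin n) (M : Equiv.Perm (Fin N)) (v : Fin n) : ℕ :=
  (Finset.univ.filter fun u => ecmAdj φ M u v).card

/-- The edge `(v,w)` is present and lies in `v`'s bucket:
`(D_v, v) ≤ (D_w, w)` lexicographically. -/
def inBucket {n N : ℕ} (φ : Fin N → Fin n) (M : Equiv.Perm (Fin N)) (v w : Fin n) : Prop :=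
  ecmAdj φ M v w ∧
    (ecmDeg φ M v < ecmDeg φ M w ∨ (ecmDeg φ M v = ecmDeg φ M w ∧ v ≤ w))

/-- Indicator `Y_{v,w}` that the edge `(v,w)` is present and in `v`'s bucket. -/
def ecmY {n N : ℕ} (φ : Fin N → Fin n) (M : Equiv.Perm (Fin N)) (v w : Fin n) : ℝ :=
  if inBucket φ M v w then 1 else 0

/-- `X_v`, the number of edges in `v`'s bucket. -/
def ecmX {n N : ℕ} (φ : Fin N → Fin n) (M : Equiv.Perm (Fin N)) (v : Fin n) : ℝ :=
  ∑ w, ecmY φ M v w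

/-- Expectation over the uniformly random perfect matching. -/
def ecmExp (N : ℕ) (g : Equiv.Perm (Fin N) → ℝ) : ℝ :=
  (∑ M ∈ matchings N, g M) / ((matchings N).card : ℝ)

/-- Probability of an event over the uniformly random perfect matching. -/
def ecmProb (N : ℕ) (A : Equiv.Perm (Fin N) → Prop) : ℝ :=
  (((matchings N).filter A).card : ℝ) / ((matchings N).card : ℝ)

lemma mem_matchings {N : ℕ} {M : Equiv.Perm (Fin N)} :
    M ∈ matchings N ↔ ∀ s, M (M s) = s ∧ M s ≠ s := by
  simp [matchings]

/-- points of a pair list -/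
def listPts {α : Type*} (L : List (α × α)) : List α := L.flatMap fun p => [p.1, p.2]

def matchCount (N : ℕ) (L : List (Fin N × Fin N)) : ℕ :=
  ((matchings N).filter (fun M => ∀ p ∈ L, M p.1 = p.2)).card

lemma listPts_append {α : Type*} (L L' : List (α × α)) :
    listPts (L ++ L') = listPts L ++ listPts L' := by
  simp [listPts]

lemma length_listPts {α : Type*} (L : List (α × α)) :
    (listPts L).length = 2 * L.length := by
  induction L with
  | nil => simp [listPts]
  | cons p L ih => simp [listPts] at ih ⊢; omega

lemma mem_listPts {α : Type*} {L : List (α × α)} {x : α} :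
    x ∈ listPts L ↔ ∃ p ∈ L, p.1 = x ∨ p.2 = x := by
  simp [listPts]
  constructor
  · rintro ⟨a, b, h, hx⟩; exact ⟨a, b, h, by tauto⟩
  · rintro ⟨a, b, h, hx⟩; exact ⟨a, b, h, by tauto⟩

lemma conj_mem_matchings {N : ℕ} {M : Equiv.Perm (Fin N)} (σ : Equiv.Perm (Fin N))
    (hσ : ∀ x, σ (σ x) = x) (hM : M ∈ matchings N) : σ * M * σ ∈ matchings N := by
  rw [mem_matchings] at hM ⊢
  intro s
  constructor
  · simp only [Equiv.Perm.mul_apply]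
    rw [hσ, (hM _).1, hσ]
  · simp only [Equiv.Perm.mul_apply]
    intro h
    have h2 : M (σ s) = σ s := by
      have := congrArg σ h
      rwa [hσ] at this
    exact (hM (σ s)).2 h2

set_option maxHeartbeats 1000000 in
lemma matchCount_concat_le {N : ℕ} (L : List (Fin N × Fin N)) (s t : Fin N)
    (hnd : (listPts (L ++ [(s, t)])).Nodup) :
    matchCount N (L ++ [(s, t)]) * (N - (2 * L.length + 1)) ≤ matchCount N L := by
  classical
  have hpts : listPts (L ++ [(s, t)]) = listPts L ++ [s, t] := by
    rw [listPts_append]; rfl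
  rw [hpts] at hnd
  rw [List.nodup_append] at hnd
  obtain ⟨hndL, hndst, hdisj⟩ := hnd
  have hsL : s ∉ listPts L := fun h => hdisj s h s (by simp) rfl
  have htL : t ∉ listPts L := fun h => hdisj t h t (by simp) rfl
  have hst : s ≠ t := by simpa using (List.nodup_cons.1 hndst).1
  set P : Finset (Fin N) := (listPts L).toFinset ∪ {s} with hP
  have hcardP : P.card = 2 * L.length + 1 := by
    rw [hP, Finset.card_union_of_disjoint (by simp [hsL]), List.toFinset_card_of_nodup hndL,
      length_listPts]
    simp
  set U : Finset (Fin N) := Finset.univ \ P with hU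
  have hcardU : U.card = N - (2 * L.length + 1) := by
    rw [hU, Finset.card_sdiff_of_subset (Finset.subset_univ _), hcardP, Finset.card_univ, Fintype.card_fin]
  set A : Fin N → Finset (Equiv.Perm (Fin N)) := fun u =>
    (matchings N).filter (fun M => (∀ p ∈ L, M p.1 = p.2) ∧ M s = u) with hA
  have hmemA : ∀ u M, M ∈ A u ↔ M ∈ matchings N ∧ (∀ p ∈ L, M p.1 = p.2) ∧ M s = u := by
    intro u M; rw [hA]; exact Finset.mem_filter
  have hconj : ∀ u ∈ U, (A u).card = (A t).card := by
    intro u hu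
    rw [hU, Finset.mem_sdiff] at hu
    have huP := hu.2
    have hus : u ≠ s := fun h => huP (by simp [hP, h])
    have huL : u ∉ listPts L := fun h => huP (by simp [hP, h])
    by_cases hut : u = t
    · rw [hut]
    · set σ := Equiv.swap t u with hσdef
      have hσinv : ∀ x, σ (σ x) = x := fun x => Equiv.swap_apply_self t u x
      have hσfix : ∀ x, x ≠ t → x ≠ u → σ x = x := fun x h1 h2 =>
        Equiv.swap_apply_of_ne_of_ne h1 h2
      have hfixL : ∀ p ∈ L, σ p.1 = p.1 ∧ σ p.2 = p.2 := by
        intro p hp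
        constructor
        · exact hσfix _ (fun h => htL (h ▸ mem_listPts.2 ⟨p, hp, Or.inl rfl⟩))
            (fun h => huL (h ▸ mem_listPts.2 ⟨p, hp, Or.inl rfl⟩))
        · exact hσfix _ (fun h => htL (h ▸ mem_listPts.2 ⟨p, hp, Or.inr rfl⟩))
            (fun h => huL (h ▸ mem_listPts.2 ⟨p, hp, Or.inr rfl⟩))
      have hσs : σ s = s := hσfix s hst (Ne.symm hus)
      have key : ∀ a b : Fin N, σ a = b → ∀ M, M ∈ A a → σ * M * σ ∈ A b := by
        intro a b hab M hM
        rw [hmemA] at hM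
        rw [hmemA]
        obtain ⟨hMm, hMl, hMs⟩ := hM
        refine ⟨conj_mem_matchings σ hσinv hMm, ?_, ?_⟩
        · intro p hp
          simp only [Equiv.Perm.mul_apply]
          rw [(hfixL p hp).1, hMl p hp, (hfixL p hp).2]
        · simp only [Equiv.Perm.mul_apply]
          rw [hσs, hMs, hab]
      have hσt : σ t = u := Equiv.swap_apply_left t u
      have hσu : σ u = t := Equiv.swap_apply_right t u
      refine Finset.card_bij' (fun M _ => σ * M * σ) (fun M _ => σ * M * σ)
        (fun M hM => key u t hσu M hM) (fun M hM => key t u hσt M hM) ?_ ?_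
      · intro M _
        ext x
        simp only [Equiv.Perm.mul_apply, hσinv]
      · intro M _
        ext x
        simp only [Equiv.Perm.mul_apply, hσinv]
  have hsub : U.biUnion A ⊆ (matchings N).filter (fun M => ∀ p ∈ L, M p.1 = p.2) := by
    intro M hM
    rw [Finset.mem_biUnion] at hM
    obtain ⟨u, _, hMu⟩ := hM
    rw [hmemA] at hMu
    simp only [Finset.mem_filter]
    exact ⟨hMu.1, hMu.2.1⟩
  have hcount : matchCount N (L ++ [(s, t)]) = (A t).card := by
    unfold matchCount
    congr 1
    apply Finset.filter_congr
    intro M _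
    simp only [List.forall_mem_append, List.mem_singleton, Prod.forall, List.forall_mem_singleton]
    constructor
    · rintro ⟨h1, h2⟩; exact ⟨h1, h2 s t rfl⟩
    · rintro ⟨h1, h2⟩
      refine ⟨h1, ?_⟩
      rintro a b h
      rw [Prod.mk.injEq] at h
      rw [h.1, h.2]; exact h2
  calc matchCount N (L ++ [(s, t)]) * (N - (2 * L.length + 1))
      = (A t).card * U.card := by rw [hcount, hcardU]
    _ = ∑ u ∈ U, (A t).card := by rw [Finset.sum_const, smul_eq_mul, mul_comm]
    _ = ∑ u ∈ U, (A u).card := Finset.sum_congr rfl (fun u hu => (hconj u hu).symm)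
    _ = (U.biUnion A).card := (Finset.card_biUnion (fun u hu u' hu' h => by
          simp only [Finset.disjoint_left]
          intro M hM hM'
          rw [hmemA] at hM hM'
          exact h (hM.2.2 ▸ hM'.2.2))).symm
    _ ≤ _ := Finset.card_le_card hsub

section part2
variable {N : ℕ}

lemma matchCount_mul_le (L : List (Fin N × Fin N)) (hnd : (listPts L).Nodup) :
    matchCount N L * (N - (2 * L.length - 1)) ^ L.length ≤ (matchings N).card := by
  induction L using List.reverseRecOn with
  | nil =>
    simp only [List.length_nil, pow_zero, mul_one]
    exact Finset.card_filter_le _ _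
  | append_singleton L p ih =>
    obtain ⟨s, t⟩ := p
    have hndL : (listPts L).Nodup := by
      rw [listPts_append] at hnd
      exact (List.nodup_append.1 hnd).1
    have hlen : (L ++ [(s, t)]).length = L.length + 1 := by simp
    have hstep := matchCount_concat_le L s t hnd
    have hfact : N - (2 * (L.length + 1) - 1) = N - (2 * L.length + 1) := by omega
    have hmono : N - (2 * (L.length + 1) - 1) ≤ N - (2 * L.length - 1) := by omega
    calc matchCount N (L ++ [(s, t)]) * (N - (2 * (L ++ [(s, t)]).length - 1)) ^ (L ++ [(s, t)]).length
        = (matchCount N (L ++ [(s, t)]) * (N - (2 * L.length + 1))) *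
            (N - (2 * (L.length + 1) - 1)) ^ L.length := by
          rw [hlen, pow_succ, hfact]; ring
      _ ≤ matchCount N L * (N - (2 * (L.length + 1) - 1)) ^ L.length :=
          Nat.mul_le_mul_right _ hstep
      _ ≤ matchCount N L * (N - (2 * L.length - 1)) ^ L.length :=
          Nat.mul_le_mul_left _ (Nat.pow_le_pow_left hmono _)
      _ ≤ (matchings N).card := ih hndL

lemma matchCount_mul_le' (L : List (Fin N × Fin N)) (hnd : (listPts L).Nodup)
    (hk : L.length ≤ 4) :
    matchCount N L * (N - 7) ^ L.length ≤ (matchings N).card := by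
  refine le_trans ?_ (matchCount_mul_le L hnd)
  exact Nat.mul_le_mul_left _ (Nat.pow_le_pow_left (by omega) _)

lemma matchings_card_pos {m : ℕ} (hm : 0 < m) : 0 < (matchings (2 * m)).card := by
  haveI : NeZero (2 * m) := ⟨by omega⟩
  set c : Fin (2 * m) := ⟨m, by omega⟩ with hc
  have hcc : c + c = 0 := by
    apply Fin.ext
    simp only [Fin.add_def, Fin.val_zero, hc]
    rw [show m + m = 2 * m by ring, Nat.mod_self]
  set M : Equiv.Perm (Fin (2 * m)) := Equiv.addRight c with hM
  have hMmem : M ∈ matchings (2 * m) := by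
    rw [mem_matchings]
    intro s
    constructor
    · show s + c + c = s
      rw [add_assoc, hcc, add_zero]
    · show s + c ≠ s
      intro h
      have h0 : c = 0 := by
        have := congrArg (· - s) h
        simpa [add_comm, add_sub_cancel_right] using this
      rw [Fin.ext_iff] at h0
      simp [hc] at h0
      omega
  exact Finset.card_pos.2 ⟨M, hMmem⟩

lemma ecmDeg_le {n : ℕ} (hN : 0 < N) (φ : Fin N → Fin n) (M : Equiv.Perm (Fin N)) (x : Fin n) :
    ecmDeg φ M x ≤ (Finset.univ.filter fun s => φ s = x).card := by
  classical
  unfold ecmDeg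
  set f : Fin n → Fin N := fun u =>
    if h : ∃ s, φ s = u ∧ φ (M s) = x then M h.choose else ⟨0, hN⟩ with hf
  apply Finset.card_le_card_of_injOn f
  · intro u hu
    rw [Finset.mem_coe, Finset.mem_filter] at hu
    obtain ⟨-, -, hex⟩ := hu
    rw [Finset.mem_coe, Finset.mem_filter]
    refine ⟨Finset.mem_univ _, ?_⟩
    rw [hf]
    simp only [dif_pos hex]
    exact hex.choose_spec.2
  · intro u hu u' hu' heq
    rw [Finset.coe_filter, Set.mem_setOf_eq] at hu hu'
    obtain ⟨-, -, hex⟩ := hu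
    obtain ⟨-, -, hex'⟩ := hu'
    rw [hf] at heq
    simp only [dif_pos hex, dif_pos hex'] at heq
    have := M.injective heq
    rw [← hex.choose_spec.1, ← hex'.choose_spec.1, this]

lemma ecmDeg_witness {n : ℕ} (φ : Fin N → Fin n) (M : Equiv.Perm (Fin N))
    (hM : M ∈ matchings N) (v : Fin n)
    (hlt : ecmDeg φ M v < (Finset.univ.filter fun s => φ s = v).card) :
    (∃ t, φ t = v ∧ φ (M t) = v) ∨
      (∃ t t', φ t = v ∧ φ t' = v ∧ t ≠ t' ∧ φ (M t) = φ (M t')) := by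
  classical
  rw [mem_matchings] at hM
  by_contra hcon
  push_neg at hcon
  obtain ⟨h1, h2⟩ := hcon
  refine absurd hlt (not_lt.2 ?_)
  unfold ecmDeg
  apply Finset.card_le_card_of_injOn (fun t => φ (M t))
  · intro t ht
    rw [Finset.mem_coe, Finset.mem_filter] at ht
    rw [Finset.mem_coe, Finset.mem_filter]
    refine ⟨Finset.mem_univ _, ?_, M t, rfl, ?_⟩
    · exact h1 t ht.2
    · rw [(hM t).1, ht.2]
  · intro t ht t' ht' heq
    rw [Finset.coe_filter, Set.mem_setOf_eq] at ht ht'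
    by_contra hne
    exact h2 t t' ht.2 ht'.2 hne heq

end part2

lemma nodup_six {α : Type*} {a b c d e f : α} (h1 : a ≠ b) (h2 : a ≠ c) (h3 : a ≠ d)
    (h4 : a ≠ e) (h5 : a ≠ f) (h6 : b ≠ c) (h7 : b ≠ d) (h8 : b ≠ e) (h9 : b ≠ f)
    (h10 : c ≠ d) (h11 : c ≠ e) (h12 : c ≠ f) (h13 : d ≠ e) (h14 : d ≠ f) (h15 : e ≠ f) :
    ([a, b, c, d, e, f] : List α).Nodup := by
  simp only [List.nodup_cons, List.mem_cons, List.not_mem_nil, or_false, List.nodup_nil,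
    and_true, not_or]
  tauto

lemma nodup_eight {α : Type*} {a b c d e f g h : α} (h1 : a ≠ b) (h2 : a ≠ c) (h3 : a ≠ d)
    (h4 : a ≠ e) (h5 : a ≠ f) (h6 : a ≠ g) (h7 : a ≠ h) (h8 : b ≠ c) (h9 : b ≠ d)
    (h10 : b ≠ e) (h11 : b ≠ f) (h12 : b ≠ g) (h13 : b ≠ h) (h14 : c ≠ d) (h15 : c ≠ e)
    (h16 : c ≠ f) (h17 : c ≠ g) (h18 : c ≠ h) (h19 : d ≠ e) (h20 : d ≠ f) (h21 : d ≠ g)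
    (h22 : d ≠ h) (h23 : e ≠ f) (h24 : e ≠ g) (h25 : e ≠ h) (h26 : f ≠ g) (h27 : f ≠ h)
    (h28 : g ≠ h) : ([a, b, c, d, e, f, g, h] : List α).Nodup := by
  simp only [List.nodup_cons, List.mem_cons, List.not_mem_nil, or_false, List.nodup_nil,
    and_true, not_or]
  tauto

example {α : Type*} (a b c d e f : α × α) : listPts [a, b, c] = [a.1, a.2, b.1, b.2, c.1, c.2] := rfl
example {α : Type*} (a b c d : α × α) :
    listPts [a, b, c, d] = [a.1, a.2, b.1, b.2, c.1, c.2, d.1, d.2] := rfl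

set_option maxHeartbeats 2000000 in
lemma ecm_core {n m : ℕ} (hm : 7 ≤ m) (d : Fin n → ℕ) (φ : Fin (2 * m) → Fin n)
    (hstub : IsStubMap d φ) (v w w' : Fin n) (hvw : v ≠ w) (hvw' : v ≠ w')
    (hww' : w ≠ w') (hmin : min (d w) (d w') < d v) :
    ((matchings (2 * m)).filter (fun M => inBucket φ M v w ∧ inBucket φ M v w')).card
        * (2 * m - 7) ^ 4
      ≤ (matchings (2 * m)).card *
        ((d v ^ 4 * d w * d w' + d v ^ 3 * d w ^ 2 * d w' + d v ^ 3 * d w * d w' ^ 2)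
            * (2 * m - 7)
          + d v ^ 4 * d w * d w' * ∑ p : Fin (2 * m), d (φ p)) := by
  classical
  have hN0 : 0 < 2 * m := by omega
  set Vs : Finset (Fin (2 * m)) := Finset.univ.filter (fun s => φ s = v) with hVsdef
  set Ws : Finset (Fin (2 * m)) := Finset.univ.filter (fun s => φ s = w) with hWsdef
  set Ws' : Finset (Fin (2 * m)) := Finset.univ.filter (fun s => φ s = w') with hWs'def
  have hVs : Vs.card = d v := hstub v
  have hWs : Ws.card = d w := hstub w
  have hWs' : Ws'.card = d w' := hstub w'
  -- the four families of configurations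
  set g3 : (Fin (2 * m) × Fin (2 * m)) × (Fin (2 * m) × Fin (2 * m)) × (Fin (2 * m) × Fin (2 * m)) → Finset (Equiv.Perm (Fin (2 * m))) :=
    fun c => (matchings (2 * m)).filter (fun M => ∀ p ∈ [c.1, c.2.1, c.2.2], M p.1 = p.2) with hg3
  set g4 : (Fin (2 * m) × Fin (2 * m)) × (Fin (2 * m) × Fin (2 * m)) × (Fin (2 * m) × Fin (2 * m)) × (Fin (2 * m) × Fin (2 * m)) →
      Finset (Equiv.Perm (Fin (2 * m))) :=
    fun c => (matchings (2 * m)).filter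
      (fun M => ∀ p ∈ [c.1, c.2.1, (c.2.2.1.1, c.2.2.2.1), (c.2.2.1.2, c.2.2.2.2)],
        M p.1 = p.2) with hg4
  set PQ : Finset (Fin (2 * m) × Fin (2 * m)) :=
    (Finset.univ ×ˢ Finset.univ).filter (fun z => φ z.1 = φ z.2) with hPQdef
  set T1 : Finset ((Fin (2 * m) × Fin (2 * m)) × (Fin (2 * m) × Fin (2 * m)) × (Fin (2 * m) × Fin (2 * m))) :=
    ((Vs ×ˢ Ws) ×ˢ (Vs ×ˢ Ws') ×ˢ (Vs ×ˢ Vs)).filter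
      (fun c => (listPts [c.1, c.2.1, c.2.2]).Nodup) with hT1def
  set T3a : Finset ((Fin (2 * m) × Fin (2 * m)) × (Fin (2 * m) × Fin (2 * m)) × (Fin (2 * m) × Fin (2 * m))) :=
    ((Vs ×ˢ Ws) ×ˢ (Vs ×ˢ Ws') ×ˢ (Vs ×ˢ Ws)).filter
      (fun c => (listPts [c.1, c.2.1, c.2.2]).Nodup) with hT3adef
  set T3b : Finset ((Fin (2 * m) × Fin (2 * m)) × (Fin (2 * m) × Fin (2 * m)) × (Fin (2 * m) × Fin (2 * m))) :=
    ((Vs ×ˢ Ws) ×ˢ (Vs ×ˢ Ws') ×ˢ (Vs ×ˢ Ws')).filter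
      (fun c => (listPts [c.1, c.2.1, c.2.2]).Nodup) with hT3bdef
  set T2 : Finset ((Fin (2 * m) × Fin (2 * m)) × (Fin (2 * m) × Fin (2 * m)) × (Fin (2 * m) × Fin (2 * m)) × (Fin (2 * m) × Fin (2 * m))) :=
    ((Vs ×ˢ Ws) ×ˢ (Vs ×ˢ Ws') ×ˢ (Vs ×ˢ Vs) ×ˢ PQ).filter
      (fun c =>
        (listPts [c.1, c.2.1, (c.2.2.1.1, c.2.2.2.1), (c.2.2.1.2, c.2.2.2.2)]).Nodup) with hT2def
  -- the subset property
  have hsubset : (matchings (2 * m)).filter (fun M => inBucket φ M v w ∧ inBucket φ M v w') ⊆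
      ((T1.biUnion g3 ∪ T3a.biUnion g3) ∪ (T3b.biUnion g3 ∪ T2.biUnion g4)) := by
    intro M hM
    rw [Finset.mem_filter] at hM
    obtain ⟨hMm, hb1, hb2⟩ := hM
    have hinv : ∀ x, M (M x) = x := fun x => (mem_matchings.1 hMm x).1
    have hMinj : ∀ {x y : Fin (2 * m)}, M x = M y → x = y := by
      intro x y h
      rw [← hinv x, h, hinv]
    have phNe : ∀ {x y : Fin (2 * m)} {p q : Fin n}, φ x = p → φ y = q → p ≠ q → x ≠ y := by
      intro x y p q hx hy hpq hxy
      exact hpq (by rw [← hx, ← hy, hxy])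
    obtain ⟨⟨hne1, s1, hs1, ht1⟩, hbuck1⟩ := hb1
    obtain ⟨⟨hne2, s2, hs2, ht2⟩, hbuck2⟩ := hb2
    -- basic distinctness
    have hs1s2 : s1 ≠ s2 := by
      intro h; exact hww' (by rw [← ht1, ← ht2, h])
    have hs1t1 : s1 ≠ M s1 := phNe hs1 ht1 hvw
    have hs1t2 : s1 ≠ M s2 := phNe hs1 ht2 hvw'
    have ht1s2 : M s1 ≠ s2 := phNe ht1 hs2 (Ne.symm hvw)
    have ht1t2 : M s1 ≠ M s2 := fun h => hs1s2 (hMinj h)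
    have hs2t2 : s2 ≠ M s2 := phNe hs2 ht2 hvw'
    have ht1v : M s1 ∉ Vs := by
      simp only [hVsdef, Finset.mem_filter, Finset.mem_univ, true_and]
      rw [ht1]; exact Ne.symm hvw
    -- degree facts
    have hDvw : ecmDeg φ M v ≤ ecmDeg φ M w := by
      rcases hbuck1 with h | h
      · exact h.le
      · exact h.1.le
    have hDvw' : ecmDeg φ M v ≤ ecmDeg φ M w' := by
      rcases hbuck2 with h | h
      · exact h.le
      · exact h.1.le
    have hDw : ecmDeg φ M w ≤ d w := by
      have := ecmDeg_le hN0 φ M w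
      rwa [hstub w] at this
    have hDw' : ecmDeg φ M w' ≤ d w' := by
      have := ecmDeg_le hN0 φ M w'
      rwa [hstub w'] at this
    have hDv : ecmDeg φ M v < Vs.card := by
      rw [hVs]
      exact lt_of_le_of_lt (le_min (hDvw.trans hDw) (hDvw'.trans hDw')) hmin
    rw [hVsdef] at hDv
    by_cases hloop : ∃ t, φ t = v ∧ φ (M t) = v
    · -- loop case: T1
      obtain ⟨t, htv, htMv⟩ := hloop
      have hts1 : t ≠ s1 := by
        intro h; exact hvw (by rw [← htMv, ← ht1, h])
      have hts2 : t ≠ s2 := by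
        intro h; exact hvw' (by rw [← htMv, ← ht2, h])
      have hMts1 : M t ≠ s1 := by
        intro h
        have : t = M s1 := by rw [← hinv t, h]
        exact hvw (by rw [← htv, this, ht1])
      have hMts2 : M t ≠ s2 := by
        intro h
        have : t = M s2 := by rw [← hinv t, h]
        exact hvw' (by rw [← htv, this, ht2])
      refine Finset.mem_union_left _ (Finset.mem_union_left _ (Finset.mem_biUnion.2
        ⟨((s1, M s1), (s2, M s2), (t, M t)), ?_, ?_⟩))
      · rw [hT1def, Finset.mem_filter]
        constructor
        · simp only [Finset.mem_product]
          exact ⟨⟨Finset.mem_filter.2 ⟨Finset.mem_univ _, hs1⟩,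
            Finset.mem_filter.2 ⟨Finset.mem_univ _, ht1⟩⟩,
            ⟨Finset.mem_filter.2 ⟨Finset.mem_univ _, hs2⟩,
            Finset.mem_filter.2 ⟨Finset.mem_univ _, ht2⟩⟩,
            Finset.mem_filter.2 ⟨Finset.mem_univ _, htv⟩,
            Finset.mem_filter.2 ⟨Finset.mem_univ _, htMv⟩⟩
        · show ([s1, M s1, s2, M s2, t, M t]).Nodup
          exact nodup_six hs1t1 hs1s2 hs1t2 (Ne.symm hts1) (Ne.symm hMts1)
            ht1s2 ht1t2 (phNe ht1 htv (Ne.symm hvw)) (phNe ht1 htMv (Ne.symm hvw))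
            hs2t2 (Ne.symm hts2) (Ne.symm hMts2)
            (phNe ht2 htv (Ne.symm hvw')) (phNe ht2 htMv (Ne.symm hvw'))
            (fun h => (mem_matchings.1 hMm t).2 h.symm)
      · rw [hg3, Finset.mem_filter]
        refine ⟨hMm, ?_⟩
        intro p hp
        simp only [List.mem_cons, List.not_mem_nil, or_false] at hp
        rcases hp with h | h | h <;> (rw [h])
    · -- no loop: multi-edge case
      rcases ecmDeg_witness φ M hMm v hDv with hL | ⟨t, t', htv, ht'v, htt', hφeq⟩
      · exact absurd hL hloop
      have hMtv : φ (M t) ≠ v := fun h => hloop ⟨t, htv, h⟩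
      have hMt'v : φ (M t') ≠ v := fun h => hloop ⟨t', ht'v, h⟩
      -- common distinctness
      have hts1' : t ≠ M s1 := phNe htv ht1 hvw
      have hts2' : t ≠ M s2 := phNe htv ht2 hvw'
      have ht's1' : t' ≠ M s1 := phNe ht'v ht1 hvw
      have ht's2' : t' ≠ M s2 := phNe ht'v ht2 hvw'
      have hMtt : M t ≠ t := phNe rfl htv hMtv
      have hMtt' : M t ≠ t' := phNe rfl ht'v hMtv
      have hMt't : M t' ≠ t := phNe rfl htv hMt'v
      have hMt't' : M t' ≠ t' := phNe rfl ht'v hMt'v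
      have hMtMt' : M t ≠ M t' := fun h => htt' (hMinj h)
      by_cases hts1 : t = s1
      · -- (t, Mt) = (s1, Ms1); use (t', Mt') with φ (M t') = w : T3a
        have hq : φ (M t') = w := by rw [← hφeq, hts1, ht1]
        have ht's1 : t' ≠ s1 := fun h => htt' (by rw [hts1, h])
        have ht's2 : t' ≠ s2 := by
          intro h
          exact hww' (by rw [← hq, h, ht2])
        have hMt's1 : M t' ≠ s1 := phNe hq hs1 (Ne.symm hvw)
        have hMt's2 : M t' ≠ s2 := phNe hq hs2 (Ne.symm hvw)
        have hMt'Ms1 : M t' ≠ M s1 := fun h => ht's1 (hMinj h)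
        have hMt'Ms2 : M t' ≠ M s2 := phNe hq ht2 (fun h => hww' h)
        refine Finset.mem_union_left _ (Finset.mem_union_right _ (Finset.mem_biUnion.2
          ⟨((s1, M s1), (s2, M s2), (t', M t')), ?_, ?_⟩))
        · rw [hT3adef, Finset.mem_filter]
          constructor
          · simp only [Finset.mem_product]
            exact ⟨⟨Finset.mem_filter.2 ⟨Finset.mem_univ _, hs1⟩,
              Finset.mem_filter.2 ⟨Finset.mem_univ _, ht1⟩⟩,
              ⟨Finset.mem_filter.2 ⟨Finset.mem_univ _, hs2⟩,
              Finset.mem_filter.2 ⟨Finset.mem_univ _, ht2⟩⟩,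
              Finset.mem_filter.2 ⟨Finset.mem_univ _, ht'v⟩,
              Finset.mem_filter.2 ⟨Finset.mem_univ _, hq⟩⟩
          · show ([s1, M s1, s2, M s2, t', M t']).Nodup
            exact nodup_six hs1t1 hs1s2 hs1t2 (Ne.symm ht's1) (Ne.symm hMt's1)
              ht1s2 ht1t2 (Ne.symm ht's1') (Ne.symm hMt'Ms1)
              hs2t2 (Ne.symm ht's2) (Ne.symm hMt's2)
              (Ne.symm ht's2') (Ne.symm hMt'Ms2) (Ne.symm hMt't')
        · rw [hg3, Finset.mem_filter]
          refine ⟨hMm, ?_⟩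
          intro p hp
          simp only [List.mem_cons, List.not_mem_nil, or_false] at hp
          rcases hp with h | h | h <;> (rw [h])
      by_cases hts2 : t = s2
      · -- (t, Mt) = (s2, Ms2); use (t', Mt') with φ (M t') = w' : T3b
        have hq : φ (M t') = w' := by rw [← hφeq, hts2, ht2]
        have ht's2 : t' ≠ s2 := fun h => htt' (by rw [hts2, h])
        have ht's1 : t' ≠ s1 := by
          intro h
          exact hww' (by rw [← ht1, ← h, hq])
        have hMt's1 : M t' ≠ s1 := phNe hq hs1 (Ne.symm hvw')
        have hMt's2 : M t' ≠ s2 := phNe hq hs2 (Ne.symm hvw')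
        have hMt'Ms2 : M t' ≠ M s2 := fun h => ht's2 (hMinj h)
        have hMt'Ms1 : M t' ≠ M s1 := phNe hq ht1 (fun h => hww' h.symm)
        refine Finset.mem_union_right _ (Finset.mem_union_left _ (Finset.mem_biUnion.2
          ⟨((s1, M s1), (s2, M s2), (t', M t')), ?_, ?_⟩))
        · rw [hT3bdef, Finset.mem_filter]
          constructor
          · simp only [Finset.mem_product]
            exact ⟨⟨Finset.mem_filter.2 ⟨Finset.mem_univ _, hs1⟩,
              Finset.mem_filter.2 ⟨Finset.mem_univ _, ht1⟩⟩,
              ⟨Finset.mem_filter.2 ⟨Finset.mem_univ _, hs2⟩,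
              Finset.mem_filter.2 ⟨Finset.mem_univ _, ht2⟩⟩,
              Finset.mem_filter.2 ⟨Finset.mem_univ _, ht'v⟩,
              Finset.mem_filter.2 ⟨Finset.mem_univ _, hq⟩⟩
          · show ([s1, M s1, s2, M s2, t', M t']).Nodup
            exact nodup_six hs1t1 hs1s2 hs1t2 (Ne.symm ht's1) (Ne.symm hMt's1)
              ht1s2 ht1t2 (Ne.symm ht's1') (Ne.symm hMt'Ms1)
              hs2t2 (Ne.symm ht's2) (Ne.symm hMt's2)
              (Ne.symm ht's2') (Ne.symm hMt'Ms2) (Ne.symm hMt't')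
        · rw [hg3, Finset.mem_filter]
          refine ⟨hMm, ?_⟩
          intro p hp
          simp only [List.mem_cons, List.not_mem_nil, or_false] at hp
          rcases hp with h | h | h <;> (rw [h])
      by_cases ht's1 : t' = s1
      · -- use (t, Mt) with φ (M t) = w : T3a
        have hq : φ (M t) = w := by rw [hφeq, ht's1, ht1]
        have hMts1 : M t ≠ s1 := phNe hq hs1 (Ne.symm hvw)
        have hMts2 : M t ≠ s2 := phNe hq hs2 (Ne.symm hvw)
        have hMtMs1 : M t ≠ M s1 := fun h => hts1 (hMinj h)
        have hMtMs2 : M t ≠ M s2 := phNe hq ht2 (fun h => hww' h)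
        have hts2x : t ≠ s2 := by
          intro h
          exact hww' (by rw [← hq, h, ht2])
        refine Finset.mem_union_left _ (Finset.mem_union_right _ (Finset.mem_biUnion.2
          ⟨((s1, M s1), (s2, M s2), (t, M t)), ?_, ?_⟩))
        · rw [hT3adef, Finset.mem_filter]
          constructor
          · simp only [Finset.mem_product]
            exact ⟨⟨Finset.mem_filter.2 ⟨Finset.mem_univ _, hs1⟩,
              Finset.mem_filter.2 ⟨Finset.mem_univ _, ht1⟩⟩,
              ⟨Finset.mem_filter.2 ⟨Finset.mem_univ _, hs2⟩,
              Finset.mem_filter.2 ⟨Finset.mem_univ _, ht2⟩⟩,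
              Finset.mem_filter.2 ⟨Finset.mem_univ _, htv⟩,
              Finset.mem_filter.2 ⟨Finset.mem_univ _, hq⟩⟩
          · show ([s1, M s1, s2, M s2, t, M t]).Nodup
            exact nodup_six hs1t1 hs1s2 hs1t2 (Ne.symm hts1) (Ne.symm hMts1)
              ht1s2 ht1t2 (Ne.symm hts1') (Ne.symm hMtMs1)
              hs2t2 (Ne.symm hts2x) (Ne.symm hMts2)
              (Ne.symm hts2') (Ne.symm hMtMs2) (Ne.symm hMtt)
        · rw [hg3, Finset.mem_filter]
          refine ⟨hMm, ?_⟩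
          intro p hp
          simp only [List.mem_cons, List.not_mem_nil, or_false] at hp
          rcases hp with h | h | h <;> (rw [h])
      by_cases ht's2 : t' = s2
      · -- use (t, Mt) with φ (M t) = w' : T3b
        have hq : φ (M t) = w' := by rw [hφeq, ht's2, ht2]
        have hMts1 : M t ≠ s1 := phNe hq hs1 (Ne.symm hvw')
        have hMts2 : M t ≠ s2 := phNe hq hs2 (Ne.symm hvw')
        have hMtMs2 : M t ≠ M s2 := fun h => hts2 (hMinj h)
        have hMtMs1 : M t ≠ M s1 := phNe hq ht1 (fun h => hww' h.symm)
        have hts1x : t ≠ s1 := hts1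
        refine Finset.mem_union_right _ (Finset.mem_union_left _ (Finset.mem_biUnion.2
          ⟨((s1, M s1), (s2, M s2), (t, M t)), ?_, ?_⟩))
        · rw [hT3bdef, Finset.mem_filter]
          constructor
          · simp only [Finset.mem_product]
            exact ⟨⟨Finset.mem_filter.2 ⟨Finset.mem_univ _, hs1⟩,
              Finset.mem_filter.2 ⟨Finset.mem_univ _, ht1⟩⟩,
              ⟨Finset.mem_filter.2 ⟨Finset.mem_univ _, hs2⟩,
              Finset.mem_filter.2 ⟨Finset.mem_univ _, ht2⟩⟩,
              Finset.mem_filter.2 ⟨Finset.mem_univ _, htv⟩,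
              Finset.mem_filter.2 ⟨Finset.mem_univ _, hq⟩⟩
          · show ([s1, M s1, s2, M s2, t, M t]).Nodup
            exact nodup_six hs1t1 hs1s2 hs1t2 (Ne.symm hts1x) (Ne.symm hMts1)
              ht1s2 ht1t2 (Ne.symm hts1') (Ne.symm hMtMs1)
              hs2t2 (Ne.symm hts2) (Ne.symm hMts2)
              (Ne.symm hts2') (Ne.symm hMtMs2) (Ne.symm hMtt)
        · rw [hg3, Finset.mem_filter]
          refine ⟨hMm, ?_⟩
          intro p hp
          simp only [List.mem_cons, List.not_mem_nil, or_false] at hp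
          rcases hp with h | h | h <;> (rw [h])
      -- generic case: T2
      have hs1Mt : s1 ≠ M t := phNe hs1 rfl (Ne.symm hMtv)
      have hs1Mt' : s1 ≠ M t' := phNe hs1 rfl (Ne.symm hMt'v)
      have hs2Mt : s2 ≠ M t := phNe hs2 rfl (Ne.symm hMtv)
      have hs2Mt' : s2 ≠ M t' := phNe hs2 rfl (Ne.symm hMt'v)
      refine Finset.mem_union_right _ (Finset.mem_union_right _ (Finset.mem_biUnion.2
        ⟨((s1, M s1), (s2, M s2), (t, t'), (M t, M t')), ?_, ?_⟩))
      · rw [hT2def, Finset.mem_filter]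
        constructor
        · simp only [Finset.mem_product]
          refine ⟨⟨Finset.mem_filter.2 ⟨Finset.mem_univ _, hs1⟩,
            Finset.mem_filter.2 ⟨Finset.mem_univ _, ht1⟩⟩,
            ⟨Finset.mem_filter.2 ⟨Finset.mem_univ _, hs2⟩,
            Finset.mem_filter.2 ⟨Finset.mem_univ _, ht2⟩⟩,
            ⟨Finset.mem_filter.2 ⟨Finset.mem_univ _, htv⟩,
            Finset.mem_filter.2 ⟨Finset.mem_univ _, ht'v⟩⟩, ?_⟩
          rw [hPQdef, Finset.mem_filter]
          exact ⟨Finset.mem_product.2 ⟨Finset.mem_univ _, Finset.mem_univ _⟩, hφeq⟩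
        · show ([s1, M s1, s2, M s2, t, M t, t', M t']).Nodup
          exact nodup_eight hs1t1 hs1s2 hs1t2 (Ne.symm hts1) hs1Mt (Ne.symm ht's1) hs1Mt'
            ht1s2 ht1t2 (Ne.symm hts1') (fun h => hts1 (hMinj h).symm)
            (Ne.symm ht's1') (fun h => ht's1 (hMinj h).symm)
            hs2t2 (Ne.symm hts2) hs2Mt (Ne.symm ht's2) hs2Mt'
            (Ne.symm hts2') (fun h => hts2 (hMinj h).symm)
            (Ne.symm ht's2') (fun h => ht's2 (hMinj h).symm)
            (Ne.symm hMtt) htt' (Ne.symm hMt't) hMtt' hMtMt' (Ne.symm hMt't')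
      · rw [hg4, Finset.mem_filter]
        refine ⟨hMm, ?_⟩
        intro p hp
        simp only [List.mem_cons, List.not_mem_nil, or_false] at hp
        rcases hp with h | h | h | h <;> (rw [h])
  -- counting
  set cardM := (matchings (2 * m)).card with hcardM
  have hg3le : ∀ c : (Fin (2 * m) × Fin (2 * m)) × (Fin (2 * m) × Fin (2 * m)) × (Fin (2 * m) × Fin (2 * m)),
      (listPts [c.1, c.2.1, c.2.2]).Nodup → (g3 c).card * ((2 * m) - 7) ^ 3 ≤ cardM := by
    intro c hnd
    have h := matchCount_mul_le' [c.1, c.2.1, c.2.2] hnd (by simp)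
    simpa [matchCount, hg3] using h
  have hg4le : ∀ c : (Fin (2 * m) × Fin (2 * m)) × (Fin (2 * m) × Fin (2 * m)) × (Fin (2 * m) × Fin (2 * m)) × (Fin (2 * m) × Fin (2 * m)),
      (listPts [c.1, c.2.1, (c.2.2.1.1, c.2.2.2.1), (c.2.2.1.2, c.2.2.2.2)]).Nodup →
      (g4 c).card * ((2 * m) - 7) ^ 4 ≤ cardM := by
    intro c hnd
    have h := matchCount_mul_le' [c.1, c.2.1, (c.2.2.1.1, c.2.2.2.1), (c.2.2.1.2, c.2.2.2.2)]
      hnd (by simp)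
    simpa [matchCount, hg4] using h
  have hsum1 : (∑ c ∈ T1, (g3 c).card) * ((2 * m) - 7) ^ 4 ≤ T1.card * (cardM * ((2 * m) - 7)) := by
    rw [Finset.sum_mul]
    refine le_trans (Finset.sum_le_card_nsmul _ _ (cardM * ((2 * m) - 7)) ?_) (le_of_eq (smul_eq_mul _ _))
    intro c hc
    rw [hT1def, Finset.mem_filter] at hc
    calc (g3 c).card * ((2 * m) - 7) ^ 4 = ((g3 c).card * ((2 * m) - 7) ^ 3) * ((2 * m) - 7) := by ring
      _ ≤ cardM * ((2 * m) - 7) := Nat.mul_le_mul_right _ (hg3le c hc.2)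
  have hsum3a : (∑ c ∈ T3a, (g3 c).card) * ((2 * m) - 7) ^ 4 ≤ T3a.card * (cardM * ((2 * m) - 7)) := by
    rw [Finset.sum_mul]
    refine le_trans (Finset.sum_le_card_nsmul _ _ (cardM * ((2 * m) - 7)) ?_) (le_of_eq (smul_eq_mul _ _))
    intro c hc
    rw [hT3adef, Finset.mem_filter] at hc
    calc (g3 c).card * ((2 * m) - 7) ^ 4 = ((g3 c).card * ((2 * m) - 7) ^ 3) * ((2 * m) - 7) := by ring
      _ ≤ cardM * ((2 * m) - 7) := Nat.mul_le_mul_right _ (hg3le c hc.2)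
  have hsum3b : (∑ c ∈ T3b, (g3 c).card) * ((2 * m) - 7) ^ 4 ≤ T3b.card * (cardM * ((2 * m) - 7)) := by
    rw [Finset.sum_mul]
    refine le_trans (Finset.sum_le_card_nsmul _ _ (cardM * ((2 * m) - 7)) ?_) (le_of_eq (smul_eq_mul _ _))
    intro c hc
    rw [hT3bdef, Finset.mem_filter] at hc
    calc (g3 c).card * ((2 * m) - 7) ^ 4 = ((g3 c).card * ((2 * m) - 7) ^ 3) * ((2 * m) - 7) := by ring
      _ ≤ cardM * ((2 * m) - 7) := Nat.mul_le_mul_right _ (hg3le c hc.2)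
  have hsum2 : (∑ c ∈ T2, (g4 c).card) * ((2 * m) - 7) ^ 4 ≤ T2.card * cardM := by
    rw [Finset.sum_mul]
    refine le_trans (Finset.sum_le_card_nsmul _ _ cardM ?_) (le_of_eq (smul_eq_mul _ _))
    intro c hc
    rw [hT2def, Finset.mem_filter] at hc
    exact hg4le c hc.2
  have hPQcard : PQ.card = ∑ p : Fin (2 * m), d (φ p) := by
    have hfib : ∀ p : Fin (2 * m), (PQ.filter (fun z => z.1 = p)).card = d (φ p) := by
      intro p
      rw [← hstub (φ p)]
      apply Finset.card_bij (fun z _ => z.2)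
      · intro z hz
        rw [Finset.mem_filter, hPQdef, Finset.mem_filter] at hz
        rw [Finset.mem_filter]
        exact ⟨Finset.mem_univ _, by rw [← hz.1.2, hz.2]⟩
      · intro z hz z' hz' heq
        rw [Finset.mem_filter] at hz hz'
        exact Prod.ext (hz.2.trans hz'.2.symm) heq
      · intro q hq
        rw [Finset.mem_filter] at hq
        refine ⟨(p, q), ?_, rfl⟩
        rw [Finset.mem_filter, hPQdef, Finset.mem_filter]
        exact ⟨⟨Finset.mem_product.2 ⟨Finset.mem_univ _, Finset.mem_univ _⟩, hq.2.symm⟩, rfl⟩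
    rw [Finset.card_eq_sum_card_fiberwise (f := Prod.fst) (t := Finset.univ)
      (fun z _ => Finset.mem_univ z.1)]
    exact Finset.sum_congr rfl (fun p _ => hfib p)
  have hT1card : T1.card ≤ d v ^ 4 * d w * d w' := by
    refine le_trans (Finset.card_filter_le _ _) (le_of_eq ?_)
    simp only [Finset.card_product, hVs, hWs, hWs']
    ring
  have hT3acard : T3a.card ≤ d v ^ 3 * d w ^ 2 * d w' := by
    refine le_trans (Finset.card_filter_le _ _) (le_of_eq ?_)
    simp only [Finset.card_product, hVs, hWs, hWs']
    ring
  have hT3bcard : T3b.card ≤ d v ^ 3 * d w * d w' ^ 2 := by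
    refine le_trans (Finset.card_filter_le _ _) (le_of_eq ?_)
    simp only [Finset.card_product, hVs, hWs, hWs']
    ring
  have hT2card : T2.card ≤ d v ^ 4 * d w * d w' * ∑ p : Fin (2 * m), d (φ p) := by
    refine le_trans (Finset.card_filter_le _ _) (le_of_eq ?_)
    simp only [Finset.card_product, hVs, hWs, hWs', hPQcard]
    ring
  calc ((matchings (2 * m)).filter (fun M => inBucket φ M v w ∧ inBucket φ M v w')).card * ((2 * m) - 7) ^ 4
      ≤ ((T1.biUnion g3 ∪ T3a.biUnion g3) ∪ (T3b.biUnion g3 ∪ T2.biUnion g4)).card * ((2 * m) - 7) ^ 4 :=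
        Nat.mul_le_mul_right _ (Finset.card_le_card hsubset)
    _ ≤ ((∑ c ∈ T1, (g3 c).card) + (∑ c ∈ T3a, (g3 c).card) +
          ((∑ c ∈ T3b, (g3 c).card) + (∑ c ∈ T2, (g4 c).card))) * ((2 * m) - 7) ^ 4 := by
        refine Nat.mul_le_mul_right _ ?_
        refine le_trans (Finset.card_union_le _ _) ?_
        exact Nat.add_le_add
          (le_trans (Finset.card_union_le _ _)
            (Nat.add_le_add (Finset.card_biUnion_le) (Finset.card_biUnion_le)))
          (le_trans (Finset.card_union_le _ _)
            (Nat.add_le_add (Finset.card_biUnion_le) (Finset.card_biUnion_le)))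
    _ = (∑ c ∈ T1, (g3 c).card) * ((2 * m) - 7) ^ 4 + (∑ c ∈ T3a, (g3 c).card) * ((2 * m) - 7) ^ 4 +
          ((∑ c ∈ T3b, (g3 c).card) * ((2 * m) - 7) ^ 4 + (∑ c ∈ T2, (g4 c).card) * ((2 * m) - 7) ^ 4) := by
        ring
    _ ≤ T1.card * (cardM * ((2 * m) - 7)) + T3a.card * (cardM * ((2 * m) - 7)) +
          (T3b.card * (cardM * ((2 * m) - 7)) + T2.card * cardM) :=
        Nat.add_le_add (Nat.add_le_add hsum1 hsum3a) (Nat.add_le_add hsum3b hsum2)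
    _ ≤ (d v ^ 4 * d w * d w') * (cardM * ((2 * m) - 7)) +
          (d v ^ 3 * d w ^ 2 * d w') * (cardM * ((2 * m) - 7)) +
          ((d v ^ 3 * d w * d w' ^ 2) * (cardM * ((2 * m) - 7)) +
            (d v ^ 4 * d w * d w' * ∑ p : Fin (2 * m), d (φ p)) * cardM) :=
        Nat.add_le_add (Nat.add_le_add (Nat.mul_le_mul_right _ hT1card)
          (Nat.mul_le_mul_right _ hT3acard))
          (Nat.add_le_add (Nat.mul_le_mul_right _ hT3bcard) (Nat.mul_le_mul_right _ hT2card))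
    _ = cardM * ((d v ^ 4 * d w * d w' + d v ^ 3 * d w ^ 2 * d w' + d v ^ 3 * d w * d w' ^ 2)
          * ((2 * m) - 7) + d v ^ 4 * d w * d w' * ∑ p : Fin (2 * m), d (φ p)) := by
        ring

set_option maxHeartbeats 1600000 in
/-- There exist absolute constants `c > 0`, `C` and `n₀` such that for all
`n ≥ n₀`: for every positive-integer degree sequence `d` on `n` vertices with `∑ d_v = 2m`
and `max d_v ≤ √n / (log n)²`, over `ECM(d)` with MinBucket buckets, for distinct
`v, w, w'` with `d_v < c log n` and `min{d_w, d_{w'}} < d_v`, the probability that the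
wedge `{(v,w),(v,w')}` lies in `v`'s bucket is at most
`C m^{-1/4} d_v (d_v - 1) d_w d_{w'} / m²`. -/
theorem ecm_bucket_wedge_probability_low :
    ∃ (c C : ℝ) (n₀ : ℕ), 0 < c ∧
      ∀ n : ℕ, n₀ ≤ n →
        ∀ (m : ℕ) (d : Fin n → ℕ) (φ : Fin (2 * m) → Fin n),
          (∀ v, 0 < d v) →
          (∑ v, d v) = 2 * m →
          (∀ v, (d v : ℝ) ≤ Real.sqrt n / (Real.log n) ^ 2) →
          IsStubMap d φ →
          ∀ v w w' : Fin n, v ≠ w → v ≠ w' → w ≠ w' →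
            (d v : ℝ) < c * Real.log n →
            min (d w) (d w') < d v →
            ecmProb (2 * m) (fun M => inBucket φ M v w ∧ inBucket φ M v w') ≤
              C * (m : ℝ) ^ (-(1 : ℝ) / 4) *
                ((d v : ℝ) * ((d v : ℝ) - 1) * (d w : ℝ) * (d w' : ℝ) / (m : ℝ) ^ 2) := by
  refine ⟨1, 32, 1000, one_pos, ?_⟩
  intro n hn m d φ hd hsum hΔ hstub v w w' hvw hvw' hww' hdvlog hmin
  have hnm : n ≤ 2 * m := by
    have h1 : (Finset.univ : Finset (Fin n)).card ≤ ∑ u, d u :=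
      calc (Finset.univ : Finset (Fin n)).card = ∑ _u : Fin n, 1 := by simp
        _ ≤ ∑ u, d u := Finset.sum_le_sum (fun u _ => hd u)
    rw [Finset.card_univ, Fintype.card_fin, hsum] at h1
    exact h1
  have hm0 : 0 < m := by omega
  have hm7 : 7 ≤ m := by omega
  have hcore := ecm_core hm7 d φ hstub v w w' hvw hvw' hww' hmin
  -- real number abbreviations
  set a : ℝ := (d v : ℝ) with ha
  set b : ℝ := (d w : ℝ) with hb
  set b' : ℝ := (d w' : ℝ) with hb'
  set Δ : ℝ := Real.sqrt n / (Real.log n) ^ 2 with hΔdef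
  set mr : ℝ := (m : ℝ) with hmr
  have hmr0 : (0 : ℝ) < mr := by
    rw [hmr]; exact_mod_cast hm0
  have hmr1 : (1 : ℝ) ≤ mr := by
    rw [hmr]; exact_mod_cast hm0
  have hdv2 : 2 ≤ d v := by
    have h1 := hd w
    have h2 := hd w'
    omega
  have haR : (2 : ℝ) ≤ a := by rw [ha]; exact_mod_cast hdv2
  have ha0 : (0 : ℝ) ≤ a := le_trans (by norm_num) haR
  have ha1 : (1 : ℝ) ≤ a := le_trans (by norm_num) haR
  have hb0 : (0 : ℝ) ≤ b := by rw [hb]; positivity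
  have hb'0 : (0 : ℝ) ≤ b' := by rw [hb']; positivity
  have hΔa : a ≤ Δ := hΔ v
  have hΔb : b ≤ Δ := hΔ w
  have hΔb' : b' ≤ Δ := hΔ w'
  have hΔ0 : (0 : ℝ) ≤ Δ := le_trans ha0 hΔa
  have hcard0 : 0 < (matchings (2 * m)).card := matchings_card_pos hm0
  set cM : ℝ := ((matchings (2 * m)).card : ℝ) with hcM
  have hcM0 : (0 : ℝ) < cM := by rw [hcM]; exact_mod_cast hcard0
  set X : ℝ := ((2 * m - 7 : ℕ) : ℝ) with hX
  have hXm : mr ≤ X := by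
    rw [hX, hmr]
    exact_mod_cast (by omega : m ≤ 2 * m - 7)
  have hX2m : X ≤ 2 * mr := by
    rw [hX, hmr]
    have : ((2 * m - 7 : ℕ) : ℝ) ≤ ((2 * m : ℕ) : ℝ) := by
      exact_mod_cast (by omega : 2 * m - 7 ≤ 2 * m)
    calc ((2 * m - 7 : ℕ) : ℝ) ≤ ((2 * m : ℕ) : ℝ) := this
      _ = 2 * (m : ℝ) := by push_cast; ring
  have hX0 : (0 : ℝ) < X := lt_of_lt_of_le hmr0 hXm
  set Sr : ℝ := ((∑ p : Fin (2 * m), d (φ p) : ℕ) : ℝ) with hSr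
  have hSrle : Sr ≤ 2 * mr * Δ := by
    rw [hSr]
    push_cast
    calc ∑ p : Fin (2 * m), (d (φ p) : ℝ) ≤ ∑ _p : Fin (2 * m), Δ :=
          Finset.sum_le_sum (fun p _ => hΔ (φ p))
      _ = 2 * mr * Δ := by
          rw [Finset.sum_const, Finset.card_univ, Fintype.card_fin, nsmul_eq_mul, hmr]
          push_cast
          ring
  -- cast the core bound
  set K : ℝ := (a ^ 4 * b * b' + a ^ 3 * b ^ 2 * b' + a ^ 3 * b * b' ^ 2) * X
      + a ^ 4 * b * b' * Sr with hK
  have hcoreR : ((((matchings (2 * m)).filter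
      (fun M => inBucket φ M v w ∧ inBucket φ M v w')).card : ℝ)) * X ^ 4 ≤ cM * K := by
    rw [hK, hX, hcM, ha, hb, hb', hSr]
    exact_mod_cast hcore
  -- probability bound
  have hprob : ecmProb (2 * m) (fun M => inBucket φ M v w ∧ inBucket φ M v w') ≤ K / X ^ 4 := by
    unfold ecmProb
    rw [Finset.filter_congr_decidable, ← hcM, div_le_div_iff₀ hcM0 (by positivity)]
    exact le_of_le_of_eq hcoreR (mul_comm cM K)
  -- bound K
  have hG0 : (0 : ℝ) ≤ a ^ 3 * b * b' := by positivity
  have h1 : a ^ 4 * b * b' ≤ Δ * (a ^ 3 * b * b') := by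
    calc a ^ 4 * b * b' = a * (a ^ 3 * b * b') := by ring
      _ ≤ Δ * (a ^ 3 * b * b') := mul_le_mul_of_nonneg_right hΔa hG0
  have h2 : a ^ 3 * b ^ 2 * b' ≤ Δ * (a ^ 3 * b * b') := by
    calc a ^ 3 * b ^ 2 * b' = b * (a ^ 3 * b * b') := by ring
      _ ≤ Δ * (a ^ 3 * b * b') := mul_le_mul_of_nonneg_right hΔb hG0
  have h3 : a ^ 3 * b * b' ^ 2 ≤ Δ * (a ^ 3 * b * b') := by
    calc a ^ 3 * b * b' ^ 2 = b' * (a ^ 3 * b * b') := by ring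
      _ ≤ Δ * (a ^ 3 * b * b') := mul_le_mul_of_nonneg_right hΔb' hG0
  have hbr : (a ^ 4 * b * b' + a ^ 3 * b ^ 2 * b' + a ^ 3 * b * b' ^ 2) * X
      ≤ (3 * (Δ * (a ^ 3 * b * b'))) * (2 * mr) := by
    refine mul_le_mul ?_ hX2m (le_of_lt hX0) (by positivity)
    calc a ^ 4 * b * b' + a ^ 3 * b ^ 2 * b' + a ^ 3 * b * b' ^ 2
        ≤ Δ * (a ^ 3 * b * b') + Δ * (a ^ 3 * b * b') + Δ * (a ^ 3 * b * b') :=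
          add_le_add (add_le_add h1 h2) h3
      _ = 3 * (Δ * (a ^ 3 * b * b')) := by ring
  have hlast : a ^ 4 * b * b' * Sr ≤ 2 * mr * Δ * (a ^ 4 * b * b') := by
    calc a ^ 4 * b * b' * Sr ≤ a ^ 4 * b * b' * (2 * mr * Δ) :=
          mul_le_mul_of_nonneg_left hSrle (by positivity)
      _ = 2 * mr * Δ * (a ^ 4 * b * b') := by ring
  have hKle : K ≤ 8 * mr * Δ * (a ^ 4 * b * b') := by
    have hGa : a ^ 3 * b * b' ≤ a ^ 4 * b * b' := by
      calc a ^ 3 * b * b' = 1 * (a ^ 3 * b * b') := (one_mul _).symm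
        _ ≤ a * (a ^ 3 * b * b') := mul_le_mul_of_nonneg_right ha1 hG0
        _ = a ^ 4 * b * b' := by ring
    have hmono : (3 * (Δ * (a ^ 3 * b * b'))) * (2 * mr) ≤ 6 * mr * Δ * (a ^ 4 * b * b') := by
      calc (3 * (Δ * (a ^ 3 * b * b'))) * (2 * mr) = (6 * mr * Δ) * (a ^ 3 * b * b') := by ring
        _ ≤ (6 * mr * Δ) * (a ^ 4 * b * b') := mul_le_mul_of_nonneg_left hGa (by positivity)
        _ = 6 * mr * Δ * (a ^ 4 * b * b') := by ring
    rw [hK]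
    calc (a ^ 4 * b * b' + a ^ 3 * b ^ 2 * b' + a ^ 3 * b * b' ^ 2) * X
          + a ^ 4 * b * b' * Sr
        ≤ (3 * (Δ * (a ^ 3 * b * b'))) * (2 * mr) + 2 * mr * Δ * (a ^ 4 * b * b') :=
          add_le_add hbr hlast
      _ ≤ 6 * mr * Δ * (a ^ 4 * b * b') + 2 * mr * Δ * (a ^ 4 * b * b') :=
          add_le_add hmono le_rfl
      _ = 8 * mr * Δ * (a ^ 4 * b * b') := by ring
  have hstep2 : K / X ^ 4 ≤ (8 * mr * Δ * (a ^ 4 * b * b')) / mr ^ 4 := by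
    apply div_le_div₀ (by positivity) hKle (by positivity)
    exact pow_le_pow_left₀ hmr0.le hXm 4
  -- final arithmetic with rpow
  have hlogpos : (0 : ℝ) < Real.log n := Real.log_pos (by exact_mod_cast (by omega : 1 < n))
  have haloga : a ≤ Real.log n := by
    rw [one_mul] at hdvlog
    exact hdvlog.le
  have hΔa2 : Δ * a ^ 2 ≤ Real.sqrt n := by
    have h4 : a ^ 2 ≤ (Real.log n) ^ 2 := pow_le_pow_left₀ ha0 haloga 2
    calc Δ * a ^ 2 ≤ Δ * (Real.log n) ^ 2 := mul_le_mul_of_nonneg_left h4 hΔ0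
      _ = Real.sqrt n := by
          rw [hΔdef]
          field_simp
  have hsqrt : Real.sqrt n ≤ 2 * mr ^ ((3 : ℝ) / 4) := by
    have h5 : Real.sqrt n ≤ Real.sqrt (2 * mr) := by
      apply Real.sqrt_le_sqrt
      rw [hmr]
      exact_mod_cast hnm
    have h6 : Real.sqrt (2 * mr) = Real.sqrt 2 * Real.sqrt mr :=
      Real.sqrt_mul (by norm_num) _
    have h7 : Real.sqrt mr ≤ mr ^ ((3 : ℝ) / 4) := by
      rw [Real.sqrt_eq_rpow]
      exact Real.rpow_le_rpow_of_exponent_le hmr1 (by norm_num)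
    have h8 : Real.sqrt 2 ≤ 2 := by
      have h42 : Real.sqrt 4 = 2 := by
        rw [show (4 : ℝ) = 2 ^ 2 by norm_num, Real.sqrt_sq (by norm_num : (0 : ℝ) ≤ 2)]
      calc Real.sqrt 2 ≤ Real.sqrt 4 := Real.sqrt_le_sqrt (by norm_num)
        _ = 2 := h42
    calc Real.sqrt n ≤ Real.sqrt 2 * Real.sqrt mr := by rw [← h6]; exact h5
      _ ≤ 2 * mr ^ ((3 : ℝ) / 4) :=
          mul_le_mul h8 h7 (Real.sqrt_nonneg _) (by norm_num)
  have hrm : mr ^ (-(1 : ℝ) / 4) * mr = mr ^ ((3 : ℝ) / 4) := by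
    nth_rewrite 2 [← Real.rpow_one mr]
    rw [← Real.rpow_add hmr0]
    norm_num
  have key2 : 8 * (Δ * a ^ 2) ≤ 16 * mr ^ ((3 : ℝ) / 4) := by
    calc 8 * (Δ * a ^ 2) ≤ 8 * Real.sqrt n :=
          mul_le_mul_of_nonneg_left hΔa2 (by norm_num)
      _ ≤ 8 * (2 * mr ^ ((3 : ℝ) / 4)) := mul_le_mul_of_nonneg_left hsqrt (by norm_num)
      _ = 16 * mr ^ ((3 : ℝ) / 4) := by ring
  have key3 : a ^ 2 ≤ 2 * (a * (a - 1)) := by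
    have h := mul_nonneg (sub_nonneg.2 haR) ha0
    have e : a ^ 2 = 2 * (a * (a - 1)) - (a - 2) * a := by ring
    rw [e]
    exact sub_le_self _ h
  have hm34 : (0 : ℝ) ≤ mr ^ ((3 : ℝ) / 4) := Real.rpow_nonneg hmr0.le _
  have main : 8 * Δ * (a ^ 4 * b * b') ≤ 32 * mr ^ ((3 : ℝ) / 4) * (a * (a - 1) * b * b') := by
    have e2 : (8 * (Δ * a ^ 2)) * (a ^ 2 * b * b')
        ≤ (16 * mr ^ ((3 : ℝ) / 4)) * (a ^ 2 * b * b') :=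
      mul_le_mul_of_nonneg_right key2 (by positivity)
    have e3 : (16 * mr ^ ((3 : ℝ) / 4)) * (a ^ 2 * b * b')
        ≤ (16 * mr ^ ((3 : ℝ) / 4)) * (2 * (a * (a - 1)) * b * b') := by
      apply mul_le_mul_of_nonneg_left ?_ (by positivity)
      exact mul_le_mul_of_nonneg_right (mul_le_mul_of_nonneg_right key3 hb0) hb'0
    calc 8 * Δ * (a ^ 4 * b * b') = (8 * (Δ * a ^ 2)) * (a ^ 2 * b * b') := by ring
      _ ≤ (16 * mr ^ ((3 : ℝ) / 4)) * (a ^ 2 * b * b') := e2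
      _ ≤ (16 * mr ^ ((3 : ℝ) / 4)) * (2 * (a * (a - 1)) * b * b') := e3
      _ = 32 * mr ^ ((3 : ℝ) / 4) * (a * (a - 1) * b * b') := by ring
  have hfinal : (8 * mr * Δ * (a ^ 4 * b * b')) / mr ^ 4
      ≤ 32 * mr ^ (-(1 : ℝ) / 4) * (a * (a - 1) * b * b' / mr ^ 2) := by
    have hrdiv : mr ^ (-(1 : ℝ) / 4) = mr ^ ((3 : ℝ) / 4) / mr := by
      rw [eq_div_iff (ne_of_gt hmr0)]
      exact hrm
    have eqL : (8 * mr * Δ * (a ^ 4 * b * b')) / mr ^ 4 = (8 * Δ * (a ^ 4 * b * b')) / mr ^ 3 := by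
      field_simp
    have eqRgen : ∀ u Z : ℝ, 32 * (u / mr) * (Z / mr ^ 2) = (32 * u * Z) / mr ^ 3 := by
      intro u Z
      rw [eq_div_iff (by positivity : (mr : ℝ) ^ 3 ≠ 0)]
      field_simp
    have eqR : 32 * (mr ^ ((3 : ℝ) / 4) / mr) * (a * (a - 1) * b * b' / mr ^ 2)
        = (32 * mr ^ ((3 : ℝ) / 4) * (a * (a - 1) * b * b')) / mr ^ 3 :=
      eqRgen _ _
    rw [hrdiv, eqL, eqR, div_le_div_iff₀ (by positivity) (by positivity)]
    exact mul_le_mul_of_nonneg_right main (by positivity)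
  exact le_trans hprob (le_trans hstep2 hfinal)
end
end

section
/- There exist a sufficiently large constant c and a constant c′ > 0 such that the following holds. Let d = (d_1,…,d_n) be a degree sequence with m = (∑_v d_v)/2 an integer, m sufficiently large, and max_v d_v < √m / 4, and draw a graph from ECM(d) with MinBucket buckets formed. For any three distinct vertices v, w, w′ with d_v > 3 and min(d_w, d_{w′}) > c·d_v, one has E[Y_{v,w}·Y_{v,w′}] ≥ c′·d_v²·d_w·d_{w′}/m². -/
open Finset

noncomputable section
attribute [local instance] Classical.propDecidable

namespace ECMaux
open Finset
variable {N : ℕ}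

lemma mem_matchings {M : Equiv.Perm (Fin N)} :
    M ∈ matchings N ↔ ∀ s, M (M s) = s ∧ M s ≠ s := by
  simp [matchings]

def sat (L : List (Fin N × Fin N)) (M : Equiv.Perm (Fin N)) : Prop :=
  ∀ p ∈ L, M p.1 = p.2

def mset (L : List (Fin N × Fin N)) : Finset (Equiv.Perm (Fin N)) :=
  (matchings N).filter (sat L)

lemma mem_mset {L} {M : Equiv.Perm (Fin N)} :
    M ∈ mset L ↔ M ∈ matchings N ∧ ∀ p ∈ L, M p.1 = p.2 := by
  simp [mset, sat]

def pts (L : List (Fin N × Fin N)) : Finset (Fin N) :=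
  L.foldr (fun p s => insert p.1 (insert p.2 s)) ∅

@[simp] lemma pts_nil : pts ([] : List (Fin N × Fin N)) = ∅ := rfl

@[simp] lemma pts_cons (p : Fin N × Fin N) (L) :
    pts (p :: L) = insert p.1 (insert p.2 (pts L)) := rfl

lemma mem_pts {x : Fin N} {L} : x ∈ pts L ↔ ∃ p ∈ L, x = p.1 ∨ x = p.2 := by
  induction L with
  | nil => simp
  | cons p L ih =>
    simp only [pts_cons, Finset.mem_insert, ih, List.mem_cons]
    constructor
    · rintro (h | h | ⟨r, hr, h⟩)
      · exact ⟨p, Or.inl rfl, Or.inl h⟩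
      · exact ⟨p, Or.inl rfl, Or.inr h⟩
      · exact ⟨r, Or.inr hr, h⟩
    · rintro ⟨r, (rfl | hr), h⟩
      · tauto
      · exact Or.inr (Or.inr ⟨r, hr, h⟩)

def OkL (L : List (Fin N × Fin N)) : Prop :=
  L.Pairwise (fun p q => p.1 ≠ q.1 ∧ p.1 ≠ q.2 ∧ p.2 ≠ q.1 ∧ p.2 ≠ q.2) ∧
    ∀ p ∈ L, p.1 ≠ p.2

lemma OkL_cons {L} {p q : Fin N} (hOk : OkL L) (hp : p ∉ pts L) (hq : q ∉ pts L)
    (hpq : p ≠ q) : OkL ((p, q) :: L) := by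
  have key : ∀ (x : Fin N), x ∉ pts L → ∀ r ∈ L, x ≠ r.1 ∧ x ≠ r.2 := by
    intro x hx r hr
    constructor <;> intro h <;> exact hx (mem_pts.2 ⟨r, hr, by simp [h]⟩)
  constructor
  · refine List.pairwise_cons.2 ⟨?_, hOk.1⟩
    intro r hr
    exact ⟨(key p hp r hr).1, (key p hp r hr).2, (key q hq r hr).1, (key q hq r hr).2⟩
  · intro r hr
    rcases List.mem_cons.1 hr with h | h
    · subst h; exact hpq
    · exact hOk.2 r h

lemma OkL_of_cons {L} {p : Fin N × Fin N} (h : OkL (p :: L)) : OkL L :=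
  ⟨(List.pairwise_cons.1 h.1).2, fun r hr => h.2 r (List.mem_cons_of_mem _ hr)⟩

lemma not_mem_pts_of_cons {L} {p : Fin N × Fin N} (h : OkL (p :: L)) :
    p.1 ∉ pts L ∧ p.2 ∉ pts L := by
  have hpw := (List.pairwise_cons.1 h.1).1
  constructor <;> intro hx <;> rcases mem_pts.1 hx with ⟨r, hr, h1 | h1⟩
  · exact (hpw r hr).1 h1
  · exact (hpw r hr).2.1 h1
  · exact (hpw r hr).2.2.1 h1
  · exact (hpw r hr).2.2.2 h1

lemma card_pts {L : List (Fin N × Fin N)} (hOk : OkL L) : (pts L).card = 2 * L.length := by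
  induction L with
  | nil => simp
  | cons p L ih =>
    have h1 := (not_mem_pts_of_cons hOk).1
    have h2 := (not_mem_pts_of_cons hOk).2
    have h12 : p.1 ≠ p.2 := hOk.2 p (List.mem_cons_self)
    rw [pts_cons, Finset.card_insert_of_notMem (by simp [h12, h1]),
      Finset.card_insert_of_notMem h2, ih (OkL_of_cons hOk), List.length_cons]
    ring

lemma matching_apply_apply {M : Equiv.Perm (Fin N)} (hM : M ∈ matchings N) (s : Fin N) :
    M (M s) = s := (mem_matchings.1 hM s).1

lemma matching_ne {M : Equiv.Perm (Fin N)} (hM : M ∈ matchings N) (s : Fin N) :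
    M s ≠ s := (mem_matchings.1 hM s).2

lemma matching_eq_iff {M : Equiv.Perm (Fin N)} (hM : M ∈ matchings N) {s t : Fin N} :
    M s = t ↔ s = M t := by
  constructor
  · rintro rfl; exact (matching_apply_apply hM s).symm
  · rintro rfl; exact matching_apply_apply hM t

lemma conj_mem_matchings {M : Equiv.Perm (Fin N)} (hM : M ∈ matchings N) (x y : Fin N) :
    (Equiv.swap x y) * M * (Equiv.swap x y) ∈ matchings N := by
  set c := Equiv.swap x y with hc
  have hcc : ∀ z, c (c z) = z := fun z => Equiv.swap_apply_self x y z
  rw [mem_matchings]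
  intro s
  constructor
  · simp only [Equiv.Perm.mul_apply, hcc, matching_apply_apply hM]
  · simp only [Equiv.Perm.mul_apply]
    intro h
    have h2 : M (c s) = c s := by
      have := congrArg c h
      rwa [hcc] at this
    exact matching_ne hM (c s) h2

/-- Conjugating by a swap of two fresh points gives a bijection between
`mset ((p,x)::L)` and `mset ((p,y)::L)`. -/
lemma card_mset_pair_swap {L : List (Fin N × Fin N)} {p x y : Fin N}
    (hx : x ∉ pts L) (hy : y ∉ pts L) (hxp : x ≠ p) (hyp : y ≠ p) :
    (mset ((p, x) :: L)).card = (mset ((p, y) :: L)).card := by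
  by_cases hxy : x = y
  · subst hxy; rfl
  set c := Equiv.swap x y with hc
  have hcc : ∀ z, c (c z) = z := fun z => Equiv.swap_apply_self x y z
  have hfix : ∀ z, z ≠ x → z ≠ y → c z = z := fun z h1 h2 =>
    Equiv.swap_apply_of_ne_of_ne h1 h2
  have main : ∀ (u v₀ : Fin N), ((u = x ∧ v₀ = y) ∨ (u = y ∧ v₀ = x)) →
      ∀ M ∈ mset ((p, u) :: L), c * M * c ∈ mset ((p, v₀) :: L) := by
    rintro u v₀ h M hM
    rw [mem_mset] at hM ⊢
    obtain ⟨hMm, hsat⟩ := hM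
    refine ⟨conj_mem_matchings hMm x y, ?_⟩
    intro r hr
    rcases List.mem_cons.1 hr with rfl | hrL
    · simp only [Equiv.Perm.mul_apply]
      have hcp : c p = p := hfix p (Ne.symm hxp) (Ne.symm hyp)
      have hMp : M p = u := hsat (p, u) (List.mem_cons_self)
      rcases h with ⟨rfl, rfl⟩ | ⟨rfl, rfl⟩
      · rw [hcp, hMp, hc]; exact Equiv.swap_apply_left _ _
      · rw [hcp, hMp, hc]; exact Equiv.swap_apply_right _ _
    · have hr1 : r.1 ∈ pts L := mem_pts.2 ⟨r, hrL, Or.inl rfl⟩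
      have hr2 : r.2 ∈ pts L := mem_pts.2 ⟨r, hrL, Or.inr rfl⟩
      have hMr : M r.1 = r.2 := hsat r (List.mem_cons_of_mem _ hrL)
      simp only [Equiv.Perm.mul_apply]
      rw [hfix r.1 (fun h => hx (h ▸ hr1)) (fun h => hy (h ▸ hr1)), hMr,
        hfix r.2 (fun h => hx (h ▸ hr2)) (fun h => hy (h ▸ hr2))]
  apply Finset.card_bij' (fun M _ => c * M * c) (fun M _ => c * M * c)
  · intro M hM; exact main x y (Or.inl ⟨rfl, rfl⟩) M hM
  · intro M hM; exact main y x (Or.inr ⟨rfl, rfl⟩) M hM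
  · intro M _
    rw [hc]
    ext z
    simp [Equiv.Perm.mul_apply, hcc]
  · intro M _
    ext z
    simp [Equiv.Perm.mul_apply, hcc]

lemma mset_cons_empty_of_mem_pts {L : List (Fin N × Fin N)} {p q : Fin N}
    (hp : p ∉ pts L) (hq : q ∈ pts L) : mset ((p, q) :: L) = ∅ := by
  ext M
  simp only [Finset.notMem_empty, iff_false, mem_mset, not_and]
  intro hMm hsat
  have hMp : M p = q := hsat (p, q) (List.mem_cons_self)
  rcases mem_pts.1 hq with ⟨r, hr, h | h⟩
  · have hMr : M r.1 = r.2 := hsat r (List.mem_cons_of_mem _ hr)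
    have : p = r.2 := by
      rw [matching_eq_iff hMm] at hMp
      rw [hMp, h]; exact hMr
    exact hp (mem_pts.2 ⟨r, hr, Or.inr this⟩)
  · have hMr : M r.1 = r.2 := hsat r (List.mem_cons_of_mem _ hr)
    have : p = r.1 := by
      have := hMp.trans (h.trans hMr.symm)
      exact M.injective this
    exact hp (mem_pts.2 ⟨r, hr, Or.inl this⟩)

lemma mset_cons_empty_of_eq {L : List (Fin N × Fin N)} {p : Fin N} :
    mset ((p, p) :: L) = ∅ := by
  ext M
  simp only [Finset.notMem_empty, iff_false, mem_mset, not_and]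
  intro hMm hsat
  exact matching_ne hMm p (hsat (p, p) (List.mem_cons_self))

/-- The expansion lemma: freely extending a constraint list by one fresh pair. -/
lemma expand {L : List (Fin N × Fin N)} (hOk : OkL L) {p q : Fin N}
    (hp : p ∉ pts L) (hq : q ∉ pts L) (hpq : p ≠ q) :
    (mset L).card = (N - (2 * L.length + 1)) * (mset ((p, q) :: L)).card := by
  classical
  have hsplit : mset L = (Finset.univ \ insert p (pts L)).biUnion
      (fun r => mset ((p, r) :: L)) := by
    ext M
    simp only [Finset.mem_biUnion, Finset.mem_sdiff, Finset.mem_univ, true_and,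
      Finset.mem_insert]
    constructor
    · intro hM
      refine ⟨M p, ?_, ?_⟩
      · push_neg
        obtain ⟨hMm, hsat⟩ := mem_mset.1 hM
        refine ⟨matching_ne hMm p, fun hmem => ?_⟩
        rcases mem_pts.1 hmem with ⟨r, hr, h | h⟩
        · have : p = r.2 := by
            rw [matching_eq_iff hMm] at h
            rw [h]; exact hsat r hr
          exact hp (mem_pts.2 ⟨r, hr, Or.inr this⟩)
        · have : p = r.1 := M.injective (h.trans (hsat r hr).symm)
          exact hp (mem_pts.2 ⟨r, hr, Or.inl this⟩)
      · rw [mem_mset] at hM ⊢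
        refine ⟨hM.1, ?_⟩
        intro r hr
        rcases List.mem_cons.1 hr with rfl | hrL
        · rfl
        · exact hM.2 r hrL
    · rintro ⟨r, _, hM⟩
      rw [mem_mset] at hM ⊢
      exact ⟨hM.1, fun r' hr' => hM.2 r' (List.mem_cons_of_mem _ hr')⟩
  have hdisj : ∀ r₁ ∈ Finset.univ \ insert p (pts L), ∀ r₂ ∈ Finset.univ \ insert p (pts L),
      r₁ ≠ r₂ → Disjoint (mset ((p, r₁) :: L)) (mset ((p, r₂) :: L)) := by
    intro r₁ _ r₂ _ hne
    rw [Finset.disjoint_left]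
    intro M h1 h2
    apply hne
    have e1 : M p = r₁ := (mem_mset.1 h1).2 (p, r₁) (List.mem_cons_self)
    have e2 : M p = r₂ := (mem_mset.1 h2).2 (p, r₂) (List.mem_cons_self)
    rw [← e1, e2]
  rw [hsplit, Finset.card_biUnion hdisj]
  have hconst : ∀ r ∈ Finset.univ \ insert p (pts L),
      (mset ((p, r) :: L)).card = (mset ((p, q) :: L)).card := by
    intro r hr
    simp only [Finset.mem_sdiff, Finset.mem_univ, true_and, Finset.mem_insert, not_or] at hr
    exact card_mset_pair_swap hr.2 hq hr.1 hpq.symm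
  rw [Finset.sum_congr rfl hconst, Finset.sum_const, smul_eq_mul]
  congr 1
  rw [Finset.card_sdiff_of_subset (Finset.subset_univ _), Finset.card_univ, Fintype.card_fin,
    Finset.card_insert_of_notMem hp, card_pts hOk]

lemma expand_le {L : List (Fin N × Fin N)} (hOk : OkL L) {p q : Fin N}
    (hp : p ∉ pts L) (hpq : p ≠ q) :
    (N - (2 * L.length + 1)) * (mset ((p, q) :: L)).card ≤ (mset L).card := by
  by_cases hq : q ∈ pts L
  · rw [mset_cons_empty_of_mem_pts hp hq]
    simp
  · exact (expand hOk hp hq hpq).ge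

lemma mset_cons_comm {p r : Fin N × Fin N} {L : List (Fin N × Fin N)} :
    mset (p :: r :: L) = mset (r :: p :: L) := by
  ext M
  simp only [mem_mset, List.mem_cons]
  constructor <;> rintro ⟨h1, h2⟩ <;> exact ⟨h1, fun x hx => h2 x (by tauto)⟩

open Fin.NatCast in
lemma matchings_card_pos {m : ℕ} (hm : 0 < m) : 0 < (matchings (2 * m)).card := by
  have h2m : 0 < 2 * m := by omega
  haveI : NeZero (2 * m) := ⟨by omega⟩
  refine Finset.card_pos.2 ⟨Equiv.addLeft (m : Fin (2 * m)), ?_⟩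
  rw [mem_matchings]
  intro s
  have hmm : (m : Fin (2 * m)) + (m : Fin (2 * m)) = 0 := by
    rw [← Nat.cast_add]
    have : ((2 * m : ℕ) : Fin (2 * m)) = 0 := by
      exact_mod_cast Fin.natCast_self (2 * m)
    rw [← this]
    congr 1
    omega
  constructor
  · simp [Equiv.addLeft, ← add_assoc, hmm]
  · simp only [Equiv.coe_addLeft]
    intro h
    have : (m : Fin (2 * m)) = 0 := by
      have := add_right_cancel (a := (m : Fin (2*m))) (b := s) (c := 0)
      apply this
      rw [h]
      simp
    have hval : ((m : Fin (2 * m)) : ℕ) = m := by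
      rw [Fin.val_natCast]
      exact Nat.mod_eq_of_lt (by omega)
    rw [this] at hval
    simp at hval
    omega

/-- Degree upper bound: the erased degree of `v` is at most the number of stubs of `v`. -/
lemma ecmDeg_le_stubs {n : ℕ} (φ : Fin N → Fin n) {M : Equiv.Perm (Fin N)}
    (hM : M ∈ matchings N) (v : Fin n) :
    ecmDeg φ M v ≤ (Finset.univ.filter fun s => φ s = v).card := by
  classical
  rw [ecmDeg]
  apply Finset.card_le_card_of_surjOn (fun s => φ (M s))
  intro u hu
  rw [Finset.coe_filter, Set.mem_setOf_eq] at hu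
  obtain ⟨-, hne, s, hs1, hs2⟩ := hu
  refine ⟨M s, ?_, ?_⟩
  · rw [Finset.coe_filter, Set.mem_setOf_eq]
    exact ⟨Finset.mem_univ _, hs2⟩
  · show φ (M (M s)) = u
    rw [matching_apply_apply hM, hs1]

/-- Degree lower bound via images of a stub subset. -/
lemma image_sdiff_le_ecmDeg {n : ℕ} (φ : Fin N → Fin n) {M : Equiv.Perm (Fin N)}
    (hM : M ∈ matchings N) (w : Fin n) (S : Finset (Fin N)) (hS : ∀ s ∈ S, φ s = w) :
    ((S.image fun s => φ (M s)) \ {w}).card ≤ ecmDeg φ M w := by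
  rw [ecmDeg]
  apply Finset.card_le_card
  intro u hu
  rw [Finset.mem_sdiff, Finset.mem_image] at hu
  obtain ⟨⟨s, hsS, hsu⟩, hne⟩ := hu
  rw [Finset.mem_singleton] at hne
  rw [Finset.mem_filter]
  refine ⟨Finset.mem_univ _, hne, M s, hsu, ?_⟩
  rw [matching_apply_apply hM]
  exact hS s hsS

/-- Cardinality of a finset vs its image: collisions bound. -/
lemma card_le_image_add_coll {α β : Type*} [DecidableEq α] [DecidableEq β]
    (s : Finset α) (f : α → β) :
    s.card ≤ (s.image f).card + (s.offDiag.filter fun p => f p.1 = f p.2).card := by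
  classical
  have hfib : s.card = ∑ b ∈ s.image f, (s.filter fun x => f x = b).card :=
    Finset.card_eq_sum_card_fiberwise (fun x hx => Finset.mem_image_of_mem f hx)
  have hsub : (s.image f).biUnion (fun b => (s.filter fun x => f x = b).offDiag) ⊆
      s.offDiag.filter fun p => f p.1 = f p.2 := by
    intro p hp
    rw [Finset.mem_biUnion] at hp
    obtain ⟨b, _, hp⟩ := hp
    rw [Finset.mem_offDiag] at hp
    rw [Finset.mem_filter, Finset.mem_offDiag]
    obtain ⟨h1, h2, h3⟩ := hp
    rw [Finset.mem_filter] at h1 h2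
    exact ⟨⟨h1.1, h2.1, h3⟩, h1.2.trans h2.2.symm⟩
  have hdisj : ∀ b₁ ∈ s.image f, ∀ b₂ ∈ s.image f, b₁ ≠ b₂ →
      Disjoint ((s.filter fun x => f x = b₁).offDiag) ((s.filter fun x => f x = b₂).offDiag) := by
    intro b1 _ b2 _ hne
    rw [Finset.disjoint_left]
    intro p h1 h2
    rw [Finset.mem_offDiag] at h1 h2
    have e1 : f p.1 = b1 := (Finset.mem_filter.1 h1.1).2
    have e2 : f p.1 = b2 := (Finset.mem_filter.1 h2.1).2
    exact hne (e1 ▸ e2 ▸ rfl)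
  have hcard := Finset.card_le_card hsub
  rw [Finset.card_biUnion hdisj] at hcard
  have hstep : ∀ b ∈ s.image f,
      (s.filter fun x => f x = b).card ≤ 1 + ((s.filter fun x => f x = b).offDiag).card := by
    intro b hb
    rw [Finset.mem_image] at hb
    obtain ⟨x, hx, hfx⟩ := hb
    have hpos : 0 < (s.filter fun x => f x = b).card :=
      Finset.card_pos.2 ⟨x, Finset.mem_filter.2 ⟨hx, hfx⟩⟩
    rw [Finset.offDiag_card]
    set t := (s.filter fun x => f x = b).card
    have h2 : t ≤ t * t := Nat.le_mul_of_pos_left t hpos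
    have h3 : t * t - t + t = t * t := Nat.sub_add_cancel h2
    have h4 : t = 1 ∨ 2 * t ≤ t * t := by
      rcases Nat.lt_or_ge t 2 with h | h
      · left; omega
      · right; exact Nat.mul_le_mul_right t h
    omega
  calc s.card = ∑ b ∈ s.image f, (s.filter fun x => f x = b).card := hfib
    _ ≤ ∑ b ∈ s.image f, (1 + ((s.filter fun x => f x = b).offDiag).card) :=
        Finset.sum_le_sum hstep
    _ = (s.image f).card + ∑ b ∈ s.image f, ((s.filter fun x => f x = b).offDiag).card := by
        rw [Finset.sum_add_distrib, Finset.sum_const, smul_eq_mul, mul_one]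
    _ ≤ (s.image f).card + (s.offDiag.filter fun p => f p.1 = f p.2).card := by
        exact Nat.add_le_add_left hcard _

end ECMaux


open ECMaux

set_option maxHeartbeats 4000000

/-- There exist a sufficiently large constant `c` and a constant `c' > 0`
(and a threshold `m₀`) such that for every degree sequence `d` with `∑ d_v = 2m`,
`m ≥ m₀` sufficiently large and `max d_v < √m / 4`, and any three distinct vertices
`v, w, w'` with `d_v > 3` and `min(d_w, d_{w'}) > c d_v`, one has
`E[Y_{v,w} Y_{v,w'}] ≥ c' d_v² d_w d_{w'} / m²` over `ECM(d)`. -/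
theorem ecm_bucket_pair_lower_bound :
    ∃ (c c' : ℝ) (m₀ : ℕ), 0 < c' ∧
      ∀ (n m : ℕ) (d : Fin n → ℕ) (φ : Fin (2 * m) → Fin n),
        m₀ ≤ m →
        (∀ v, 0 < d v) →
        (∑ v, d v) = 2 * m →
        (∀ v, (d v : ℝ) < Real.sqrt m / 4) →
        IsStubMap d φ →
        ∀ v w w' : Fin n, v ≠ w → v ≠ w' → w ≠ w' →
          3 < d v →
          c * (d v : ℝ) < (min (d w) (d w') : ℝ) →
          c' * (d v : ℝ) ^ 2 * (d w : ℝ) * (d w' : ℝ) / (m : ℝ) ^ 2 ≤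
            ecmExp (2 * m) (fun M => ecmY φ M v w * ecmY φ M v w') := by
  classical
  refine ⟨10, 1/16, 10000, by norm_num, ?_⟩
  intro n m d φ hm hdpos hsum hmax hstub v w w' hvw hvw' hww' hdv hmin
  have hm0 : 0 < m := by omega
  have hTpos : 0 < (matchings (2 * m)).card := ECMaux.matchings_card_pos hm0
  set St : Fin n → Finset (Fin (2 * m)) := fun u => Finset.univ.filter fun x => φ x = u with hSt
  have hStcard : ∀ u, (St u).card = d u := hstub
  have hStmem : ∀ (u : Fin n) (x : Fin (2 * m)), x ∈ St u ↔ φ x = u := by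
    intro u x; simp [hSt]
  have hStdisj : ∀ {u u' : Fin n} {x y : Fin (2 * m)}, u ≠ u' → x ∈ St u → y ∈ St u' → x ≠ y := by
    intro u u' x y huu hx hy h
    subst h
    exact huu (((hStmem u x).1 hx).symm.trans ((hStmem u' x).1 hy))
  -- numeric facts about degrees
  have hdv4 : 4 ≤ d v := by omega
  have hdw : 10 * d v + 1 ≤ d w := by
    have h2 : min ((d w : ℝ)) ((d w' : ℝ)) ≤ (d w : ℝ) := min_le_left _ _
    have : (10 * d v : ℕ) < d w := by
      have : ((10 * d v : ℕ) : ℝ) < (d w : ℝ) := by push_cast; linarith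
      exact_mod_cast this
    omega
  have hdw' : 10 * d v + 1 ≤ d w' := by
    have h2 : min ((d w : ℝ)) ((d w' : ℝ)) ≤ (d w' : ℝ) := min_le_right _ _
    have : (10 * d v : ℕ) < d w' := by
      have : ((10 * d v : ℕ) : ℝ) < (d w' : ℝ) := by push_cast; linarith
      exact_mod_cast this
    omega
  -- sqrt facts
  set sq := Real.sqrt m with hsq
  have hs2 : sq ^ 2 = m := Real.sq_sqrt (by positivity)
  have hs100 : 100 ≤ sq := by
    have : (10000 : ℝ) ≤ m := by exact_mod_cast hm
    nlinarith [Real.sqrt_nonneg (m : ℝ)]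
  have hdle : ∀ u, (d u : ℝ) ≤ sq / 4 := fun u => (hmax u).le
  have hsumR : ∑ u, (d u : ℝ) = 2 * (m : ℝ) := by exact_mod_cast congrArg (Nat.cast : ℕ → ℝ) hsum
  -- global collision pair count
  set GP := (Finset.univ ×ˢ Finset.univ).filter
      (fun p : Fin (2 * m) × Fin (2 * m) => p.1 ≠ p.2 ∧ φ p.1 = φ p.2) with hGP
  have hK : (GP.card : ℝ) ≤ sq ^ 3 / 2 := by
    have hsub : GP ⊆ Finset.univ.biUnion
        (fun u : Fin n => (St u ×ˢ St u).filter fun p => p.1 ≠ p.2) := by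
      intro p hp
      rw [hGP, Finset.mem_filter] at hp
      obtain ⟨-, hne, heq⟩ := hp
      rw [Finset.mem_biUnion]
      refine ⟨φ p.1, Finset.mem_univ _, ?_⟩
      rw [Finset.mem_filter, Finset.mem_product, hStmem, hStmem]
      exact ⟨⟨rfl, heq.symm⟩, hne⟩
    have h1 : GP.card ≤ ∑ u, ((St u ×ˢ St u).filter fun p => p.1 ≠ p.2).card :=
      (Finset.card_le_card hsub).trans (Finset.card_biUnion_le)
    have h2 : ∀ u, ((St u ×ˢ St u).filter fun p => p.1 ≠ p.2).card ≤ d u * d u := by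
      intro u
      calc ((St u ×ˢ St u).filter fun p => p.1 ≠ p.2).card
          ≤ (St u ×ˢ St u).card := Finset.card_filter_le _ _
        _ = d u * d u := by rw [Finset.card_product, hStcard]
    have h3 : (GP.card : ℝ) ≤ ∑ u, ((d u : ℝ) * (d u : ℝ)) := by
      calc (GP.card : ℝ) ≤ ((∑ u, ((St u ×ˢ St u).filter fun p => p.1 ≠ p.2).card : ℕ) : ℝ) := by
            exact_mod_cast h1
        _ ≤ ((∑ u, d u * d u : ℕ) : ℝ) := by
            exact_mod_cast Finset.sum_le_sum (fun u _ => h2 u)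
        _ = ∑ u, ((d u : ℝ) * (d u : ℝ)) := by push_cast; rfl
    have h4 : ∑ u, ((d u : ℝ) * (d u : ℝ)) ≤ ∑ u, (sq / 4) * (d u : ℝ) := by
      apply Finset.sum_le_sum
      intro u _
      have := hdle u
      have hnn : (0 : ℝ) ≤ (d u : ℝ) := Nat.cast_nonneg _
      nlinarith
    have h5 : ∑ u, (sq / 4) * (d u : ℝ) = (sq / 4) * (2 * (m : ℝ)) := by
      rw [← Finset.mul_sum, hsumR]
    nlinarith [h3, h4, h5, hs2]
  -- index set
  set Q := (St v).offDiag ×ˢ ((St w) ×ˢ (St w')) with hQdef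
  set L2 : (Fin (2 * m) × Fin (2 * m)) × (Fin (2 * m) × Fin (2 * m)) →
      List (Fin (2 * m) × Fin (2 * m)) := fun q => [(q.1.1, q.2.1), (q.1.2, q.2.2)] with hL2
  -- collision counters
  set Pw : Fin n → Fin (2 * m) → Equiv.Perm (Fin (2 * m)) → ℕ := fun u bb M =>
    ((((St u).erase bb).offDiag).filter fun p => φ (M p.1) = φ (M p.2)).card with hPw
  set goodP : ((Fin (2 * m) × Fin (2 * m)) × (Fin (2 * m) × Fin (2 * m))) →
      Equiv.Perm (Fin (2 * m)) → Prop := fun q M =>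
    (∀ x ∈ St v, x ≠ q.1.1 → x ≠ q.1.2 → φ (M x) ≠ w ∧ φ (M x) ≠ w') ∧
      2 * Pw w q.2.1 M ≤ d w ∧ 2 * Pw w' q.2.2 M ≤ d w' with hgoodP
  set good : ((Fin (2 * m) × Fin (2 * m)) × (Fin (2 * m) × Fin (2 * m))) →
      Finset (Equiv.Perm (Fin (2 * m))) := fun q => (mset (L2 q)).filter (goodP q) with hgood
  -- unpack membership in Q
  have hQmem : ∀ q ∈ Q, q.1.1 ∈ St v ∧ q.1.2 ∈ St v ∧ q.1.1 ≠ q.1.2 ∧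
      q.2.1 ∈ St w ∧ q.2.2 ∈ St w' := by
    intro q hq
    rw [hQdef, Finset.mem_product, Finset.mem_product] at hq
    obtain ⟨hq1, hq2, hq3⟩ := hq
    rw [Finset.mem_offDiag] at hq1
    exact ⟨hq1.1, hq1.2.1, hq1.2.2, hq2, hq3⟩
  -- structural facts for q ∈ Q
  have hOkne : ∀ q ∈ Q, q.1.1 ≠ q.2.1 ∧ q.1.1 ≠ q.2.2 ∧ q.1.2 ≠ q.2.1 ∧ q.1.2 ≠ q.2.2 ∧
      q.2.1 ≠ q.2.2 := by
    intro q hq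
    obtain ⟨h1, h2, h3, h4, h5⟩ := hQmem q hq
    exact ⟨hStdisj hvw h1 h4, hStdisj hvw' h1 h5, hStdisj hvw h2 h4,
      hStdisj hvw' h2 h5, hStdisj hww' h4 h5⟩
  have hOkL2 : ∀ q ∈ Q, OkL (L2 q) := by
    intro q hq
    obtain ⟨h1, h2, h3, h4, h5⟩ := hQmem q hq
    obtain ⟨n1, n2, n3, n4, n5⟩ := hOkne q hq
    have hOk1 : OkL [(q.1.2, q.2.2)] := by
      refine OkL_cons ⟨List.Pairwise.nil, by simp⟩ (by simp) (by simp) n4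
    refine OkL_cons hOk1 ?_ ?_ n1
    · rw [ECMaux.mem_pts]
      push_neg
      intro r hr
      simp only [List.mem_singleton] at hr
      subst hr
      exact ⟨h3, n2⟩
    · rw [ECMaux.mem_pts]
      push_neg
      intro r hr
      simp only [List.mem_singleton] at hr
      subst hr
      exact ⟨hStdisj hvw.symm h4 h2, hStdisj hww' h4 h5⟩
  have hmset_nil : (mset ([] : List (Fin (2 * m) × Fin (2 * m)))) = matchings (2 * m) := by
    rw [ECMaux.mset]
    apply Finset.filter_true_of_mem
    intro M _
    intro p hp
    simp at hp
  have hTc2 : ∀ q ∈ Q, (matchings (2 * m)).card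
      = (2 * m - 1) * ((2 * m - 3) * (mset (L2 q)).card) := by
    intro q hq
    obtain ⟨h1, h2, h3, h4, h5⟩ := hQmem q hq
    obtain ⟨n1, n2, n3, n4, n5⟩ := hOkne q hq
    have hOk1 : OkL ([] : List (Fin (2 * m) × Fin (2 * m))) := ⟨List.Pairwise.nil, by simp⟩
    have e1 : (mset ([] : List (Fin (2 * m) × Fin (2 * m)))).card
        = (2 * m - 1) * (mset [(q.1.2, q.2.2)]).card := by
      have := ECMaux.expand (N := 2 * m) hOk1 (p := q.1.2) (q := q.2.2)
        (by simp) (by simp) n4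
      simpa using this
    have hOk2 : OkL [(q.1.2, q.2.2)] :=
      OkL_cons hOk1 (by simp) (by simp) n4
    have e2 : (mset [(q.1.2, q.2.2)]).card = (2 * m - 3) * (mset (L2 q)).card := by
      have hp : q.1.1 ∉ pts [(q.1.2, q.2.2)] := by
        rw [ECMaux.mem_pts]; push_neg
        intro r hr
        simp only [List.mem_singleton] at hr
        subst hr
        exact ⟨h3, n2⟩
      have hqq : q.2.1 ∉ pts [(q.1.2, q.2.2)] := by
        rw [ECMaux.mem_pts]; push_neg
        intro r hr
        simp only [List.mem_singleton] at hr
        subst hr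
        exact ⟨hStdisj hvw.symm h4 h2, hStdisj hww' h4 h5⟩
      have := ECMaux.expand (N := 2 * m) hOk2 hp hqq n1
      simpa [hL2] using this
    rw [← hmset_nil, e1, e2]
  -- the three bad-set bounds and the good-set lower bound
  -- pts of L2
  have hptsL2 : ∀ q, ∀ x : Fin (2 * m), x ∈ pts (L2 q) ↔
      (x = q.1.1 ∨ x = q.2.1 ∨ x = q.1.2 ∨ x = q.2.2) := by
    intro q x
    rw [hL2, ECMaux.mem_pts]
    constructor
    · rintro ⟨p, hp, h⟩
      simp only [List.mem_cons, List.mem_singleton, List.not_mem_nil, or_false] at hp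
      rcases hp with rfl | rfl <;> rcases h with h | h <;> simp [h]
    · rintro (h | h | h | h)
      · exact ⟨(q.1.1, q.2.1), by simp, Or.inl h⟩
      · exact ⟨(q.1.1, q.2.1), by simp, Or.inr h⟩
      · exact ⟨(q.1.2, q.2.2), by simp, Or.inl h⟩
      · exact ⟨(q.1.2, q.2.2), by simp, Or.inr h⟩
  have hMpts : ∀ q ∈ Q, ∀ M ∈ mset (L2 q), ∀ x : Fin (2 * m),
      x ∉ pts (L2 q) → M x ∉ pts (L2 q) := by
    intro q hq M hM x hx hmem
    obtain ⟨hMm, hsat⟩ := ECMaux.mem_mset.1 hM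
    have hMa : M q.1.1 = q.2.1 := hsat (q.1.1, q.2.1) (by simp [hL2])
    have hMa' : M q.1.2 = q.2.2 := hsat (q.1.2, q.2.2) (by simp [hL2])
    have hxM : x = M (M x) := (ECMaux.matching_apply_apply hMm x).symm
    apply hx
    rw [hptsL2] at hmem ⊢
    rcases hmem with h | h | h | h
    · right; left; rw [hxM, h, hMa]
    · left; rw [hxM, h, ← hMa, ECMaux.matching_apply_apply hMm]
    · right; right; right; rw [hxM, h, hMa']
    · right; right; left; rw [hxM, h, ← hMa', ECMaux.matching_apply_apply hMm]
  have hlen2 : ∀ q, (2 * m) - (2 * (L2 q).length + 1) = 2 * m - 5 := by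
    intro q; rw [hL2]; rfl
  have hX5 : ((2 * m - 5 : ℕ) : ℝ) = 2 * (m : ℝ) - 5 := by
    rw [Nat.cast_sub (by omega)]; push_cast; ring
  have hX7 : ((2 * m - 7 : ℕ) : ℝ) = 2 * (m : ℝ) - 7 := by
    rw [Nat.cast_sub (by omega)]; push_cast; ring
  have hmsq : (m : ℝ) = sq ^ 2 := hs2.symm
  have hmR : (10000 : ℝ) ≤ (m : ℝ) := by exact_mod_cast hm
  -- generic collision bad-set bound
  have hbadgen : ∀ q ∈ Q, ∀ (u : Fin n) (bb : Fin (2 * m)), bb ∈ St u → d u ≤ 2 * m →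
      (∀ x ∈ (St u).erase bb, x ∉ pts (L2 q)) →
      (((mset (L2 q)).filter fun M => ¬(2 * Pw u bb M ≤ d u)).card : ℝ)
        ≤ ((mset (L2 q)).card : ℝ) / 8 := by
    intro q hq u bb hbb hdu2m hfresh
    set S := (St u).erase bb with hSdef
    set bad := (mset (L2 q)).filter fun M => ¬(2 * Pw u bb M ≤ d u) with hbad
    -- Markov step
    have hmarkov : d u * bad.card ≤ 2 * ∑ M ∈ mset (L2 q), Pw u bb M := by
      have h1 : ∀ M ∈ bad, d u ≤ 2 * Pw u bb M := by
        intro M hM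
        have := (Finset.mem_filter.1 hM).2
        omega
      calc d u * bad.card = ∑ _M ∈ bad, d u := by rw [Finset.sum_const, smul_eq_mul, mul_comm]
        _ ≤ ∑ M ∈ bad, 2 * Pw u bb M := Finset.sum_le_sum h1
        _ ≤ ∑ M ∈ mset (L2 q), 2 * Pw u bb M :=
            Finset.sum_le_sum_of_subset (Finset.filter_subset _ _)
        _ = 2 * ∑ M ∈ mset (L2 q), Pw u bb M := by rw [Finset.mul_sum]
    -- exchange step
    have hexch : ∑ M ∈ mset (L2 q), Pw u bb M
        = ∑ p ∈ S.offDiag, ((mset (L2 q)).filter fun M => φ (M p.1) = φ (M p.2)).card := by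
      have h1 : ∀ M, Pw u bb M = ∑ p ∈ S.offDiag, if φ (M p.1) = φ (M p.2) then 1 else 0 := by
        intro M
        rw [hSdef]
        simp only [hPw]
        rw [Finset.card_filter]
      have h2 : ∀ (p : Fin (2 * m) × Fin (2 * m)),
          ((mset (L2 q)).filter fun M => φ (M p.1) = φ (M p.2)).card
          = ∑ M ∈ mset (L2 q), if φ (M p.1) = φ (M p.2) then 1 else 0 := by
        intro p
        rw [Finset.card_filter]
      rw [Finset.sum_congr rfl fun M _ => h1 M, Finset.sum_comm]
      exact Finset.sum_congr rfl fun p _ => (h2 p).symm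
    -- per-pair coverage and counting
    have hperpair : ∀ p ∈ S.offDiag,
        (2 * m - 5) * ((2 * m - 7) * ((mset (L2 q)).filter fun M => φ (M p.1) = φ (M p.2)).card)
          ≤ (2 * m - 7) * (mset (L2 q)).card + GP.card * (mset (L2 q)).card := by
      intro p hp
      rw [Finset.mem_offDiag] at hp
      obtain ⟨hs, ht, hst⟩ := hp
      set s := p.1
      set t := p.2
      have hsfresh : s ∉ pts (L2 q) := hfresh s hs
      have htfresh : t ∉ pts (L2 q) := hfresh t ht
      set Pst := GP.filter (fun r => r.1 ∉ pts ((s, t) :: L2 q) ∧ r.2 ∉ pts ((s, t) :: L2 q))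
        with hPst
      -- coverage
      have hcov : ((mset (L2 q)).filter fun M => φ (M s) = φ (M t)) ⊆
          mset ((s, t) :: L2 q) ∪
            Pst.biUnion (fun r => mset ((s, r.1) :: (t, r.2) :: L2 q)) := by
        intro M hM
        rw [Finset.mem_filter] at hM
        obtain ⟨hML2, heq⟩ := hM
        obtain ⟨hMm, hsat⟩ := ECMaux.mem_mset.1 hML2
        rw [Finset.mem_union]
        by_cases hMst : M s = t
        · left
          rw [ECMaux.mem_mset]
          refine ⟨hMm, ?_⟩
          intro r hr
          rcases List.mem_cons.1 hr with rfl | hr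
          · exact hMst
          · exact hsat r hr
        · right
          rw [Finset.mem_biUnion]
          refine ⟨(M s, M t), ?_, ?_⟩
          · rw [hPst, Finset.mem_filter]
            have hMsne : M s ≠ M t := fun h => hst (M.injective h)
            have hMs1 : M s ∉ pts (L2 q) := hMpts q hq M hML2 s hsfresh
            have hMt1 : M t ∉ pts (L2 q) := hMpts q hq M hML2 t htfresh
            have hMss : M s ≠ s := ECMaux.matching_ne hMm s
            have hMtt : M t ≠ t := ECMaux.matching_ne hMm t
            have hMts : M t ≠ s := by
              intro h
              apply hMst
              rw [← h, ECMaux.matching_apply_apply hMm]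
            refine ⟨?_, ?_, ?_⟩
            · rw [hGP, Finset.mem_filter]
              exact ⟨Finset.mem_product.2 ⟨Finset.mem_univ _, Finset.mem_univ _⟩, hMsne, heq⟩
            · rw [ECMaux.pts_cons]
              simp only [Finset.mem_insert]
              push_neg
              exact ⟨hMss, hMst, hMs1⟩
            · rw [ECMaux.pts_cons]
              simp only [Finset.mem_insert]
              push_neg
              exact ⟨hMts, hMtt, hMt1⟩
          · rw [ECMaux.mem_mset]
            refine ⟨hMm, ?_⟩
            intro r hr
            rcases List.mem_cons.1 hr with rfl | hr
            · rfl
            · rcases List.mem_cons.1 hr with rfl | hr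
              · rfl
              · exact hsat r hr
      -- counting
      have hc3 : (mset (L2 q)).card = (2 * m - 5) * (mset ((s, t) :: L2 q)).card := by
        have := ECMaux.expand (hOkL2 q hq) hsfresh htfresh hst
        rwa [hlen2 q] at this
      have hc4 : ∀ r ∈ Pst, (mset (L2 q)).card
          = (2 * m - 5) * ((2 * m - 7) * (mset ((s, r.1) :: (t, r.2) :: L2 q)).card) := by
        intro r hr
        rw [hPst, Finset.mem_filter] at hr
        obtain ⟨hrGP, hr1, hr2⟩ := hr
        rw [hGP, Finset.mem_filter] at hrGP
        obtain ⟨-, hrne, hrphi⟩ := hrGP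
        rw [ECMaux.pts_cons] at hr1 hr2
        simp only [Finset.mem_insert] at hr1 hr2
        push_neg at hr1 hr2
        obtain ⟨hr1s, hr1t, hr1L⟩ := hr1
        obtain ⟨hr2s, hr2t, hr2L⟩ := hr2
        have e1 : (mset (L2 q)).card = (2 * m - 5) * (mset ((s, r.1) :: L2 q)).card := by
          have := ECMaux.expand (hOkL2 q hq) hsfresh hr1L (Ne.symm hr1s)
          rwa [hlen2 q] at this
        have hOk3 : OkL ((s, r.1) :: L2 q) :=
          ECMaux.OkL_cons (hOkL2 q hq) hsfresh hr1L (Ne.symm hr1s)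
        have htf3 : t ∉ pts ((s, r.1) :: L2 q) := by
          rw [ECMaux.pts_cons]
          simp only [Finset.mem_insert]
          push_neg
          exact ⟨Ne.symm hst, Ne.symm hr1t, htfresh⟩
        have hr2f3 : r.2 ∉ pts ((s, r.1) :: L2 q) := by
          rw [ECMaux.pts_cons]
          simp only [Finset.mem_insert]
          push_neg
          exact ⟨hr2s, Ne.symm hrne, hr2L⟩
        have e2 : (mset ((s, r.1) :: L2 q)).card
            = (2 * m - 7) * (mset ((t, r.2) :: (s, r.1) :: L2 q)).card := by
          have := ECMaux.expand hOk3 htf3 hr2f3 (Ne.symm hr2t)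
          have hlen3 : 2 * m - (2 * ((s, r.1) :: L2 q).length + 1) = 2 * m - 7 := by
            rw [hL2]; rfl
          rwa [hlen3] at this
        rw [e1, e2, ECMaux.mset_cons_comm]
      have hcard : ((mset (L2 q)).filter fun M => φ (M s) = φ (M t)).card
          ≤ (mset ((s, t) :: L2 q)).card + ∑ r ∈ Pst, (mset ((s, r.1) :: (t, r.2) :: L2 q)).card := by
        calc ((mset (L2 q)).filter fun M => φ (M s) = φ (M t)).card
            ≤ (mset ((s, t) :: L2 q) ∪
                Pst.biUnion (fun r => mset ((s, r.1) :: (t, r.2) :: L2 q))).card :=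
              Finset.card_le_card hcov
          _ ≤ (mset ((s, t) :: L2 q)).card
              + (Pst.biUnion (fun r => mset ((s, r.1) :: (t, r.2) :: L2 q))).card :=
              Finset.card_union_le _ _
          _ ≤ _ := by
              exact Nat.add_le_add_left Finset.card_biUnion_le _
      calc (2 * m - 5) * ((2 * m - 7) * ((mset (L2 q)).filter fun M => φ (M s) = φ (M t)).card)
          ≤ (2 * m - 5) * ((2 * m - 7) * ((mset ((s, t) :: L2 q)).card
            + ∑ r ∈ Pst, (mset ((s, r.1) :: (t, r.2) :: L2 q)).card)) := by
            exact Nat.mul_le_mul_left _ (Nat.mul_le_mul_left _ hcard)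
        _ = (2 * m - 7) * ((2 * m - 5) * (mset ((s, t) :: L2 q)).card)
            + ∑ r ∈ Pst, (2 * m - 5) * ((2 * m - 7) * (mset ((s, r.1) :: (t, r.2) :: L2 q)).card) := by
            rw [mul_add, mul_add, Finset.mul_sum, Finset.mul_sum]
            ring_nf
        _ = (2 * m - 7) * (mset (L2 q)).card + ∑ r ∈ Pst, (mset (L2 q)).card := by
            rw [← hc3, Finset.sum_congr rfl fun r hr => (hc4 r hr).symm]
        _ ≤ (2 * m - 7) * (mset (L2 q)).card + GP.card * (mset (L2 q)).card := by
            rw [Finset.sum_const, smul_eq_mul]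
            have : Pst.card ≤ GP.card := Finset.card_le_card (Finset.filter_subset _ _)
            exact Nat.add_le_add_left (Nat.mul_le_mul_right _ this) _
    -- total over pairs
    have hoffcard : S.offDiag.card ≤ d u * d u := by
      rw [Finset.offDiag_card]
      have h1 : S.card ≤ d u := by
        rw [hSdef]
        calc ((St u).erase bb).card ≤ (St u).card := Finset.card_erase_le
          _ = d u := hStcard u
      calc S.card * S.card - S.card ≤ S.card * S.card := Nat.sub_le _ _
        _ ≤ d u * d u := Nat.mul_le_mul h1 h1
    have htotal : (2 * m - 5) * ((2 * m - 7) * ∑ M ∈ mset (L2 q), Pw u bb M)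
        ≤ d u * d u * (((2 * m - 7) + GP.card) * (mset (L2 q)).card) := by
      rw [hexch, Finset.mul_sum, Finset.mul_sum]
      calc ∑ p ∈ S.offDiag, (2 * m - 5) * ((2 * m - 7) *
            ((mset (L2 q)).filter fun M => φ (M p.1) = φ (M p.2)).card)
          ≤ ∑ _p ∈ S.offDiag, ((2 * m - 7) * (mset (L2 q)).card + GP.card * (mset (L2 q)).card) :=
            Finset.sum_le_sum hperpair
        _ = S.offDiag.card * ((2 * m - 7) * (mset (L2 q)).card + GP.card * (mset (L2 q)).card) := by
            rw [Finset.sum_const, smul_eq_mul]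
        _ ≤ (d u * d u) * ((2 * m - 7) * (mset (L2 q)).card + GP.card * (mset (L2 q)).card) :=
            Nat.mul_le_mul_right _ hoffcard
        _ = d u * d u * (((2 * m - 7) + GP.card) * (mset (L2 q)).card) := by ring
    -- combine in ℝ
    have hcomb : ((2 * m - 5 : ℕ) : ℝ) * (((2 * m - 7 : ℕ) : ℝ) * ((d u : ℝ) * (bad.card : ℝ)))
        ≤ (d u : ℝ) * (d u : ℝ) * 2 * ((((2 * m - 7 : ℕ) : ℝ) + (GP.card : ℝ)) * ((mset (L2 q)).card : ℝ)) := by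
      have hN : (2 * m - 5) * ((2 * m - 7) * (d u * bad.card))
          ≤ d u * d u * 2 * (((2 * m - 7) + GP.card) * (mset (L2 q)).card) := by
        calc (2 * m - 5) * ((2 * m - 7) * (d u * bad.card))
            ≤ (2 * m - 5) * ((2 * m - 7) * (2 * ∑ M ∈ mset (L2 q), Pw u bb M)) := by
              exact Nat.mul_le_mul_left _ (Nat.mul_le_mul_left _ hmarkov)
          _ = 2 * ((2 * m - 5) * ((2 * m - 7) * ∑ M ∈ mset (L2 q), Pw u bb M)) := by ring
          _ ≤ 2 * (d u * d u * (((2 * m - 7) + GP.card) * (mset (L2 q)).card)) :=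
              Nat.mul_le_mul_left _ htotal
          _ = d u * d u * 2 * (((2 * m - 7) + GP.card) * (mset (L2 q)).card) := by ring
      exact_mod_cast hN
    -- numeric estimate
    have hdupos : (0 : ℝ) < (d u : ℝ) := by exact_mod_cast hdpos u
    have hduq : (d u : ℝ) ≤ sq / 4 := hdle u
    have hnum : 16 * (d u : ℝ) * (((2 * m - 7 : ℕ) : ℝ) + (GP.card : ℝ))
        ≤ ((2 * m - 5 : ℕ) : ℝ) * ((2 * m - 7 : ℕ) : ℝ) := by
      rw [hX5, hX7, hmsq]
      have hGPnn : (0 : ℝ) ≤ (GP.card : ℝ) := Nat.cast_nonneg _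
      nlinarith [hK, hs100, hduq, hdupos]
    have hc2nn : (0 : ℝ) ≤ ((mset (L2 q)).card : ℝ) := Nat.cast_nonneg _
    have hbadnn : (0 : ℝ) ≤ (bad.card : ℝ) := Nat.cast_nonneg _
    have hX5pos : (0 : ℝ) < ((2 * m - 5 : ℕ) : ℝ) := by rw [hX5]; have := hmR; linarith
    have hX7pos : (0 : ℝ) < ((2 * m - 7 : ℕ) : ℝ) := by rw [hX7]; have := hmR; linarith
    have hKnn : (0 : ℝ) ≤ (GP.card : ℝ) := Nat.cast_nonneg _
    -- conclude
    have hmain : ((2 * m - 5 : ℕ) : ℝ) * ((2 * m - 7 : ℕ) : ℝ) * (d u : ℝ) * (8 * (bad.card : ℝ))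
        ≤ ((2 * m - 5 : ℕ) : ℝ) * ((2 * m - 7 : ℕ) : ℝ) * (d u : ℝ) * ((mset (L2 q)).card : ℝ) := by
      have g3 : 16 * (d u : ℝ) * (((2 * m - 7 : ℕ) : ℝ) + (GP.card : ℝ))
            * ((d u : ℝ) * ((mset (L2 q)).card : ℝ))
          ≤ ((2 * m - 5 : ℕ) : ℝ) * ((2 * m - 7 : ℕ) : ℝ)
            * ((d u : ℝ) * ((mset (L2 q)).card : ℝ)) :=
        mul_le_mul_of_nonneg_right hnum (mul_nonneg hdupos.le hc2nn)
      nlinarith [hcomb, g3]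
    have hcancel : 8 * (bad.card : ℝ) ≤ ((mset (L2 q)).card : ℝ) := by
      have hpos : (0 : ℝ) < ((2 * m - 5 : ℕ) : ℝ) * ((2 * m - 7 : ℕ) : ℝ) * (d u : ℝ) := by
        positivity
      exact le_of_mul_le_mul_left (by linarith [hmain]) hpos
    linarith
  have hgoodlb : ∀ q ∈ Q, ((mset (L2 q)).card : ℝ) ≤ 2 * ((good q).card : ℝ) := by
    intro q hq
    obtain ⟨h1, h2, h3, h4, h5⟩ := hQmem q hq
    set bad1 := (mset (L2 q)).filter
      (fun M => ¬ (∀ x ∈ St v, x ≠ q.1.1 → x ≠ q.1.2 → φ (M x) ≠ w ∧ φ (M x) ≠ w')) with hbad1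
    set bad2 := (mset (L2 q)).filter (fun M => ¬(2 * Pw w q.2.1 M ≤ d w)) with hbad2
    set bad3 := (mset (L2 q)).filter (fun M => ¬(2 * Pw w' q.2.2 M ≤ d w')) with hbad3
    have hsplit : (mset (L2 q)).card ≤ (good q).card + bad1.card + bad2.card + bad3.card := by
      have hsub : mset (L2 q) ⊆ ((good q ∪ bad1) ∪ bad2) ∪ bad3 := by
        intro M hM
        by_cases c1 : ∀ x ∈ St v, x ≠ q.1.1 → x ≠ q.1.2 → φ (M x) ≠ w ∧ φ (M x) ≠ w'
        · by_cases c2 : 2 * Pw w q.2.1 M ≤ d w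
          · by_cases c3 : 2 * Pw w' q.2.2 M ≤ d w'
            · refine Finset.mem_union_left _ (Finset.mem_union_left _
                (Finset.mem_union_left _ ?_))
              rw [hgood, Finset.mem_filter]
              refine ⟨hM, ?_⟩
              simp only [hgoodP]
              exact ⟨c1, c2, c3⟩
            · exact Finset.mem_union_right _ (Finset.mem_filter.2 ⟨hM, c3⟩)
          · exact Finset.mem_union_left _
              (Finset.mem_union_right _ (Finset.mem_filter.2 ⟨hM, c2⟩))
        · exact Finset.mem_union_left _ (Finset.mem_union_left _
            (Finset.mem_union_right _ (Finset.mem_filter.2 ⟨hM, c1⟩)))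
      calc (mset (L2 q)).card ≤ (((good q ∪ bad1) ∪ bad2) ∪ bad3).card :=
            Finset.card_le_card hsub
        _ ≤ ((good q ∪ bad1) ∪ bad2).card + bad3.card := Finset.card_union_le _ _
        _ ≤ (good q ∪ bad1).card + bad2.card + bad3.card :=
            Nat.add_le_add_right (Finset.card_union_le _ _) _
        _ ≤ (good q).card + bad1.card + bad2.card + bad3.card := by
            have := Finset.card_union_le (good q) bad1
            omega
    -- bound on bad1
    have hb1N : (2 * m - 5) * bad1.card ≤ (d v * (d w + d w')) * (mset (L2 q)).card := by
      set I := (((St v).erase q.1.1).erase q.1.2) ×ˢ (St w ∪ St w') with hI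
      have hcov : bad1 ⊆ I.biUnion (fun r => mset ((r.1, r.2) :: L2 q)) := by
        intro M hM
        rw [hbad1, Finset.mem_filter] at hM
        obtain ⟨hML2, hno⟩ := hM
        push_neg at hno
        obtain ⟨x, hxv, hxa, hxa', hxw⟩ := hno
        obtain ⟨hMm, hsat⟩ := ECMaux.mem_mset.1 hML2
        rw [Finset.mem_biUnion]
        have hMxw : M x ∈ St w ∪ St w' := by
          rw [Finset.mem_union, hStmem, hStmem]
          by_cases hcase : φ (M x) = w
          · exact Or.inl hcase
          · exact Or.inr (hxw hcase)
        refine ⟨(x, M x), ?_, ?_⟩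
        · rw [hI, Finset.mem_product]
          exact ⟨Finset.mem_erase.2 ⟨hxa', Finset.mem_erase.2 ⟨hxa, hxv⟩⟩, hMxw⟩
        · rw [ECMaux.mem_mset]
          refine ⟨hMm, ?_⟩
          intro r hr
          rcases List.mem_cons.1 hr with rfl | hr
          · rfl
          · exact hsat r hr
      have hper : ∀ r ∈ I, (2 * m - 5) * (mset ((r.1, r.2) :: L2 q)).card
          ≤ (mset (L2 q)).card := by
        intro r hr
        rw [hI, Finset.mem_product] at hr
        obtain ⟨hr1, hr2⟩ := hr
        have hr1a' : r.1 ≠ q.1.2 := Finset.ne_of_mem_erase hr1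
        have hr1' := Finset.mem_of_mem_erase hr1
        have hr1a : r.1 ≠ q.1.1 := Finset.ne_of_mem_erase hr1'
        have hr1v : r.1 ∈ St v := Finset.mem_of_mem_erase hr1'
        have hfresh : r.1 ∉ pts (L2 q) := by
          rw [hptsL2]
          push_neg
          exact ⟨hr1a, hStdisj hvw hr1v h4, hr1a', hStdisj hvw' hr1v h5⟩
        have hne : r.1 ≠ r.2 := by
          rcases Finset.mem_union.1 hr2 with h | h
          · exact hStdisj hvw hr1v h
          · exact hStdisj hvw' hr1v h
        have := ECMaux.expand_le (hOkL2 q hq) hfresh hne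
        rwa [hlen2 q] at this
      have hIcard : I.card ≤ d v * (d w + d w') := by
        rw [hI, Finset.card_product]
        apply Nat.mul_le_mul
        · calc (((St v).erase q.1.1).erase q.1.2).card ≤ ((St v).erase q.1.1).card :=
              Finset.card_erase_le
            _ ≤ (St v).card := Finset.card_erase_le
            _ = d v := hStcard v
        · calc (St w ∪ St w').card ≤ (St w).card + (St w').card := Finset.card_union_le _ _
            _ = d w + d w' := by rw [hStcard, hStcard]
      calc (2 * m - 5) * bad1.card
          ≤ (2 * m - 5) * ∑ r ∈ I, (mset ((r.1, r.2) :: L2 q)).card := by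
            apply Nat.mul_le_mul_left
            exact (Finset.card_le_card hcov).trans Finset.card_biUnion_le
        _ = ∑ r ∈ I, (2 * m - 5) * (mset ((r.1, r.2) :: L2 q)).card := Finset.mul_sum _ _ _
        _ ≤ ∑ _r ∈ I, (mset (L2 q)).card := Finset.sum_le_sum hper
        _ = I.card * (mset (L2 q)).card := by rw [Finset.sum_const, smul_eq_mul]
        _ ≤ (d v * (d w + d w')) * (mset (L2 q)).card := Nat.mul_le_mul_right _ hIcard
    have hc2nn : (0 : ℝ) ≤ ((mset (L2 q)).card : ℝ) := Nat.cast_nonneg _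
    have hX5pos : (0 : ℝ) < ((2 * m - 5 : ℕ) : ℝ) := by rw [hX5]; linarith [hmR]
    have hb1R : (bad1.card : ℝ) ≤ ((mset (L2 q)).card : ℝ) / 8 := by
      have hcast : ((2 * m - 5 : ℕ) : ℝ) * (bad1.card : ℝ)
          ≤ ((d v : ℝ) * ((d w : ℝ) + (d w' : ℝ))) * ((mset (L2 q)).card : ℝ) := by
        exact_mod_cast hb1N
      have hnum1 : 8 * ((d v : ℝ) * ((d w : ℝ) + (d w' : ℝ))) ≤ ((2 * m - 5 : ℕ) : ℝ) := by
        rw [hX5, hmsq]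
        have := hdle v
        have := hdle w
        have := hdle w'
        have hv0 : (0:ℝ) ≤ (d v : ℝ) := Nat.cast_nonneg _
        have hw0 : (0:ℝ) ≤ (d w : ℝ) := Nat.cast_nonneg _
        have hw0' : (0:ℝ) ≤ (d w' : ℝ) := Nat.cast_nonneg _
        nlinarith [hs100]
      have hmain : ((2 * m - 5 : ℕ) : ℝ) * (8 * (bad1.card : ℝ))
          ≤ ((2 * m - 5 : ℕ) : ℝ) * ((mset (L2 q)).card : ℝ) := by
        have g1 : 8 * (((d v : ℝ) * ((d w : ℝ) + (d w' : ℝ))) * ((mset (L2 q)).card : ℝ))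
            ≤ ((2 * m - 5 : ℕ) : ℝ) * ((mset (L2 q)).card : ℝ) := by
          have := mul_le_mul_of_nonneg_right hnum1 hc2nn
          linarith
        linarith
      have := le_of_mul_le_mul_left hmain hX5pos
      linarith
    -- bounds on bad2, bad3
    have hd2m : ∀ u : Fin n, d u ≤ 2 * m := by
      intro u
      rw [← hsum]
      exact Finset.single_le_sum (fun _ _ => Nat.zero_le _) (Finset.mem_univ u)
    have hb2R : (bad2.card : ℝ) ≤ ((mset (L2 q)).card : ℝ) / 8 := by
      apply hbadgen q hq w q.2.1 h4 (hd2m w)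
      intro x hx
      have hxb : x ≠ q.2.1 := Finset.ne_of_mem_erase hx
      have hxw : x ∈ St w := Finset.mem_of_mem_erase hx
      rw [hptsL2]
      push_neg
      exact ⟨hStdisj hvw.symm hxw h1, hxb, hStdisj hvw.symm hxw h2, hStdisj hww' hxw h5⟩
    have hb3R : (bad3.card : ℝ) ≤ ((mset (L2 q)).card : ℝ) / 8 := by
      apply hbadgen q hq w' q.2.2 h5 (hd2m w')
      intro x hx
      have hxb : x ≠ q.2.2 := Finset.ne_of_mem_erase hx
      have hxw : x ∈ St w' := Finset.mem_of_mem_erase hx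
      rw [hptsL2]
      push_neg
      exact ⟨hStdisj hvw'.symm hxw h1, hStdisj hww'.symm hxw h4, hStdisj hvw'.symm hxw h2, hxb⟩
    have hsplitR : ((mset (L2 q)).card : ℝ)
        ≤ ((good q).card : ℝ) + (bad1.card : ℝ) + (bad2.card : ℝ) + (bad3.card : ℝ) := by
      exact_mod_cast hsplit
    have hgnn : (0 : ℝ) ≤ ((good q).card : ℝ) := Nat.cast_nonneg _
    linarith
  -- good matchings give both indicators
  have hgoodY : ∀ q ∈ Q, ∀ M ∈ good q, inBucket φ M v w ∧ inBucket φ M v w' := by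
    intro q hq M hM
    obtain ⟨h1, h2, h3, h4, h5⟩ := hQmem q hq
    rw [hgood, Finset.mem_filter] at hM
    obtain ⟨hML2, hP⟩ := hM
    rw [ECMaux.mem_mset] at hML2
    obtain ⟨hMm, hsat⟩ := hML2
    have hMa : M q.1.1 = q.2.1 := hsat (q.1.1, q.2.1) (by simp [hL2])
    have hMa' : M q.1.2 = q.2.2 := hsat (q.1.2, q.2.2) (by simp [hL2])
    have hdegv : ecmDeg φ M v ≤ d v := by
      have := ECMaux.ecmDeg_le_stubs φ hMm v
      rwa [hstub v] at this
    have hdegbig : ∀ (u : Fin n) (bb : Fin (2 * m)), bb ∈ St u → 10 * d v + 1 ≤ d u →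
        2 * Pw u bb M ≤ d u → d v < ecmDeg φ M u := by
      intro u bb hbb hdu hcoll
      set Sw := (St u).erase bb with hSw
      have hSwcard : Sw.card = d u - 1 := by
        rw [hSw, Finset.card_erase_of_mem hbb, hStcard]
      have c1 : Sw.card ≤ (Sw.image fun x => φ (M x)).card + Pw u bb M :=
        ECMaux.card_le_image_add_coll Sw (fun x => φ (M x))
      have c2 : (Sw.image fun x => φ (M x)).card ≤
          ((Sw.image fun x => φ (M x)) \ {u}).card + 1 := by
        have := Finset.card_le_card_sdiff_add_card (s := Sw.image fun x => φ (M x)) (t := {u})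
        simpa using this
      have c3 : ((Sw.image fun x => φ (M x)) \ {u}).card ≤ ecmDeg φ M u := by
        apply ECMaux.image_sdiff_le_ecmDeg φ hMm u
        intro x hx
        exact (hStmem u x).1 (Finset.mem_of_mem_erase hx)
      omega
    have hdegw : d v < ecmDeg φ M w := hdegbig w q.2.1 h4 hdw hP.2.1
    have hdegw' : d v < ecmDeg φ M w' := hdegbig w' q.2.2 h5 hdw' hP.2.2
    constructor
    · refine ⟨⟨hvw, q.1.1, (hStmem v _).1 h1, ?_⟩, Or.inl (lt_of_le_of_lt hdegv hdegw)⟩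
      rw [hMa]; exact (hStmem w _).1 h4
    · refine ⟨⟨hvw', q.1.2, (hStmem v _).1 h2, ?_⟩, Or.inl (lt_of_le_of_lt hdegv hdegw')⟩
      rw [hMa']; exact (hStmem w' _).1 h5
  -- disjointness
  have hdisjQ : ∀ q₁ ∈ Q, ∀ q₂ ∈ Q, q₁ ≠ q₂ → Disjoint (good q₁) (good q₂) := by
    intro q₁ hq₁ q₂ hq₂ hne
    rw [Finset.disjoint_left]
    intro M hM1 hM2
    apply hne
    obtain ⟨h1, h2, h3, h4, h5⟩ := hQmem q₁ hq₁
    obtain ⟨g1, g2, g3, g4, g5⟩ := hQmem q₂ hq₂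
    rw [hgood, Finset.mem_filter] at hM1 hM2
    obtain ⟨hML1, hP1⟩ := hM1
    obtain ⟨hML2, hP2⟩ := hM2
    rw [ECMaux.mem_mset] at hML1 hML2
    have hMa : M q₁.1.1 = q₁.2.1 := hML1.2 (q₁.1.1, q₁.2.1) (by simp [hL2])
    have hMa' : M q₁.1.2 = q₁.2.2 := hML1.2 (q₁.1.2, q₁.2.2) (by simp [hL2])
    have hMc : M q₂.1.1 = q₂.2.1 := hML2.2 (q₂.1.1, q₂.2.1) (by simp [hL2])
    have hMc' : M q₂.1.2 = q₂.2.2 := hML2.2 (q₂.1.2, q₂.2.2) (by simp [hL2])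
    have hPq1 := hP1.1
    have hfw : φ (M q₂.1.1) = w := by rw [hMc]; exact (hStmem w _).1 g4
    have hfw' : φ (M q₂.1.2) = w' := by rw [hMc']; exact (hStmem w' _).1 g5
    have e1 : q₂.1.1 = q₁.1.1 := by
      by_contra hc1
      by_cases hc2 : q₂.1.1 = q₁.1.2
      · rw [hc2, hMa'] at hfw
        exact hww' (((hStmem w' _).1 h5).symm.trans hfw).symm
      · exact (hPq1 q₂.1.1 g1 hc1 hc2).1 hfw
    have e2 : q₂.1.2 = q₁.1.2 := by
      by_contra hc1
      by_cases hc2 : q₂.1.2 = q₁.1.1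
      · rw [hc2, hMa] at hfw'
        exact hww' (((hStmem w _).1 h4).symm.trans hfw')
      · exact (hPq1 q₂.1.2 g2 hc2 hc1).2 hfw'
    have e3 : q₂.2.1 = q₁.2.1 := by rw [← hMc, e1, hMa]
    have e4 : q₂.2.2 = q₁.2.2 := by rw [← hMc', e2, hMa']
    ext <;> simp [e1, e2, e3, e4]
  -- final assembly
  set G := Q.biUnion good with hGdef
  have hGsub : G ⊆ matchings (2 * m) := by
    intro M hM
    rw [hGdef, Finset.mem_biUnion] at hM
    obtain ⟨q, hq, hMq⟩ := hM
    exact (ECMaux.mem_mset.1 (Finset.mem_filter.1 hMq).1).1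
  have hGcard : G.card = ∑ q ∈ Q, (good q).card := Finset.card_biUnion hdisjQ
  have hYone : ∀ M ∈ G, ecmY φ M v w * ecmY φ M v w' = 1 := by
    intro M hM
    rw [hGdef, Finset.mem_biUnion] at hM
    obtain ⟨q, hq, hMq⟩ := hM
    obtain ⟨hb1, hb2⟩ := hgoodY q hq M hMq
    rw [ecmY, ecmY, if_pos hb1, if_pos hb2, mul_one]
  have hYnn : ∀ M, 0 ≤ ecmY φ M v w * ecmY φ M v w' := by
    intro M
    rw [ecmY, ecmY]
    split <;> split <;> norm_num
  have hSum : ((G.card : ℕ) : ℝ) ≤ ∑ M ∈ matchings (2 * m), ecmY φ M v w * ecmY φ M v w' := by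
    have e1 : ∑ M ∈ G, ecmY φ M v w * ecmY φ M v w' = ((G.card : ℕ) : ℝ) := by
      rw [Finset.sum_congr rfl hYone, Finset.sum_const]; simp
    rw [← e1]
    exact Finset.sum_le_sum_of_subset_of_nonneg hGsub (fun M _ _ => hYnn M)
  set Tr : ℝ := ((matchings (2 * m)).card : ℝ) with hTrdef
  have hTrpos : 0 < Tr := by rw [hTrdef]; exact_mod_cast hTpos
  set Ar : ℝ := ((2 * m - 1 : ℕ) : ℝ) with hArdef
  set Br : ℝ := ((2 * m - 3 : ℕ) : ℝ) with hBrdef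
  have hArval : Ar = 2 * (m : ℝ) - 1 := by
    rw [hArdef, Nat.cast_sub (by omega)]; push_cast; ring
  have hBrval : Br = 2 * (m : ℝ) - 3 := by
    rw [hBrdef, Nat.cast_sub (by omega)]; push_cast; ring
  have hqreal : ∀ q ∈ Q, Tr ≤ 2 * (Ar * Br) * ((good q).card : ℝ) := by
    intro q hq
    have h1 : Tr = Ar * (Br * ((mset (L2 q)).card : ℝ)) := by
      rw [hTrdef, hArdef, hBrdef, hTc2 q hq]; push_cast; ring
    have h2 := hgoodlb q hq
    have hArpos : (0:ℝ) ≤ Ar := by rw [hArval]; linarith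
    have hBrpos : (0:ℝ) ≤ Br := by rw [hBrval]; linarith
    calc Tr = Ar * (Br * ((mset (L2 q)).card : ℝ)) := h1
      _ ≤ Ar * (Br * (2 * ((good q).card : ℝ))) := by
          apply mul_le_mul_of_nonneg_left _ hArpos
          apply mul_le_mul_of_nonneg_left h2 hBrpos
      _ = 2 * (Ar * Br) * ((good q).card : ℝ) := by ring
  have hTQG : Tr * (Q.card : ℝ) ≤ 2 * (Ar * Br) * ((G.card : ℕ) : ℝ) := by
    have h1 : ∑ q ∈ Q, Tr ≤ ∑ q ∈ Q, 2 * (Ar * Br) * ((good q).card : ℝ) :=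
      Finset.sum_le_sum hqreal
    rw [Finset.sum_const, nsmul_eq_mul] at h1
    have h2 : ∑ q ∈ Q, 2 * (Ar * Br) * ((good q).card : ℝ)
        = 2 * (Ar * Br) * ((G.card : ℕ) : ℝ) := by
      rw [← Finset.mul_sum, hGcard]
      push_cast
      ring
    rw [h2] at h1
    linarith [h1]
  have hQcard : ((Q.card : ℕ) : ℝ) = ((d v : ℝ) * (d v : ℝ) - (d v : ℝ)) * ((d w : ℝ) * (d w' : ℝ)) := by
    have h1 : Q.card = (d v * d v - d v) * (d w * d w') := by
      rw [hQdef, Finset.card_product, Finset.card_product, Finset.offDiag_card,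
        hStcard, hStcard, hStcard]
    rw [h1]
    have h2 : d v ≤ d v * d v := Nat.le_mul_of_pos_left _ (by omega)
    push_cast [Nat.cast_sub h2]
    ring
  rw [ecmExp, le_div_iff₀ hTrpos]
  have hfinal : 1 / 16 * (d v : ℝ) ^ 2 * (d w : ℝ) * (d w' : ℝ) / (m : ℝ) ^ 2 * Tr
      ≤ ((G.card : ℕ) : ℝ) := by
    rw [div_mul_eq_mul_div, div_le_iff₀ (by positivity : (0:ℝ) < (m : ℝ) ^ 2)]
    have hDv : (4 : ℝ) ≤ (d v : ℝ) := by exact_mod_cast hdv4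
    have hEw : (0 : ℝ) ≤ (d w : ℝ) := Nat.cast_nonneg _
    have hEw' : (0 : ℝ) ≤ (d w' : ℝ) := Nat.cast_nonneg _
    have hGnn : (0 : ℝ) ≤ ((G.card : ℕ) : ℝ) := Nat.cast_nonneg _
    have hAB : Ar * Br ≤ 4 * (m : ℝ) ^ 2 := by
      rw [hArval, hBrval]; nlinarith
    have step2 : Tr * (Q.card : ℝ) ≤ 8 * (m : ℝ) ^ 2 * ((G.card : ℕ) : ℝ) := by
      calc Tr * (Q.card : ℝ) ≤ 2 * (Ar * Br) * ((G.card : ℕ) : ℝ) := hTQG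
        _ ≤ 2 * (4 * (m : ℝ) ^ 2) * ((G.card : ℕ) : ℝ) := by
            apply mul_le_mul_of_nonneg_right _ hGnn
            linarith
        _ = 8 * (m : ℝ) ^ 2 * ((G.card : ℕ) : ℝ) := by ring
    have hQlb : Tr * ((d v : ℝ) ^ 2 / 2 * ((d w : ℝ) * (d w' : ℝ))) ≤ Tr * (Q.card : ℝ) := by
      apply mul_le_mul_of_nonneg_left _ hTrpos.le
      rw [hQcard]
      have : (d v : ℝ) ^ 2 / 2 ≤ (d v : ℝ) * (d v : ℝ) - (d v : ℝ) := by nlinarith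
      nlinarith
    nlinarith [step2, hQlb]
  calc 1 / 16 * (d v : ℝ) ^ 2 * (d w : ℝ) * (d w' : ℝ) / (m : ℝ) ^ 2 * Tr
      ≤ ((G.card : ℕ) : ℝ) := hfinal
    _ ≤ ∑ M ∈ matchings (2 * m), ecmY φ M v w * ecmY φ M v w' := hSum
end
end

section
/- There is an absolute constant C such that the following holds. Let d = (d_1,…,d_n) be a degree sequence of positive integers with m = (∑_v d_v)/2 and max_v d_v < √m / 2, and let G be drawn from the Chung–Lu model G(d) with MinBucket buckets formed. Then the expected number of paths of length 2 enumerated by MinBucket, E[∑_v X_v(X_v − 1)], is at most C·(n + m^{−2}·(∑_v d_v^{4/3})^3). -/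
open Finset

noncomputable section
attribute [local instance] Classical.propDecidable

/-- Index type of unordered pairs of distinct vertices, represented by ordered pairs. -/
abbrev EdgeIdx (n : ℕ) := {e : Fin n × Fin n // e.1 < e.2}

/-- The Chung–Lu probability of a particular outcome `ω : EdgeIdx n → Bool` (which pairs
are edges): each pair `{u,v}` is independently an edge with probability `d_u d_v / (2m)`
where `2m = ∑ d_v`. -/
def clPr {n : ℕ} (d : Fin n → ℕ) (ω : EdgeIdx n → Bool) : ℝ :=
  ∏ e : EdgeIdx n,
    if ω e then (d e.1.1 : ℝ) * (d e.1.2 : ℝ) / (∑ v, (d v : ℝ))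
    else 1 - (d e.1.1 : ℝ) * (d e.1.2 : ℝ) / (∑ v, (d v : ℝ))

/-- Expectation over the Chung–Lu random graph. -/
def clExp {n : ℕ} (d : Fin n → ℕ) (g : (EdgeIdx n → Bool) → ℝ) : ℝ :=
  ∑ ω : EdgeIdx n → Bool, clPr d ω * g ω

/-- Probability of an event over the Chung–Lu random graph. -/
def clProb {n : ℕ} (d : Fin n → ℕ) (A : (EdgeIdx n → Bool) → Prop) : ℝ :=
  ∑ ω ∈ Finset.univ.filter A, clPr d ω

/-- Conditional probability `P[A | E]` over the Chung–Lu random graph. -/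
def clCondProb {n : ℕ} (d : Fin n → ℕ) (A E : (EdgeIdx n → Bool) → Prop) : ℝ :=
  clProb d (fun ω => A ω ∧ E ω) / clProb d E

/-- Adjacency of `u` and `v` in the outcome `ω`. -/
def clAdj {n : ℕ} (ω : EdgeIdx n → Bool) (u v : Fin n) : Prop :=
  ∃ e : EdgeIdx n, ω e = true ∧ ((e.1.1 = u ∧ e.1.2 = v) ∨ (e.1.1 = v ∧ e.1.2 = u))

/-- The degree `D_v` of `v` in the outcome `ω`. -/
def clDeg {n : ℕ} (ω : EdgeIdx n → Bool) (v : Fin n) : ℕ :=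
  (Finset.univ.filter fun u => clAdj ω u v).card

/-- The edge `(v,w)` is present and lies in `v`'s bucket:
`(D_v, v) ≤ (D_w, w)` lexicographically. -/
def clInBucket {n : ℕ} (ω : EdgeIdx n → Bool) (v w : Fin n) : Prop :=
  clAdj ω v w ∧ (clDeg ω v < clDeg ω w ∨ (clDeg ω v = clDeg ω w ∧ v ≤ w))

/-- Indicator `Y_{v,w}` that the edge `(v,w)` is present and in `v`'s bucket. -/
def clY {n : ℕ} (ω : EdgeIdx n → Bool) (v w : Fin n) : ℝ :=
  if clInBucket ω v w then 1 else 0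

/-- `X_v`, the number of edges in `v`'s bucket. -/
def clX {n : ℕ} (ω : EdgeIdx n → Bool) (v : Fin n) : ℝ :=
  ∑ w, clY ω v w

namespace CLaux

variable {n : ℕ}

/-- symmetric pair probability -/
def pv (d : Fin n → ℕ) (a b : Fin n) : ℝ := (d a : ℝ) * (d b : ℝ) / (∑ v, (d v : ℝ))

lemma pv_comm (d : Fin n → ℕ) (a b : Fin n) : pv d a b = pv d b a := by
  unfold pv; ring

def W (d : Fin n → ℕ) (e : EdgeIdx n) (b : Bool) : ℝ :=
  if b then pv d e.1.1 e.1.2 else 1 - pv d e.1.1 e.1.2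

lemma clPr_eq (d : Fin n → ℕ) (ω : EdgeIdx n → Bool) : clPr d ω = ∏ e, W d e (ω e) :=
  Finset.prod_congr rfl fun e _ => by by_cases h : ω e <;> simp [h, W, pv]

lemma sum_prod_bool (ι : Type) [Fintype ι] [DecidableEq ι] (h : ι → Bool → ℝ) :
    ∑ ω : ι → Bool, ∏ i, h i (ω i) = ∏ i, (h i true + h i false) := by
  rw [← Fintype.piFinset_univ, ← Finset.prod_univ_sum]
  simp [Fintype.sum_bool]

lemma clExp_prod (d : Fin n → ℕ) (F : Finset (EdgeIdx n)) (g : EdgeIdx n → Bool → ℝ) :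
    clExp d (fun ω => ∏ e ∈ F, g e (ω e)) =
      ∏ e ∈ F, (pv d e.1.1 e.1.2 * g e true + (1 - pv d e.1.1 e.1.2) * g e false) := by
  unfold clExp
  have key : ∀ ω : EdgeIdx n → Bool, clPr d ω * ∏ e ∈ F, g e (ω e)
      = ∏ e, (W d e (ω e) * if e ∈ F then g e (ω e) else 1) := by
    intro ω
    rw [Finset.prod_mul_distrib, ← clPr_eq]
    congr 1
    rw [Finset.prod_ite_mem, Finset.univ_inter]
  simp_rw [key]
  rw [sum_prod_bool (EdgeIdx n) (fun e b => W d e b * if e ∈ F then g e b else 1)]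
  have : ∀ e : EdgeIdx n, (W d e true * if e ∈ F then g e true else 1)
      + (W d e false * if e ∈ F then g e false else 1)
      = if e ∈ F then pv d e.1.1 e.1.2 * g e true + (1 - pv d e.1.1 e.1.2) * g e false else 1 := by
    intro e
    by_cases he : e ∈ F <;> simp [he, W] <;> ring
  simp_rw [this]
  rw [Finset.prod_ite_mem, Finset.univ_inter]

lemma clExp_one (d : Fin n → ℕ) : clExp d (fun _ => 1) = 1 := by
  have := clExp_prod d ∅ (fun _ _ => 1)
  simpa using this

lemma clPr_nonneg (d : Fin n → ℕ) (hple : ∀ a b : Fin n, pv d a b ≤ 1)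
    (hp0 : ∀ a b : Fin n, 0 ≤ pv d a b) (ω : EdgeIdx n → Bool) : 0 ≤ clPr d ω := by
  rw [clPr_eq]
  refine Finset.prod_nonneg fun e _ => ?_
  by_cases h : ω e <;> simp [h, W]
  · exact hp0 _ _
  · exact hple _ _

lemma clExp_mono (d : Fin n → ℕ) (hple : ∀ a b : Fin n, pv d a b ≤ 1)
    (hp0 : ∀ a b : Fin n, 0 ≤ pv d a b) (f g : (EdgeIdx n → Bool) → ℝ)
    (h : ∀ ω, f ω ≤ g ω) : clExp d f ≤ clExp d g :=
  Finset.sum_le_sum fun ω _ => mul_le_mul_of_nonneg_left (h ω) (clPr_nonneg d hple hp0 ω)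

lemma clExp_sum (d : Fin n → ℕ) {ι : Type*} (s : Finset ι) (f : ι → (EdgeIdx n → Bool) → ℝ) :
    clExp d (fun ω => ∑ i ∈ s, f i ω) = ∑ i ∈ s, clExp d (f i) := by
  unfold clExp
  rw [Finset.sum_comm]
  congr 1; ext ω
  rw [Finset.mul_sum]

def mkE (a b : Fin n) (h : a ≠ b) : EdgeIdx n :=
  if hab : a < b then ⟨(a, b), hab⟩ else ⟨(b, a), h.lt_or_gt.resolve_left hab⟩

lemma mkE_ends (a b : Fin n) (h : a ≠ b) :
    (mkE a b h).1 = (a, b) ∨ (mkE a b h).1 = (b, a) := by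
  unfold mkE; split_ifs <;> simp

lemma mkE_inj {a b c e : Fin n} {h1 : a ≠ b} {h2 : c ≠ e} (heq : mkE a b h1 = mkE c e h2) :
    (a = c ∧ b = e) ∨ (a = e ∧ b = c) := by
  unfold mkE at heq
  split_ifs at heq <;> simp [Subtype.ext_iff, Prod.ext_iff] at heq <;> tauto

lemma pv_mkE (d : Fin n → ℕ) (a b : Fin n) (h : a ≠ b) :
    pv d (mkE a b h).1.1 (mkE a b h).1.2 = pv d a b := by
  rcases mkE_ends a b h with h' | h'
  · rw [h']
  · rw [h']; exact pv_comm d b a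

lemma adj_iff (ω : EdgeIdx n → Bool) {a b : Fin n} (h : a ≠ b) :
    clAdj ω a b ↔ ω (mkE a b h) = true := by
  constructor
  · rintro ⟨⟨⟨x, y⟩, hxy⟩, hω, (⟨rfl, rfl⟩ | ⟨rfl, rfl⟩)⟩ <;>
      first
        | simpa [mkE, hxy] using hω
        | simpa [mkE, asymm hxy] using hω
  · intro hω
    refine ⟨mkE a b h, hω, ?_⟩
    rcases mkE_ends a b h with h' | h' <;> simp [h']

lemma adj_symm (ω : EdgeIdx n → Bool) {a b : Fin n} (h : clAdj ω a b) : clAdj ω b a := by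
  obtain ⟨e, h1, h2⟩ := h; exact ⟨e, h1, h2.symm⟩

lemma adj_ne (ω : EdgeIdx n → Bool) {a b : Fin n} (h : clAdj ω a b) : a ≠ b := by
  rintro rfl
  obtain ⟨⟨⟨x, y⟩, hxy⟩, _, (⟨hx, hy⟩ | ⟨hx, hy⟩)⟩ := h <;> simp only at hx hy <;>
    subst hx <;> subst hy <;> exact lt_irrefl _ hxy

lemma deg_ge (ω : EdgeIdx n → Bool) (v w w' : Fin n) (hvw : v ≠ w) (hvw' : v ≠ w')
    (hww' : w ≠ w') (hadj1 : clAdj ω v w) (hadj2 : clAdj ω v w') :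
    2 + ((univ \ {v, w, w'}).filter fun u => clAdj ω v u).card ≤ clDeg ω v := by
  classical
  set R := (univ \ ({v, w, w'} : Finset (Fin n))) with hR
  have hsub : insert w (insert w' (R.filter fun u => clAdj ω v u))
      ⊆ univ.filter fun u => clAdj ω u v := by
    intro u hu
    simp only [mem_insert, mem_filter, hR, mem_sdiff, mem_univ, true_and] at hu ⊢
    rcases hu with rfl | rfl | ⟨_, hadj⟩
    · exact adj_symm ω hadj1
    · exact adj_symm ω hadj2
    · exact adj_symm ω hadj
  have hcard := Finset.card_le_card hsub
  rw [Finset.card_insert_of_notMem, Finset.card_insert_of_notMem] at hcard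
  · exact by unfold clDeg; omega
  · simp [hR]
  · simp [hR, hww']

lemma deg_le (ω : EdgeIdx n → Bool) (v w w' : Fin n) (hvw : v ≠ w) (hvw' : v ≠ w')
    (hww' : w ≠ w') :
    clDeg ω w ≤ 2 + ((univ \ {v, w, w'}).filter fun u => clAdj ω w u).card := by
  classical
  set R := (univ \ ({v, w, w'} : Finset (Fin n))) with hR
  have hsub : (univ.filter fun u => clAdj ω u w)
      ⊆ insert v (insert w' (R.filter fun u => clAdj ω w u)) := by
    intro u hu
    simp only [mem_filter, mem_univ, true_and] at hu
    simp only [mem_insert, mem_filter, hR, mem_sdiff, mem_univ, true_and]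
    by_cases h1 : u = v
    · exact Or.inl h1
    by_cases h2 : u = w'
    · exact Or.inr (Or.inl h2)
    · refine Or.inr (Or.inr ⟨?_, adj_symm ω hu⟩)
      simp [h1, h2, adj_ne ω hu]
  have := Finset.card_le_card hsub
  have h1 := Finset.card_insert_le v (insert w' (R.filter fun u => clAdj ω w u))
  have h2 := Finset.card_insert_le w' (R.filter fun u => clAdj ω w u)
  unfold clDeg; omega

/-- Total helper building the edge `{x,u}` with junk value when `x = u`. -/
def jaux (v w : Fin n) (hvw : v ≠ w) (x : Fin n) (u : Fin n) : EdgeIdx n :=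
  if h : x = u then mkE v w hvw else mkE x u h

lemma jaux_eq (v w : Fin n) (hvw : v ≠ w) (x u : Fin n) (h : x ≠ u) :
    jaux v w hvw x u = mkE x u h := dif_neg h

set_option maxHeartbeats 1000000 in
lemma pair_bound_light (d : Fin n → ℕ)
    (hple : ∀ a b : Fin n, pv d a b ≤ 1) (hp0 : ∀ a b : Fin n, 0 ≤ pv d a b)
    (v w w' : Fin n) (hvw : v ≠ w) (hvw' : v ≠ w') (hww' : w ≠ w') :
    clExp d (fun ω => clY ω v w * clY ω v w') ≤
      pv d v w * pv d v w' *
        Real.exp ((Real.exp (1/20) - 1) * (∑ u ∈ univ \ {v, w, w'}, pv d w u)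
          + (Real.exp (-(1/20)) - 1) * (∑ u ∈ univ \ {v, w, w'}, pv d v u)) := by
  classical
  set L : ℝ := 1/20 with hLdef
  have hL : (0:ℝ) ≤ L := by norm_num [hLdef]
  set R := (univ \ ({v, w, w'} : Finset (Fin n))) with hR
  have hmemR : ∀ u ∈ R, u ≠ v ∧ u ≠ w ∧ u ≠ w' := by
    intro u hu
    simp only [hR, mem_sdiff, mem_univ, true_and, mem_insert, not_or, mem_singleton] at hu
    exact hu
  set jw : Fin n → EdgeIdx n := jaux v w hvw w with hjwdef
  set jv : Fin n → EdgeIdx n := jaux v w hvw v with hjvdef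
  have hjw : ∀ u, w ≠ u → ∀ (h : w ≠ u), jw u = mkE w u h := fun u _ h => jaux_eq v w hvw w u h
  have hjv : ∀ u, v ≠ u → ∀ (h : v ≠ u), jv u = mkE v u h := fun u _ h => jaux_eq v w hvw v u h
  set e₁ : EdgeIdx n := mkE v w hvw with he₁def
  set e₂ : EdgeIdx n := mkE v w' hvw' with he₂def
  set A : Finset (EdgeIdx n) := R.image jw with hAdef
  set B : Finset (EdgeIdx n) := R.image jv with hBdef
  set F : Finset (EdgeIdx n) := insert e₁ (insert e₂ (A ∪ B)) with hFdef
  -- disequalities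
  have hne_e₁A : ∀ u ∈ R, jw u ≠ e₁ := by
    intro u hu heq
    obtain ⟨h1, h2, h3⟩ := hmemR u hu
    rw [hjw u (fun he => h2 he.symm) (fun he => h2 he.symm), he₁def] at heq
    rcases mkE_inj heq with ⟨ha, hb⟩ | ⟨ha, hb⟩
    · exact hvw ha.symm
    · exact h1 hb
  have hne_e₂A : ∀ u ∈ R, jw u ≠ e₂ := by
    intro u hu heq
    obtain ⟨h1, h2, h3⟩ := hmemR u hu
    rw [hjw u (fun he => h2 he.symm) (fun he => h2 he.symm), he₂def] at heq
    rcases mkE_inj heq with ⟨ha, hb⟩ | ⟨ha, hb⟩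
    · exact hvw ha.symm
    · exact h1 hb
  have hne_e₁B : ∀ u ∈ R, jv u ≠ e₁ := by
    intro u hu heq
    obtain ⟨h1, h2, h3⟩ := hmemR u hu
    rw [hjv u (fun he => h1 he.symm) (fun he => h1 he.symm), he₁def] at heq
    rcases mkE_inj heq with ⟨ha, hb⟩ | ⟨ha, hb⟩
    · exact h2 hb
    · exact hvw ha
  have hne_e₂B : ∀ u ∈ R, jv u ≠ e₂ := by
    intro u hu heq
    obtain ⟨h1, h2, h3⟩ := hmemR u hu
    rw [hjv u (fun he => h1 he.symm) (fun he => h1 he.symm), he₂def] at heq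
    rcases mkE_inj heq with ⟨ha, hb⟩ | ⟨ha, hb⟩
    · exact h3 hb
    · exact hvw' ha
  have hne_AB : ∀ u ∈ R, ∀ u' ∈ R, jw u ≠ jv u' := by
    intro u hu u' hu' heq
    obtain ⟨h1, h2, h3⟩ := hmemR u hu
    obtain ⟨h1', h2', h3'⟩ := hmemR u' hu'
    rw [hjw u (fun he => h2 he.symm) (fun he => h2 he.symm),
       hjv u' (fun he => h1' he.symm) (fun he => h1' he.symm)] at heq
    rcases mkE_inj heq with ⟨ha, hb⟩ | ⟨ha, hb⟩
    · exact hvw ha.symm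
    · exact h1 hb
  have he₁₂ : e₁ ≠ e₂ := by
    intro heq
    rw [he₁def, he₂def] at heq
    rcases mkE_inj heq with ⟨ha, hb⟩ | ⟨ha, hb⟩
    · exact hww' hb
    · exact hvw hb.symm
  have hinjw : ∀ u ∈ R, ∀ u' ∈ R, jw u = jw u' → u = u' := by
    intro u hu u' hu' heq
    obtain ⟨h1, h2, h3⟩ := hmemR u hu
    obtain ⟨h1', h2', h3'⟩ := hmemR u' hu'
    rw [hjw u (fun he => h2 he.symm) (fun he => h2 he.symm),
       hjw u' (fun he => h2' he.symm) (fun he => h2' he.symm)] at heq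
    rcases mkE_inj heq with ⟨ha, hb⟩ | ⟨ha, hb⟩
    · exact hb
    · exact absurd hb h2
  have hinjv : ∀ u ∈ R, ∀ u' ∈ R, jv u = jv u' → u = u' := by
    intro u hu u' hu' heq
    obtain ⟨h1, h2, h3⟩ := hmemR u hu
    obtain ⟨h1', h2', h3'⟩ := hmemR u' hu'
    rw [hjv u (fun he => h1 he.symm) (fun he => h1 he.symm),
       hjv u' (fun he => h1' he.symm) (fun he => h1' he.symm)] at heq
    rcases mkE_inj heq with ⟨ha, hb⟩ | ⟨ha, hb⟩
    · exact hb
    · exact absurd hb h1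
  have hdisjAB : Disjoint A B := by
    rw [Finset.disjoint_left]
    intro e heA heB
    obtain ⟨u, hu, rfl⟩ := Finset.mem_image.1 heA
    obtain ⟨u', hu', heq⟩ := Finset.mem_image.1 heB
    exact hne_AB u hu u' hu' heq.symm
  have he₁AB : e₁ ∉ A ∪ B := by
    rw [Finset.mem_union]
    rintro (h | h)
    · obtain ⟨u, hu, heq⟩ := Finset.mem_image.1 h
      exact hne_e₁A u hu heq
    · obtain ⟨u, hu, heq⟩ := Finset.mem_image.1 h
      exact hne_e₁B u hu heq
  have he₂AB : e₂ ∉ A ∪ B := by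
    rw [Finset.mem_union]
    rintro (h | h)
    · obtain ⟨u, hu, heq⟩ := Finset.mem_image.1 h
      exact hne_e₂A u hu heq
    · obtain ⟨u, hu, heq⟩ := Finset.mem_image.1 h
      exact hne_e₂B u hu heq
  have he₁F : e₁ ∉ insert e₂ (A ∪ B) := by
    rw [Finset.mem_insert]
    rintro (h | h)
    · exact he₁₂ h
    · exact he₁AB h
  -- generic product-over-F decomposition
  have hprodF : ∀ (f : EdgeIdx n → ℝ), ∏ e ∈ F, f e
      = f e₁ * (f e₂ * ((∏ u ∈ R, f (jw u)) * (∏ u ∈ R, f (jv u)))) := by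
    intro f
    rw [hFdef, Finset.prod_insert he₁F, Finset.prod_insert he₂AB,
      Finset.prod_union hdisjAB, hAdef, hBdef,
      Finset.prod_image hinjw, Finset.prod_image hinjv]
  -- the dominating single-coordinate factors
  set g : EdgeIdx n → Bool → ℝ := fun e b =>
    if e = e₁ ∨ e = e₂ then (if b then 1 else 0)
    else if e.1.1 = w ∨ e.1.2 = w then Real.exp (L * (if b then 1 else 0))
    else Real.exp (-L * (if b then 1 else 0)) with hgdef
  have hg_e₁ : ∀ b, g e₁ b = (if b then 1 else 0) := by
    intro b; simp [hgdef]
  have hg_e₂ : ∀ b, g e₂ b = (if b then 1 else 0) := by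
    intro b; simp [hgdef]
  have hg_A : ∀ u ∈ R, ∀ b, g (jw u) b = Real.exp (L * (if b then 1 else 0)) := by
    intro u hu b
    obtain ⟨h1, h2, h3⟩ := hmemR u hu
    have hc1 : ¬ (jw u = e₁ ∨ jw u = e₂) := by
      rintro (h | h)
      · exact hne_e₁A u hu h
      · exact hne_e₂A u hu h
    have hc2 : (jw u).1.1 = w ∨ (jw u).1.2 = w := by
      rw [hjw u (fun he => h2 he.symm) (fun he => h2 he.symm)]
      rcases mkE_ends w u (fun he => h2 he.symm) with h' | h' <;> rw [h']
      · left; rfl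
      · right; rfl
    simp [hgdef, hc1, hc2]
  have hg_B : ∀ u ∈ R, ∀ b, g (jv u) b = Real.exp (-L * (if b then 1 else 0)) := by
    intro u hu b
    obtain ⟨h1, h2, h3⟩ := hmemR u hu
    have hc1 : ¬ (jv u = e₁ ∨ jv u = e₂) := by
      rintro (h | h)
      · exact hne_e₁B u hu h
      · exact hne_e₂B u hu h
    have hc2 : ¬ ((jv u).1.1 = w ∨ (jv u).1.2 = w) := by
      rw [hjv u (fun he => h1 he.symm) (fun he => h1 he.symm)]
      rcases mkE_ends v u (fun he => h1 he.symm) with h' | h' <;> rw [h']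
      · rintro (h | h)
        · exact hvw h
        · exact h2 h
      · rintro (h | h)
        · exact h2 h
        · exact hvw h
    simp only [hgdef, hc1, hc2, if_false, if_neg hc1, if_neg hc2]
  -- pointwise domination
  have hpoint : ∀ ω, clY ω v w * clY ω v w' ≤ ∏ e ∈ F, g e (ω e) := by
    intro ω
    have hsplit : ∏ e ∈ F, g e (ω e)
        = (if ω e₁ then (1:ℝ) else 0) * ((if ω e₂ then (1:ℝ) else 0) *
          (Real.exp (L * ∑ u ∈ R, (if ω (jw u) then (1:ℝ) else 0)) *
           Real.exp (-L * ∑ u ∈ R, (if ω (jv u) then (1:ℝ) else 0)))) := by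
      rw [hprodF (fun e => g e (ω e))]
      rw [hg_e₁, hg_e₂]
      congr 1
      congr 1
      congr 1
      · rw [Finset.mul_sum, Real.exp_sum]
        exact Finset.prod_congr rfl fun u hu => hg_A u hu (ω (jw u))
      · rw [Finset.mul_sum, Real.exp_sum]
        exact Finset.prod_congr rfl fun u hu => hg_B u hu (ω (jv u))
    rw [hsplit]
    by_cases hb : clInBucket ω v w ∧ clInBucket ω v w'
    · obtain ⟨hb1, hb2⟩ := hb
      have h1 : ω e₁ = true := (adj_iff ω hvw).1 hb1.1
      have h2 : ω e₂ = true := (adj_iff ω hvw').1 hb2.1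
      have hYY : clY ω v w * clY ω v w' = 1 := by
        unfold clY; rw [if_pos hb1, if_pos hb2]; norm_num
      have hsums : (∑ u ∈ R, (if ω (jv u) then (1:ℝ) else 0))
          ≤ ∑ u ∈ R, (if ω (jw u) then (1:ℝ) else 0) := by
        have ev : ∀ u ∈ R, (if ω (jv u) then (1:ℝ) else 0) = if clAdj ω v u then 1 else 0 := by
          intro u hu
          obtain ⟨h1', h2', h3'⟩ := hmemR u hu
          rw [hjv u (fun he => h1' he.symm) (fun he => h1' he.symm)]
          by_cases ha : clAdj ω v u
          · rw [if_pos ((adj_iff ω (fun he => h1' he.symm)).1 ha), if_pos ha]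
          · rw [if_neg (fun hh => ha ((adj_iff ω (fun he => h1' he.symm)).2 hh)), if_neg ha]
        have ew : ∀ u ∈ R, (if ω (jw u) then (1:ℝ) else 0) = if clAdj ω w u then 1 else 0 := by
          intro u hu
          obtain ⟨h1', h2', h3'⟩ := hmemR u hu
          rw [hjw u (fun he => h2' he.symm) (fun he => h2' he.symm)]
          by_cases ha : clAdj ω w u
          · rw [if_pos ((adj_iff ω (fun he => h2' he.symm)).1 ha), if_pos ha]
          · rw [if_neg (fun hh => ha ((adj_iff ω (fun he => h2' he.symm)).2 hh)), if_neg ha]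
        rw [Finset.sum_congr rfl ev, Finset.sum_congr rfl ew, Finset.sum_boole, Finset.sum_boole]
        have hdvw : clDeg ω v ≤ clDeg ω w := by
          rcases hb1.2 with h | ⟨h, _⟩
          · exact le_of_lt h
          · exact le_of_eq h
        have hge := deg_ge ω v w w' hvw hvw' hww' hb1.1 hb2.1
        have hle := deg_le ω v w w' hvw hvw' hww'
        rw [← hR] at hge hle
        have : (R.filter fun u => clAdj ω v u).card ≤ (R.filter fun u => clAdj ω w u).card := by
          omega
        exact_mod_cast this
      have hge0 : (0:ℝ) ≤ L * ∑ u ∈ R, (if ω (jw u) then (1:ℝ) else 0)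
          + -L * ∑ u ∈ R, (if ω (jv u) then (1:ℝ) else 0) := by nlinarith
      have hone := Real.one_le_exp hge0
      have hI1 : (if ω e₁ then (1:ℝ) else 0) = 1 := by rw [h1]; exact if_pos rfl
      have hI2 : (if ω e₂ then (1:ℝ) else 0) = 1 := by rw [h2]; exact if_pos rfl
      rw [hYY, hI1, hI2, ← Real.exp_add, one_mul, one_mul]
      exact hone
    · have hYY : clY ω v w * clY ω v w' = 0 := by
        rcases not_and_or.1 hb with hx | hx
        · unfold clY; rw [if_neg hx, zero_mul]
        · unfold clY; rw [if_neg hx, mul_zero]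
      rw [hYY]
      apply mul_nonneg
      · split_ifs <;> norm_num
      apply mul_nonneg
      · split_ifs <;> norm_num
      exact mul_nonneg (Real.exp_nonneg _) (Real.exp_nonneg _)
  -- take expectations
  have hexp : clExp d (fun ω => clY ω v w * clY ω v w')
      ≤ clExp d (fun ω => ∏ e ∈ F, g e (ω e)) :=
    clExp_mono d hple hp0 _ _ hpoint
  rw [clExp_prod d F g] at hexp
  rw [hprodF (fun e => pv d e.1.1 e.1.2 * g e true + (1 - pv d e.1.1 e.1.2) * g e false)]
    at hexp
  -- evaluate the four groups
  have hv1 : pv d e₁.1.1 e₁.1.2 * g e₁ true + (1 - pv d e₁.1.1 e₁.1.2) * g e₁ false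
      = pv d v w := by
    rw [hg_e₁, hg_e₁, he₁def, pv_mkE]; norm_num
  have hv2 : pv d e₂.1.1 e₂.1.2 * g e₂ true + (1 - pv d e₂.1.1 e₂.1.2) * g e₂ false
      = pv d v w' := by
    rw [hg_e₂, hg_e₂, he₂def, pv_mkE]; norm_num
  have hvA : ∀ u ∈ R, pv d (jw u).1.1 (jw u).1.2 * g (jw u) true
      + (1 - pv d (jw u).1.1 (jw u).1.2) * g (jw u) false
      = 1 + pv d w u * (Real.exp L - 1) := by
    intro u hu
    obtain ⟨h1, h2, h3⟩ := hmemR u hu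
    rw [hg_A u hu, hg_A u hu, hjw u (fun he => h2 he.symm) (fun he => h2 he.symm), pv_mkE]
    have ht : (if (true:Bool) = true then (1:ℝ) else 0) = 1 := if_pos rfl
    have hf : (if (false:Bool) = true then (1:ℝ) else 0) = 0 := if_neg (by simp)
    rw [ht, hf, mul_one, mul_zero, Real.exp_zero, hLdef]
    ring
  have hvB : ∀ u ∈ R, pv d (jv u).1.1 (jv u).1.2 * g (jv u) true
      + (1 - pv d (jv u).1.1 (jv u).1.2) * g (jv u) false
      = 1 + pv d v u * (Real.exp (-L) - 1) := by
    intro u hu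
    obtain ⟨h1, h2, h3⟩ := hmemR u hu
    rw [hg_B u hu, hg_B u hu, hjv u (fun he => h1 he.symm) (fun he => h1 he.symm), pv_mkE]
    have ht : (if (true:Bool) = true then (1:ℝ) else 0) = 1 := if_pos rfl
    have hf : (if (false:Bool) = true then (1:ℝ) else 0) = 0 := if_neg (by simp)
    rw [ht, hf, mul_one, mul_zero, Real.exp_zero]
    ring
  rw [hv1, hv2, Finset.prod_congr rfl hvA, Finset.prod_congr rfl hvB] at hexp
  -- bound the two products by exponentials
  have hprodA : ∏ u ∈ R, (1 + pv d w u * (Real.exp L - 1))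
      ≤ Real.exp ((Real.exp (1/20) - 1) * ∑ u ∈ R, pv d w u) := by
    rw [Finset.mul_sum, Real.exp_sum]
    apply Finset.prod_le_prod
    · intro u hu
      have := hp0 w u
      have hexpL : (1:ℝ) ≤ Real.exp L := Real.one_le_exp hL
      nlinarith
    · intro u hu
      have h := Real.add_one_le_exp (pv d w u * (Real.exp L - 1))
      rw [hLdef] at *
      calc 1 + pv d w u * (Real.exp (1/20) - 1)
          = pv d w u * (Real.exp (1/20) - 1) + 1 := by ring
        _ ≤ Real.exp (pv d w u * (Real.exp (1/20) - 1)) := Real.add_one_le_exp _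
        _ = Real.exp ((Real.exp (1/20) - 1) * pv d w u) := by rw [mul_comm]
  have hprodB : ∏ u ∈ R, (1 + pv d v u * (Real.exp (-L) - 1))
      ≤ Real.exp ((Real.exp (-(1/20)) - 1) * ∑ u ∈ R, pv d v u) := by
    rw [Finset.mul_sum, Real.exp_sum]
    apply Finset.prod_le_prod
    · intro u hu
      have h0 := hp0 v u
      have h1 := hple v u
      have hexpL : Real.exp (-L) ≤ 1 := Real.exp_le_one_iff.2 (by linarith)
      have hexpL0 : (0:ℝ) < Real.exp (-L) := Real.exp_pos _
      nlinarith
    · intro u hu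
      calc 1 + pv d v u * (Real.exp (-L) - 1)
          = pv d v u * (Real.exp (-L) - 1) + 1 := by ring
        _ ≤ Real.exp (pv d v u * (Real.exp (-L) - 1)) := Real.add_one_le_exp _
        _ = Real.exp ((Real.exp (-(1/20)) - 1) * pv d v u) := by rw [mul_comm, hLdef]
  -- combine
  have hA0 : (0:ℝ) ≤ ∏ u ∈ R, (1 + pv d w u * (Real.exp L - 1)) := by
    apply Finset.prod_nonneg
    intro u hu
    have := hp0 w u
    have hexpL : (1:ℝ) ≤ Real.exp L := Real.one_le_exp hL
    nlinarith
  have hB0 : (0:ℝ) ≤ Real.exp ((Real.exp (-(1/20)) - 1) * ∑ u ∈ R, pv d v u) :=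
    Real.exp_nonneg _
  calc clExp d (fun ω => clY ω v w * clY ω v w')
      ≤ pv d v w * (pv d v w' * ((∏ u ∈ R, (1 + pv d w u * (Real.exp L - 1)))
          * (∏ u ∈ R, (1 + pv d v u * (Real.exp (-L) - 1))))) := hexp
    _ ≤ pv d v w * (pv d v w' * (Real.exp ((Real.exp (1/20) - 1) * ∑ u ∈ R, pv d w u)
          * Real.exp ((Real.exp (-(1/20)) - 1) * ∑ u ∈ R, pv d v u))) := by
        apply mul_le_mul_of_nonneg_left _ (hp0 v w)
        apply mul_le_mul_of_nonneg_left _ (hp0 v w')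
        calc (∏ u ∈ R, (1 + pv d w u * (Real.exp L - 1)))
              * (∏ u ∈ R, (1 + pv d v u * (Real.exp (-L) - 1)))
            ≤ Real.exp ((Real.exp (1/20) - 1) * ∑ u ∈ R, pv d w u)
              * (∏ u ∈ R, (1 + pv d v u * (Real.exp (-L) - 1))) := by
              apply mul_le_mul_of_nonneg_right hprodA
              apply Finset.prod_nonneg
              intro u hu
              have h0 := hp0 v u
              have h1 := hple v u
              have hexpL : Real.exp (-L) ≤ 1 := Real.exp_le_one_iff.2 (by linarith)
              have hexpL0 : (0:ℝ) < Real.exp (-L) := Real.exp_pos _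
              nlinarith
          _ ≤ Real.exp ((Real.exp (1/20) - 1) * ∑ u ∈ R, pv d w u)
              * Real.exp ((Real.exp (-(1/20)) - 1) * ∑ u ∈ R, pv d v u) :=
              mul_le_mul_of_nonneg_left hprodB (Real.exp_nonneg _)
    _ = pv d v w * pv d v w' *
        Real.exp ((Real.exp (1/20) - 1) * (∑ u ∈ R, pv d w u)
          + (Real.exp (-(1/20)) - 1) * (∑ u ∈ R, pv d v u)) := by
        rw [← Real.exp_add]; ring

lemma clY_self (ω : EdgeIdx n → Bool) (v : Fin n) : clY ω v v = 0 :=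
  if_neg (fun h => adj_ne ω h.1 rfl)

lemma clExp_zero_fun (d : Fin n → ℕ) : clExp d (fun _ => 0) = 0 := by
  unfold clExp; simp

lemma pair_bound_triv (d : Fin n → ℕ)
    (hple : ∀ a b : Fin n, pv d a b ≤ 1) (hp0 : ∀ a b : Fin n, 0 ≤ pv d a b)
    (v w w' : Fin n) (hvw : v ≠ w) (hvw' : v ≠ w') (hww' : w ≠ w') :
    clExp d (fun ω => clY ω v w * clY ω v w') ≤ pv d v w * pv d v w' := by
  classical
  set e₁ : EdgeIdx n := mkE v w hvw with he₁def
  set e₂ : EdgeIdx n := mkE v w' hvw' with he₂def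
  have he₁₂ : e₁ ≠ e₂ := by
    intro heq
    rw [he₁def, he₂def] at heq
    rcases mkE_inj heq with ⟨ha, hb⟩ | ⟨ha, hb⟩
    · exact hww' hb
    · exact hvw hb.symm
  set g : EdgeIdx n → Bool → ℝ := fun _ b => if b then 1 else 0 with hgdef
  have hpoint : ∀ ω, clY ω v w * clY ω v w' ≤ ∏ e ∈ ({e₁, e₂} : Finset (EdgeIdx n)), g e (ω e) := by
    intro ω
    rw [Finset.prod_pair he₁₂]
    by_cases hb : clInBucket ω v w ∧ clInBucket ω v w'
    · obtain ⟨hb1, hb2⟩ := hb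
      have h1 : ω e₁ = true := (adj_iff ω hvw).1 hb1.1
      have h2 : ω e₂ = true := (adj_iff ω hvw').1 hb2.1
      have hI1 : g e₁ (ω e₁) = 1 := by rw [hgdef, h1]; exact if_pos rfl
      have hI2 : g e₂ (ω e₂) = 1 := by rw [hgdef, h2]; exact if_pos rfl
      rw [hI1, hI2]
      unfold clY
      rw [if_pos hb1, if_pos hb2, one_mul]
    · have hYY : clY ω v w * clY ω v w' = 0 := by
        rcases not_and_or.1 hb with hx | hx
        · unfold clY; rw [if_neg hx, zero_mul]
        · unfold clY; rw [if_neg hx, mul_zero]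
      rw [hYY]
      apply mul_nonneg <;> · rw [hgdef]; dsimp only; split_ifs <;> norm_num
  have hexp := clExp_mono d hple hp0 _ _ hpoint
  rw [clExp_prod d {e₁, e₂} g, Finset.prod_pair he₁₂] at hexp
  rw [he₁def, he₂def, pv_mkE, pv_mkE] at hexp
  calc clExp d (fun ω => clY ω v w * clY ω v w')
      ≤ (pv d v w * 1 + (1 - pv d v w) * 0)
        * (pv d v w' * 1 + (1 - pv d v w') * 0) := hexp
    _ = pv d v w * pv d v w' := by ring

lemma pair_bound_num (d : Fin n → ℕ) (hd1 : ∀ x, 0 < d x)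
    (hmax : ∀ x, (d x : ℝ) < Real.sqrt ((∑ u, (d u : ℝ)) / 2) / 2)
    (hD9 : (9:ℝ) ≤ ∑ u, (d u : ℝ))
    (hple : ∀ a b : Fin n, pv d a b ≤ 1) (hp0 : ∀ a b : Fin n, 0 ≤ pv d a b)
    (v w w' : Fin n) (hvw : v ≠ w) (hvw' : v ≠ w') (hww' : w ≠ w')
    (hlight : 2 * d w ≤ d v) :
    clExp d (fun ω => clY ω v w * clY ω v w') ≤
      pv d v w * pv d v w' * Real.exp (-(d v : ℝ) / 250) := by
  classical
  set D : ℝ := ∑ u, (d u : ℝ) with hDdef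
  have hD0 : (0:ℝ) < D := by linarith
  set R := (univ \ ({v, w, w'} : Finset (Fin n))) with hR
  set SR : ℝ := ∑ u ∈ R, (d u : ℝ) with hSRdef
  have hd0 : ∀ x : Fin n, (0:ℝ) ≤ (d x : ℝ) := fun x => Nat.cast_nonneg _
  -- sum over R
  have hsub : ({v, w, w'} : Finset (Fin n)) ⊆ univ := Finset.subset_univ _
  have hSR_eq : SR = D - ((d v : ℝ) + (d w : ℝ) + (d w' : ℝ)) := by
    rw [hSRdef, hR, Finset.sum_sdiff_eq_sub hsub, hDdef]
    have hvmem : v ∉ ({w, w'} : Finset (Fin n)) := by simp [hvw, hvw']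
    rw [Finset.sum_insert hvmem, Finset.sum_pair hww']
    ring
  have hSR_le : SR ≤ D := by
    rw [hSR_eq]
    have := hd0 v; have := hd0 w; have := hd0 w'
    linarith
  -- lower bound on SR using the max-degree hypothesis
  have hSR_ge : (16/25) * D ≤ SR := by
    set s : ℝ := Real.sqrt (D / 2) with hsdef
    have hs0 : 0 ≤ s := Real.sqrt_nonneg _
    have hs2 : s ^ 2 = D / 2 := Real.sq_sqrt (by linarith)
    have hs_ge : (25/12 : ℝ) ≤ s := by nlinarith
    have h1 := hmax v; have h2 := hmax w; have h3 := hmax w'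
    have hsum3 : (d v : ℝ) + (d w : ℝ) + (d w' : ℝ) ≤ (9/25) * D := by nlinarith
    rw [hSR_eq]; linarith
  -- sums of pv over R
  have hSw_eq : (∑ u ∈ R, pv d w u) = (d w : ℝ) * SR / D := by
    unfold pv
    rw [← hDdef, hSRdef, Finset.mul_sum, Finset.sum_div]
  have hSv_eq : (∑ u ∈ R, pv d v u) = (d v : ℝ) * SR / D := by
    unfold pv
    rw [← hDdef, hSRdef, Finset.mul_sum, Finset.sum_div]
  have hSw_le : (∑ u ∈ R, pv d w u) ≤ (d v : ℝ) / 2 := by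
    rw [hSw_eq]
    have hcast : (d w : ℝ) ≤ (d v : ℝ) / 2 := by
      have : ((2 * d w : ℕ) : ℝ) ≤ ((d v : ℕ) : ℝ) := Nat.cast_le.2 hlight
      push_cast at this
      linarith
    have hh : (d w : ℝ) * SR / D ≤ (d w : ℝ) := by
      rw [div_le_iff₀ hD0]
      have := hd0 w
      nlinarith
    linarith
  have hSv_ge : (16/25) * (d v : ℝ) ≤ ∑ u ∈ R, pv d v u := by
    rw [hSv_eq, le_div_iff₀ hD0]
    have := hd0 v
    nlinarith
  -- exponential estimates
  have hE1 : Real.exp (1/20) ≤ 20/19 := by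
    have ha : (19/20 : ℝ) ≤ Real.exp (-(1/20)) := by
      have := Real.add_one_le_exp (-(1/20) : ℝ)
      linarith
    have hb : Real.exp (1/20) = (Real.exp (-(1/20)))⁻¹ := by
      rw [Real.exp_neg, inv_inv]
    rw [hb]
    rw [inv_le_comm₀ (Real.exp_pos _) (by norm_num)]
    exact (by norm_num : ((20:ℝ)/19)⁻¹ = 19/20).trans_le ha
  have hE2 : Real.exp (-(1/20)) ≤ 20/21 := by
    have ha : (21/20 : ℝ) ≤ Real.exp (1/20) := by
      have := Real.add_one_le_exp ((1/20) : ℝ)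
      linarith
    rw [Real.exp_neg]
    rw [inv_le_comm₀ (Real.exp_pos _) (by norm_num)]
    exact (by norm_num : ((20:ℝ)/21)⁻¹ = 21/20).trans_le ha
  have hE1' : (1:ℝ) ≤ Real.exp (1/20) := Real.one_le_exp (by norm_num)
  have hE2' : Real.exp (-(1/20)) ≤ 1 := Real.exp_le_one_iff.2 (by norm_num)
  -- main argument bound
  have harg : (Real.exp (1/20) - 1) * (∑ u ∈ R, pv d w u)
      + (Real.exp (-(1/20)) - 1) * (∑ u ∈ R, pv d v u) ≤ -(d v : ℝ) / 250 := by
    have h1 : (Real.exp (1/20) - 1) * (∑ u ∈ R, pv d w u)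
        ≤ (Real.exp (1/20) - 1) * ((d v : ℝ) / 2) :=
      mul_le_mul_of_nonneg_left hSw_le (by linarith)
    have h2 : (Real.exp (-(1/20)) - 1) * (∑ u ∈ R, pv d v u)
        ≤ (Real.exp (-(1/20)) - 1) * ((16/25) * (d v : ℝ)) := by
      apply mul_le_mul_of_nonpos_left hSv_ge (by linarith)
    have hdv0 : (0:ℝ) ≤ (d v : ℝ) := hd0 v
    nlinarith
  have hbase := pair_bound_light d hple hp0 v w w' hvw hvw' hww'
  rw [← hR] at hbase
  calc clExp d (fun ω => clY ω v w * clY ω v w')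
      ≤ pv d v w * pv d v w' *
        Real.exp ((Real.exp (1/20) - 1) * (∑ u ∈ R, pv d w u)
          + (Real.exp (-(1/20)) - 1) * (∑ u ∈ R, pv d v u)) := hbase
    _ ≤ pv d v w * pv d v w' * Real.exp (-(d v : ℝ) / 250) := by
        apply mul_le_mul_of_nonneg_left _ (mul_nonneg (hp0 v w) (hp0 v w'))
        exact Real.exp_le_exp.2 harg

set_option maxHeartbeats 1000000 in
lemma vertex_bound (d : Fin n → ℕ) (hd1 : ∀ x, 0 < d x)
    (hmax : ∀ x, (d x : ℝ) < Real.sqrt ((∑ u, (d u : ℝ)) / 2) / 2)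
    (hD9 : (9:ℝ) ≤ ∑ u, (d u : ℝ))
    (hple : ∀ a b : Fin n, pv d a b ≤ 1) (hp0 : ∀ a b : Fin n, 0 ≤ pv d a b)
    (v : Fin n) :
    clExp d (fun ω => clX ω v * (clX ω v - 1)) ≤
      (∑ w ∈ univ.filter (fun x => d v < 2 * d x), pv d v w) ^ 2
        + Real.exp (-(d v : ℝ) / 250) * (∑ w, pv d v w) ^ 2 := by
  classical
  -- pointwise identity
  have hpoint : ∀ ω : EdgeIdx n → Bool, clX ω v * (clX ω v - 1)
      = ∑ p ∈ (univ : Finset (Fin n)).offDiag, clY ω v p.1 * clY ω v p.2 := by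
    intro ω
    have hsq : clX ω v * clX ω v
        = ∑ p ∈ (univ ×ˢ univ : Finset (Fin n × Fin n)), clY ω v p.1 * clY ω v p.2 := by
      unfold clX
      rw [Finset.sum_mul_sum, ← Finset.sum_product']
    have hsplit : (univ ×ˢ univ : Finset (Fin n × Fin n))
        = univ.diag ∪ univ.offDiag := (Finset.diag_union_offDiag _).symm
    rw [hsplit, Finset.sum_union (Finset.disjoint_diag_offDiag _), Finset.sum_diag] at hsq
    have hdiag : ∑ a : Fin n, clY ω v a * clY ω v a = clX ω v := by
      unfold clX
      refine Finset.sum_congr rfl fun a _ => ?_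
      unfold clY
      split_ifs <;> norm_num
    rw [hdiag] at hsq
    have : clX ω v * (clX ω v - 1) = clX ω v * clX ω v - clX ω v := by ring
    rw [this, hsq]
    ring
  have hfun : (fun ω => clX ω v * (clX ω v - 1))
      = fun ω => ∑ p ∈ (univ : Finset (Fin n)).offDiag, clY ω v p.1 * clY ω v p.2 :=
    funext hpoint
  rw [hfun, clExp_sum]
  -- bound each term
  set Bnd : Fin n × Fin n → ℝ := fun p =>
    pv d v p.1 * pv d v p.2 *
      (if d v < 2 * d p.1 ∧ d v < 2 * d p.2 then 1 else Real.exp (-(d v : ℝ) / 250)) with hBnd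
  have hBnd_nonneg : ∀ p, 0 ≤ Bnd p := by
    intro p
    apply mul_nonneg (mul_nonneg (hp0 _ _) (hp0 _ _))
    split_ifs
    · norm_num
    · exact Real.exp_nonneg _
  have hterm : ∀ p ∈ (univ : Finset (Fin n)).offDiag,
      clExp d (fun ω => clY ω v p.1 * clY ω v p.2) ≤ Bnd p := by
    intro p hp
    obtain ⟨w, w'⟩ := p
    have hww' : w ≠ w' := (Finset.mem_offDiag.1 hp).2.2
    by_cases hvw : v = w
    · have hz : (fun ω : EdgeIdx n → Bool => clY ω v w * clY ω v w') = fun _ => 0 := by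
        funext ω
        rw [← hvw, clY_self, zero_mul]
      rw [hz, clExp_zero_fun]
      exact hBnd_nonneg _
    by_cases hvw' : v = w'
    · have hz : (fun ω : EdgeIdx n → Bool => clY ω v w * clY ω v w') = fun _ => 0 := by
        funext ω
        rw [← hvw', clY_self, mul_zero]
      rw [hz, clExp_zero_fun]
      exact hBnd_nonneg _
    by_cases hc : d v < 2 * d w ∧ d v < 2 * d w'
    · have := pair_bound_triv d hple hp0 v w w' hvw hvw' hww'
      rw [hBnd]
      simp only [if_pos hc]
      calc clExp d (fun ω => clY ω v w * clY ω v w') ≤ pv d v w * pv d v w' := this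
        _ = pv d v w * pv d v w' * 1 := by ring
    · rw [hBnd]
      simp only [if_neg hc]
      rcases not_and_or.1 hc with h | h
      · have hlight : 2 * d w ≤ d v := not_lt.1 h
        exact pair_bound_num d hd1 hmax hD9 hple hp0 v w w' hvw hvw' hww' hlight
      · have hlight : 2 * d w' ≤ d v := not_lt.1 h
        have hcomm : (fun ω : EdgeIdx n → Bool => clY ω v w * clY ω v w')
            = fun ω => clY ω v w' * clY ω v w := by
          funext ω; ring
        rw [hcomm]
        have := pair_bound_num d hd1 hmax hD9 hple hp0 v w' w hvw' hvw
          (fun hh => hww' hh.symm) hlight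
        calc clExp d (fun ω => clY ω v w' * clY ω v w)
            ≤ pv d v w' * pv d v w * Real.exp (-(d v : ℝ) / 250) := this
          _ = pv d v w * pv d v w' * Real.exp (-(d v : ℝ) / 250) := by ring
  have hstep1 : ∑ p ∈ (univ : Finset (Fin n)).offDiag,
      clExp d (fun ω => clY ω v p.1 * clY ω v p.2) ≤ ∑ p ∈ (univ : Finset (Fin n)).offDiag, Bnd p :=
    Finset.sum_le_sum hterm
  have hstep2 : ∑ p ∈ (univ : Finset (Fin n)).offDiag, Bnd p
      ≤ ∑ p ∈ (univ ×ˢ univ : Finset (Fin n × Fin n)), Bnd p := by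
    apply Finset.sum_le_sum_of_subset_of_nonneg
    · intro p hp
      rw [Finset.mem_product]
      have := Finset.mem_offDiag.1 hp
      exact ⟨this.1, this.2.1⟩
    · intro p _ _
      exact hBnd_nonneg p
  have hstep3 : ∑ p ∈ (univ ×ˢ univ : Finset (Fin n × Fin n)), Bnd p
      ≤ (∑ w ∈ univ.filter (fun x => d v < 2 * d x), pv d v w) ^ 2
        + Real.exp (-(d v : ℝ) / 250) * (∑ w, pv d v w) ^ 2 := by
    have hsplit : ∀ p : Fin n × Fin n, Bnd p ≤
        (if d v < 2 * d p.1 ∧ d v < 2 * d p.2 then pv d v p.1 * pv d v p.2 else 0)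
          + pv d v p.1 * pv d v p.2 * Real.exp (-(d v : ℝ) / 250) := by
      intro p
      simp only [hBnd]
      have hpp : 0 ≤ pv d v p.1 * pv d v p.2 := mul_nonneg (hp0 _ _) (hp0 _ _)
      have hee : 0 ≤ Real.exp (-(d v : ℝ) / 250) := Real.exp_nonneg _
      split_ifs with hcc
      · nlinarith
      · rw [zero_add]
    calc ∑ p ∈ (univ ×ˢ univ : Finset (Fin n × Fin n)), Bnd p
        ≤ ∑ p ∈ (univ ×ˢ univ : Finset (Fin n × Fin n)),
          ((if d v < 2 * d p.1 ∧ d v < 2 * d p.2 then pv d v p.1 * pv d v p.2 else 0)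
            + pv d v p.1 * pv d v p.2 * Real.exp (-(d v : ℝ) / 250)) :=
          Finset.sum_le_sum fun p _ => hsplit p
      _ = (∑ p ∈ (univ ×ˢ univ : Finset (Fin n × Fin n)),
            (if d v < 2 * d p.1 ∧ d v < 2 * d p.2 then pv d v p.1 * pv d v p.2 else 0))
          + ∑ p ∈ (univ ×ˢ univ : Finset (Fin n × Fin n)),
            pv d v p.1 * pv d v p.2 * Real.exp (-(d v : ℝ) / 250) := Finset.sum_add_distrib
      _ ≤ (∑ w ∈ univ.filter (fun x => d v < 2 * d x), pv d v w) ^ 2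
          + Real.exp (-(d v : ℝ) / 250) * (∑ w, pv d v w) ^ 2 := by
          apply add_le_add
          · apply le_of_eq
            have hfact : ∀ a b : Fin n,
                (if d v < 2 * d a ∧ d v < 2 * d b then pv d v a * pv d v b else 0)
                = (if d v < 2 * d a then pv d v a else 0)
                  * (if d v < 2 * d b then pv d v b else 0) := by
              intro a b
              by_cases hA : d v < 2 * d a <;> by_cases hB : d v < 2 * d b <;>
                simp [hA, hB]
            rw [Finset.sum_product]
            simp_rw [hfact]
            rw [← Finset.sum_mul_sum, ← Finset.sum_filter, sq]
          · rw [sq, Finset.sum_mul_sum, ← Finset.sum_product']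
            apply le_of_eq
            rw [Finset.mul_sum]
            refine Finset.sum_congr rfl fun p _ => by ring
  calc ∑ p ∈ (univ : Finset (Fin n)).offDiag, clExp d (fun ω => clY ω v p.1 * clY ω v p.2)
      ≤ ∑ p ∈ (univ : Finset (Fin n)).offDiag, Bnd p := hstep1
    _ ≤ ∑ p ∈ (univ ×ˢ univ : Finset (Fin n × Fin n)), Bnd p := hstep2
    _ ≤ _ := hstep3

lemma exp_decay (x : ℝ) (hx : 1 ≤ x) : Real.exp (-x / 250) * x ^ 2 ≤ 750 ^ 3 := by
  have h0 : (0:ℝ) < x := by linarith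
  have h1 : 1 + x / 750 ≤ Real.exp (x / 750) := by
    have := Real.add_one_le_exp (x / 750); linarith
  have h2 : (1 + x / 750) ^ 3 ≤ Real.exp (x / 750) ^ 3 := by
    apply pow_le_pow_left₀ (by positivity) h1
  have h3 : Real.exp (x / 750) ^ 3 = Real.exp (x / 250) := by
    rw [← Real.exp_nat_mul]
    congr 1
    push_cast
    ring
  have h4 : (x / 750) ^ 3 ≤ (1 + x / 750) ^ 3 := by
    apply pow_le_pow_left₀ (by positivity) (by linarith)
  have h5 : (x / 750) ^ 3 ≤ Real.exp (x / 250) := by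
    rw [← h3]; linarith
  have hE : Real.exp (-x / 250) = (Real.exp (x / 250))⁻¹ := by
    rw [neg_div, Real.exp_neg]
  rw [hE, inv_mul_le_iff₀ (Real.exp_pos _)]
  calc x ^ 2 ≤ 750 ^ 3 * (x / 750) ^ 3 := by
        have : (750:ℝ) ^ 3 * (x / 750) ^ 3 = x ^ 3 := by ring
        rw [this]
        nlinarith
    _ ≤ 750 ^ 3 * Real.exp (x / 250) := by nlinarith
    _ = Real.exp (x / 250) * 750 ^ 3 := by ring

lemma row_sum (d : Fin n → ℕ) (hD0 : (0:ℝ) < ∑ u, (d u : ℝ)) (v : Fin n) :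
    (∑ w, pv d v w) = (d v : ℝ) := by
  unfold pv
  rw [← Finset.sum_div, ← Finset.mul_sum, mul_div_assoc, div_self (ne_of_gt hD0), mul_one]

lemma heavy_bound (d : Fin n → ℕ) (hd1 : ∀ x, 0 < d x) (hD0 : (0:ℝ) < ∑ u, (d u : ℝ))
    (v : Fin n) :
    (∑ w ∈ univ.filter (fun x => d v < 2 * d x), pv d v w) ^ 2
      ≤ 4 * (d v : ℝ) ^ ((4:ℝ)/3) * (∑ x, (d x : ℝ) ^ ((4:ℝ)/3)) ^ 2
          / (∑ u, (d u : ℝ)) ^ 2 := by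
  classical
  set D : ℝ := ∑ u, (d u : ℝ) with hDdef
  set S : ℝ := ∑ x, (d x : ℝ) ^ ((4:ℝ)/3) with hSdef
  set H : Finset (Fin n) := univ.filter (fun x => d v < 2 * d x) with hHdef
  set T : ℝ := ∑ w ∈ H, (d w : ℝ) with hTdef
  have hd0 : ∀ x : Fin n, (0:ℝ) ≤ (d x : ℝ) := fun x => Nat.cast_nonneg _
  have hdv1 : (1:ℝ) ≤ (d v : ℝ) := by exact_mod_cast hd1 v
  have hdv0 : (0:ℝ) < (d v : ℝ) := by linarith
  have hS0 : 0 ≤ S := Finset.sum_nonneg fun x _ => Real.rpow_nonneg (hd0 x) _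
  have hT0 : 0 ≤ T := Finset.sum_nonneg fun x _ => hd0 x
  -- the heavy-vertex pointwise bound
  have hper : ∀ w ∈ H, (d v : ℝ) ^ ((1:ℝ)/3) * (d w : ℝ) ≤ 2 * (d w : ℝ) ^ ((4:ℝ)/3) := by
    intro w hw
    have hwlt : d v < 2 * d w := (Finset.mem_filter.1 hw).2
    have hab : (d v : ℝ) ≤ 2 * (d w : ℝ) := by
      have : ((d v : ℕ) : ℝ) ≤ ((2 * d w : ℕ) : ℝ) := Nat.cast_le.2 (le_of_lt hwlt)
      push_cast at this
      linarith
    have hb0 : (0:ℝ) < (d w : ℝ) := by exact_mod_cast hd1 w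
    have h1 : (d v : ℝ) ^ ((1:ℝ)/3) ≤ (2 * (d w : ℝ)) ^ ((1:ℝ)/3) :=
      Real.rpow_le_rpow (hd0 v) hab (by norm_num)
    have h2 : (2 * (d w : ℝ)) ^ ((1:ℝ)/3) = (2:ℝ) ^ ((1:ℝ)/3) * (d w : ℝ) ^ ((1:ℝ)/3) :=
      Real.mul_rpow (by norm_num) hb0.le
    have h3 : (2:ℝ) ^ ((1:ℝ)/3) ≤ 2 := by
      calc (2:ℝ) ^ ((1:ℝ)/3) ≤ (2:ℝ) ^ ((1:ℝ)) :=
            Real.rpow_le_rpow_of_exponent_le (by norm_num) (by norm_num)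
        _ = 2 := Real.rpow_one 2
    have h4 : (d w : ℝ) ^ ((1:ℝ)/3) * (d w : ℝ) = (d w : ℝ) ^ ((4:ℝ)/3) := by
      have : ((4:ℝ)/3) = (1:ℝ)/3 + 1 := by norm_num
      rw [this, Real.rpow_add hb0, Real.rpow_one]
    have hw13 : (0:ℝ) ≤ (d w : ℝ) ^ ((1:ℝ)/3) := Real.rpow_nonneg (hd0 w) _
    calc (d v : ℝ) ^ ((1:ℝ)/3) * (d w : ℝ)
        ≤ (2:ℝ) ^ ((1:ℝ)/3) * (d w : ℝ) ^ ((1:ℝ)/3) * (d w : ℝ) := by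
          rw [← h2]
          exact mul_le_mul_of_nonneg_right h1 (hd0 w)
      _ ≤ 2 * (d w : ℝ) ^ ((1:ℝ)/3) * (d w : ℝ) := by
          have := mul_le_mul_of_nonneg_right (mul_le_mul_of_nonneg_right h3 hw13) (hd0 w)
          linarith
      _ = 2 * (d w : ℝ) ^ ((4:ℝ)/3) := by rw [mul_assoc, h4]
  -- summing
  have hkey : (d v : ℝ) ^ ((1:ℝ)/3) * T ≤ 2 * S := by
    rw [hTdef, Finset.mul_sum]
    calc ∑ w ∈ H, (d v : ℝ) ^ ((1:ℝ)/3) * (d w : ℝ)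
        ≤ ∑ w ∈ H, 2 * (d w : ℝ) ^ ((4:ℝ)/3) := Finset.sum_le_sum hper
      _ ≤ ∑ w, 2 * (d w : ℝ) ^ ((4:ℝ)/3) := by
          apply Finset.sum_le_sum_of_subset_of_nonneg (Finset.subset_univ _)
          intro x _ _
          have := Real.rpow_nonneg (hd0 x) ((4:ℝ)/3)
          linarith
      _ = 2 * S := by rw [hSdef, Finset.mul_sum]
  -- sum of pv over H
  have hHsum : (∑ w ∈ H, pv d v w) = (d v : ℝ) * T / D := by
    unfold pv
    rw [← hDdef, hTdef, Finset.mul_sum, Finset.sum_div]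
  -- rpow algebra
  have hc2 : ((d v : ℝ) ^ ((1:ℝ)/3)) ^ 2 = (d v : ℝ) ^ ((2:ℝ)/3) := by
    rw [← Real.rpow_natCast ((d v : ℝ) ^ ((1:ℝ)/3)) 2, ← Real.rpow_mul (hd0 v)]
    norm_num
  have hc3 : (d v : ℝ) ^ ((4:ℝ)/3) * (d v : ℝ) ^ ((2:ℝ)/3) = (d v : ℝ) ^ 2 := by
    rw [← Real.rpow_add hdv0, ← Real.rpow_natCast ((d v : ℝ)) 2]
    norm_num
  have h43 : (0:ℝ) ≤ (d v : ℝ) ^ ((4:ℝ)/3) := Real.rpow_nonneg (hd0 v) _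
  have hnum : ((d v : ℝ) * T) ^ 2 ≤ 4 * (d v : ℝ) ^ ((4:ℝ)/3) * S ^ 2 := by
    have hkey2 : ((d v : ℝ) ^ ((1:ℝ)/3) * T) ^ 2 ≤ (2 * S) ^ 2 := by
      apply pow_le_pow_left₀ (mul_nonneg (Real.rpow_nonneg (hd0 v) _) hT0) hkey
    have hexpand : ((d v : ℝ) ^ ((1:ℝ)/3) * T) ^ 2 = (d v : ℝ) ^ ((2:ℝ)/3) * T ^ 2 := by
      rw [mul_pow, hc2]
    rw [hexpand] at hkey2
    calc ((d v : ℝ) * T) ^ 2 = (d v : ℝ) ^ ((4:ℝ)/3) * ((d v : ℝ) ^ ((2:ℝ)/3) * T ^ 2) := by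
          rw [mul_pow, ← mul_assoc, hc3]
      _ ≤ (d v : ℝ) ^ ((4:ℝ)/3) * (2 * S) ^ 2 := mul_le_mul_of_nonneg_left hkey2 h43
      _ = 4 * (d v : ℝ) ^ ((4:ℝ)/3) * S ^ 2 := by ring
  rw [hHsum, div_pow]
  rw [div_le_div_iff₀ (by positivity) (by positivity)]
  calc ((d v : ℝ) * T) ^ 2 * D ^ 2 ≤ (4 * (d v : ℝ) ^ ((4:ℝ)/3) * S ^ 2) * D ^ 2 := by
        apply mul_le_mul_of_nonneg_right hnum (by positivity)
    _ = 4 * (d v : ℝ) ^ ((4:ℝ)/3) * S ^ 2 * D ^ 2 := by ring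

end CLaux

open CLaux

/-- There is an absolute constant `C` such that for every positive-integer
degree sequence `d` with `m = (∑ d_v)/2` and `max d_v < √m / 2`, over the Chung–Lu model
`G(d)` with MinBucket buckets formed,
`E[∑_v X_v (X_v - 1)] ≤ C (n + m⁻² (∑_v d_v^{4/3})³)`. -/
theorem chungLu_minBucket_expected_work_bound :
    ∃ C : ℝ, ∀ (n : ℕ) (d : Fin n → ℕ),
      (∀ v, 0 < d v) →
      (∀ v, (d v : ℝ) < Real.sqrt ((∑ u, (d u : ℝ)) / 2) / 2) →
      clExp d (fun ω => ∑ v, clX ω v * (clX ω v - 1)) ≤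
        C * ((n : ℝ) + (((∑ u, (d u : ℝ)) / 2) ^ 2)⁻¹ *
          (∑ v, (d v : ℝ) ^ ((4 : ℝ) / 3)) ^ 3) := by
  classical
  refine ⟨750 ^ 3 + 1, ?_⟩
  intro n d hd1 hmax
  rcases Nat.eq_zero_or_pos n with hn | hn
  · subst hn
    have hL : clExp d (fun ω => ∑ v, clX ω v * (clX ω v - 1)) = 0 := by
      unfold clExp
      simp
    rw [hL]
    norm_num
  · set D : ℝ := ∑ u, (d u : ℝ) with hDdef
    have hd0 : ∀ x : Fin n, (0:ℝ) ≤ (d x : ℝ) := fun x => Nat.cast_nonneg _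
    have hd1' : ∀ x : Fin n, (1:ℝ) ≤ (d x : ℝ) := fun x => by exact_mod_cast hd1 x
    have hne : (univ : Finset (Fin n)).Nonempty := ⟨⟨0, hn⟩, Finset.mem_univ _⟩
    have hD0 : 0 < D := Finset.sum_pos (fun i _ => by exact_mod_cast hd1 i) hne
    have hD9 : (9:ℝ) ≤ D := by
      set s : ℝ := Real.sqrt (D / 2) with hsdef
      have hs2 : s ^ 2 = D / 2 := Real.sq_sqrt (by linarith)
      have h1 := hmax ⟨0, hn⟩
      have h2 := hd1' ⟨0, hn⟩
      have hs4 : 2 < s := by linarith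
      have hD8 : (8:ℝ) < D := by nlinarith
      have hDnat : D = ((∑ u, d u : ℕ) : ℝ) := by rw [hDdef]; push_cast; rfl
      rw [hDnat] at hD8 ⊢
      have h9 : (8:ℕ) < ∑ u, d u := by exact_mod_cast hD8
      exact_mod_cast h9
    have hp0 : ∀ a b : Fin n, 0 ≤ pv d a b := by
      intro a b; unfold pv; rw [← hDdef]; positivity
    have hple : ∀ a b : Fin n, pv d a b ≤ 1 := by
      intro a b
      unfold pv
      rw [← hDdef, div_le_one hD0]
      set s : ℝ := Real.sqrt (D / 2) with hsdef
      have hs2 : s ^ 2 = D / 2 := Real.sq_sqrt (by linarith)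
      have h1 := hmax a
      have h2 := hmax b
      nlinarith [hd0 a, hd0 b]
    set S : ℝ := ∑ x, (d x : ℝ) ^ ((4:ℝ)/3) with hSdef
    have hS0 : 0 ≤ S := Finset.sum_nonneg fun x _ => Real.rpow_nonneg (hd0 x) _
    have hmain : clExp d (fun ω => ∑ v, clX ω v * (clX ω v - 1))
        ≤ 4 * S ^ 3 / D ^ 2 + 750 ^ 3 * n := by
      rw [clExp_sum]
      calc ∑ v, clExp d (fun ω => clX ω v * (clX ω v - 1))
          ≤ ∑ v, (4 * (d v : ℝ) ^ ((4:ℝ)/3) * S ^ 2 / D ^ 2 + 750 ^ 3) := by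
            apply Finset.sum_le_sum
            intro v _
            have hvb := vertex_bound d hd1 hmax hD9 hple hp0 v
            have hhb := heavy_bound d hd1 hD0 v
            have hrow := row_sum d hD0 v
            have hdecay := exp_decay ((d v : ℝ)) (hd1' v)
            calc clExp d (fun ω => clX ω v * (clX ω v - 1))
                ≤ (∑ w ∈ univ.filter (fun x => d v < 2 * d x), pv d v w) ^ 2
                  + Real.exp (-(d v : ℝ) / 250) * (∑ w, pv d v w) ^ 2 := hvb
              _ ≤ 4 * (d v : ℝ) ^ ((4:ℝ)/3) * S ^ 2 / D ^ 2 + 750 ^ 3 := by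
                  apply add_le_add
                  · exact hhb
                  · rw [hrow]
                    exact hdecay
        _ = 4 * S ^ 3 / D ^ 2 + 750 ^ 3 * n := by
            rw [Finset.sum_add_distrib, Finset.sum_const, Finset.card_univ, Fintype.card_fin]
            have h1 : ∑ v, 4 * (d v : ℝ) ^ ((4:ℝ)/3) * S ^ 2 / D ^ 2 = 4 * S ^ 3 / D ^ 2 := by
              rw [← Finset.sum_div]
              congr 1
              have hc : ∀ v : Fin n, 4 * (d v : ℝ) ^ ((4:ℝ)/3) * S ^ 2
                  = (4 * S ^ 2) * (d v : ℝ) ^ ((4:ℝ)/3) := fun v => by ring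
              rw [Finset.sum_congr rfl (fun v _ => hc v), ← Finset.mul_sum, ← hSdef]
              ring
            rw [h1, nsmul_eq_mul]
            ring
    have hinv : ((D / 2) ^ 2)⁻¹ * S ^ 3 = 4 * S ^ 3 / D ^ 2 := by
      rw [div_pow, inv_div]
      ring
    have hfinal : 4 * S ^ 3 / D ^ 2 + 750 ^ 3 * n
        ≤ (750 ^ 3 + 1) * ((n : ℝ) + ((D / 2) ^ 2)⁻¹ * S ^ 3) := by
      rw [hinv]
      have hn0 : (0:ℝ) ≤ (n : ℝ) := Nat.cast_nonneg n
      have hq : 0 ≤ 4 * S ^ 3 / D ^ 2 := by positivity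
      nlinarith
    exact le_trans hmain hfinal
end
end
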